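/- arXiv:2109.01906 — 5 statements merged into one kernel-verified Lean document; each statement's English description precedes it below -/
import Mathlib

section
/- Let X be a Banach space with unit sphere S, let x, y ∈ S, and let T be a contractive automorphism of X with Tx = y. If the norm of X is smooth at x, then it is smooth at y and ‖J(x) − J(y)‖ ≤ ‖T − I‖. -/
/-- contractive automorphisms transport smooth points of the sphere and
the support functionals move at most `‖T - I‖` apart. -/
theorem smooth_point_transport
    {X : Type*} [NormedAddCommGroup X] [NormedSpace ℝ X] [CompleteSpace X]
    (x y : X) (hx : ‖x‖ = 1) (hy : ‖y‖ = 1)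
    (T : X ≃L[ℝ] X) (hT : ‖(T : X →L[ℝ] X)‖ ≤ 1) (hTx : T x = y)
    (hsmooth : ∃! f : X →L[ℝ] ℝ, ‖f‖ = 1 ∧ f x = 1) :
    (∃! g : X →L[ℝ] ℝ, ‖g‖ = 1 ∧ g y = 1) ∧
      ∀ f g : X →L[ℝ] ℝ, ‖f‖ = 1 → f x = 1 → ‖g‖ = 1 → g y = 1 →
        ‖f - g‖ ≤ ‖(T : X →L[ℝ] X) - ContinuousLinearMap.id ℝ X‖ := by
  obtain ⟨f₀, ⟨hf₀n, hf₀x⟩, huniq⟩ := hsmooth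
  -- key: any support functional at y pulls back to f₀
  have key : ∀ g : X →L[ℝ] ℝ, ‖g‖ = 1 → g y = 1 →
      g.comp (T : X →L[ℝ] X) = f₀ := by
    intro g hgn hgy
    apply huniq
    have hval : (g.comp (T : X →L[ℝ] X)) x = 1 := by
      simp [ContinuousLinearMap.comp_apply, hTx, hgy]
    refine ⟨le_antisymm ?_ ?_, hval⟩
    · calc ‖g.comp (T : X →L[ℝ] X)‖ ≤ ‖g‖ * ‖(T : X →L[ℝ] X)‖ :=
            g.opNorm_comp_le _
        _ ≤ 1 * 1 := by apply mul_le_mul (le_of_eq hgn) hT (norm_nonneg _) zero_le_one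
        _ = 1 := by ring
    · have := (g.comp (T : X →L[ℝ] X)).le_opNorm x
      rw [hval, hx, mul_one] at this
      simpa using this
  have hy0 : y ≠ 0 := by intro h; rw [h, norm_zero] at hy; norm_num at hy
  obtain ⟨g₀, hg₀n, hg₀y⟩ := exists_dual_vector ℝ y (norm_ne_zero_iff.mpr hy0)
  rw [hy] at hg₀y
  have hg₀y : g₀ y = 1 := by exact_mod_cast hg₀y
  constructor
  · refine ⟨g₀, ⟨hg₀n, hg₀y⟩, ?_⟩
    intro g ⟨hgn, hgy⟩
    have h1 := key g hgn hgy
    have h2 := key g₀ hg₀n hg₀y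
    ext z
    have hz : T (T.symm z) = z := T.apply_symm_apply z
    have := congrArg (fun h : X →L[ℝ] ℝ => h (T.symm z)) (h1.trans h2.symm)
    simpa [ContinuousLinearMap.comp_apply, hz] using this
  · intro f g hfn hfx hgn hgy
    have hf : f = g.comp (T : X →L[ℝ] X) := (huniq f ⟨hfn, hfx⟩).trans (key g hgn hgy).symm
    have hdiff : f - g = g.comp ((T : X →L[ℝ] X) - ContinuousLinearMap.id ℝ X) := by
      ext z
      simp [hf, ContinuousLinearMap.comp_apply, ContinuousLinearMap.sub_apply, map_sub]
    rw [hdiff]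
    calc ‖g.comp ((T : X →L[ℝ] X) - ContinuousLinearMap.id ℝ X)‖
        ≤ ‖g‖ * ‖(T : X →L[ℝ] X) - ContinuousLinearMap.id ℝ X‖ := g.opNorm_comp_le _
      _ = ‖(T : X →L[ℝ] X) - ContinuousLinearMap.id ℝ X‖ := by rw [hgn, one_mul]
end

section
/- Let 1 < p < q < ∞ be arbitrary exponents and let M_{qp} : ℝ² → ℝ² be the Mazur map M_{qp}(x, y) = (sgn(x)|x|^{q/p}, sgn(y)|y|^{q/p}), regarded as a map from ℓ_q² to ℓ_p². Then M_{qp} maps the unit sphere of ℓ_q² into the unit sphere of ℓ_p², and its Lipschitz constant on the unit sphere of ℓ_q² is bounded below by q/p: if L ≥ 0 satisfies ‖M_{qp}(u) − M_{qp}(v)‖_p ≤ L‖u − v‖_q for all u, v in the unit sphere of ℓ_q², then L ≥ q/p. -/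
open Real

/-- The `ℓ_r` norm on `ℝ²`. -/
noncomputable def lrNorm (r : ℝ) (v : ℝ × ℝ) : ℝ := (|v.1| ^ r + |v.2| ^ r) ^ (1 / r)

/-- The Mazur map from `ℓ_q²` to `ℓ_p²`. -/
noncomputable def mazurMap (p q : ℝ) (v : ℝ × ℝ) : ℝ × ℝ :=
  (Real.sign v.1 * |v.1| ^ (q / p), Real.sign v.2 * |v.2| ^ (q / p))

lemma lrNorm_antisym (r A B : ℝ) (hr : 0 < r) (hAB : B ≤ A) :
    lrNorm r (A - B, B - A) = 2 ^ (1/r) * (A - B) := by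
  unfold lrNorm
  simp only
  rw [abs_of_nonneg (by linarith), abs_sub_comm B A, abs_of_nonneg (by linarith)]
  have h2 : (A-B) ^ r + (A-B) ^ r = 2 * (A-B) ^ r := by ring
  rw [h2, Real.mul_rpow (by norm_num) (Real.rpow_nonneg (by linarith) _),
    one_div, Real.rpow_rpow_inv (by linarith) hr.ne']

lemma mazur_comp (p q x : ℝ) (hp : 0 < p) (hq : 0 < q) (hx : 0 < x) :
    Real.sign (x ^ (1/q)) * |x ^ (1/q)| ^ (q/p) = x ^ (1/p) := by
  have ha : 0 < x ^ (1/q) := Real.rpow_pos_of_pos hx _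
  rw [Real.sign_of_pos ha, abs_of_pos ha, one_mul, ← Real.rpow_mul hx.le]
  congr 1
  field_simp

lemma sphere_mem (q ε : ℝ) (hq : 0 < q) (hε : ε ∈ Set.Ioo 0 (1/2 : ℝ)) :
    lrNorm q ((1/2+ε) ^ (1/q), (1/2-ε) ^ (1/q)) = 1 := by
  obtain ⟨h1, h2⟩ := hε
  have ha : (0:ℝ) < 1/2+ε := by linarith
  have hb : (0:ℝ) < 1/2-ε := by linarith
  unfold lrNorm
  simp only
  rw [abs_of_pos (Real.rpow_pos_of_pos ha _), abs_of_pos (Real.rpow_pos_of_pos hb _),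
    ← Real.rpow_mul ha.le, ← Real.rpow_mul hb.le, one_div_mul_cancel hq.ne']
  norm_num

lemma hasDeriv_F (r : ℝ) (hr : 0 < r) :
    HasDerivAt (fun ε : ℝ => (2:ℝ) ^ (1/r) * (((1:ℝ)/2+ε) ^ (1/r) - ((1:ℝ)/2-ε) ^ (1/r)))
      (4/r) 0 := by
  have hplus : HasDerivAt (fun ε : ℝ => (1:ℝ)/2 + ε) 1 0 := (hasDerivAt_id 0).const_add _
  have hminus : HasDerivAt (fun ε : ℝ => (1:ℝ)/2 - ε) (-1) 0 := by
    simpa using (hasDerivAt_id (0:ℝ)).const_sub ((1:ℝ)/2)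
  have h1 := (hplus.rpow_const (p := 1/r) (Or.inl (by norm_num))).sub
    (hminus.rpow_const (p := 1/r) (Or.inl (by norm_num)))
  have h2 := h1.const_mul ((2:ℝ) ^ (1/r))
  convert h2 using 1
  case e'_4 => rfl
  case e'_5 => rfl
  case e'_8 => rfl
  have e1 : ((1:ℝ)/2 + 0) = 2 ^ (-1 : ℝ) := by
    rw [Real.rpow_neg_one]; norm_num
  have e2 : ((1:ℝ)/2 - 0) = 2 ^ (-1 : ℝ) := by
    rw [Real.rpow_neg_one]; norm_num
  rw [e1, e2, ← Real.rpow_mul (by norm_num)]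
  have e3 : (2:ℝ) ^ (1/r) * (1 * (1/r) * 2 ^ (-1 * (1/r - 1)) - -1 * (1/r) * 2 ^ (-1 * (1/r - 1)))
      = (2/r) * (2 ^ (1/r) * 2 ^ (-1 * (1/r - 1))) := by ring
  rw [e3, ← Real.rpow_add (by norm_num)]
  have e4 : 1/r + -1 * (1/r - 1) = 1 := by ring
  rw [e4, Real.rpow_one]
  field_simp
  ring

/-- the Mazur map `M_{qp}` maps the sphere of `ℓ_q²` to the sphere of
`ℓ_p²` and its Lipschitz constant there is at least `q/p`. -/
theorem mazurMap_lipschitz_lower_bound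
    (p q : ℝ) (hp : 1 < p) (hpq : p < q) :
    (∀ v : ℝ × ℝ, lrNorm q v = 1 → lrNorm p (mazurMap p q v) = 1) ∧
    (∀ L : ℝ, 0 ≤ L →
      (∀ u v : ℝ × ℝ, lrNorm q u = 1 → lrNorm q v = 1 →
        lrNorm p (mazurMap p q u - mazurMap p q v) ≤ L * lrNorm q (u - v)) →
      q / p ≤ L) := by
  have hp0 : 0 < p := by linarith
  have hq0 : 0 < q := by linarith
  have habs : ∀ x : ℝ, |Real.sign x * |x| ^ (q/p)| ^ p = |x| ^ q := by
    intro x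
    rcases eq_or_ne x 0 with h | h
    · subst h
      simp [Real.zero_rpow (div_pos hq0 hp0).ne', Real.zero_rpow hq0.ne',
        Real.zero_rpow hp0.ne']
    · have hs : |Real.sign x| = 1 := by
        rcases h.lt_or_gt with h' | h'
        · rw [Real.sign_of_neg h']; norm_num
        · rw [Real.sign_of_pos h']; norm_num
      rw [abs_mul, hs, one_mul, abs_of_nonneg (Real.rpow_nonneg (abs_nonneg x) _),
        ← Real.rpow_mul (abs_nonneg x), div_mul_cancel₀ q hp0.ne']
  constructor
  · intro v hv
    have h0 : (0:ℝ) ≤ |v.1| ^ q + |v.2| ^ q := by positivity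
    have hv' : (|v.1| ^ q + |v.2| ^ q) ^ (1/q) = 1 := hv
    have hS : |v.1| ^ q + |v.2| ^ q = 1 := by
      have h1 : ((|v.1| ^ q + |v.2| ^ q) ^ (1/q)) ^ q = 1 := by rw [hv']; simp
      rwa [one_div, Real.rpow_inv_rpow h0 hq0.ne'] at h1
    show (|(mazurMap p q v).1| ^ p + |(mazurMap p q v).2| ^ p) ^ (1/p) = 1
    unfold mazurMap
    simp only
    rw [habs, habs, hS, Real.one_rpow]
  · intro L _ hL
    set Fp : ℝ → ℝ := fun ε => (2:ℝ) ^ (1/p) * (((1:ℝ)/2+ε) ^ (1/p) - ((1:ℝ)/2-ε) ^ (1/p))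
      with hFpdef
    set Fq : ℝ → ℝ := fun ε => (2:ℝ) ^ (1/q) * (((1:ℝ)/2+ε) ^ (1/q) - ((1:ℝ)/2-ε) ^ (1/q))
      with hFqdef
    have slope_tendsto : ∀ r : ℝ, 0 < r →
        Filter.Tendsto (fun ε : ℝ => ((2:ℝ) ^ (1/r) *
            (((1:ℝ)/2+ε) ^ (1/r) - ((1:ℝ)/2-ε) ^ (1/r))) / ε)
          (nhdsWithin 0 {(0:ℝ)}ᶜ) (nhds (4/r)) := by
      intro r hr
      have hd := hasDerivAt_iff_tendsto_slope.1 (hasDeriv_F r hr)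
      refine hd.congr fun ε => ?_
      rw [slope_fun_def]
      norm_num
      rw [← div_eq_inv_mul]
    have tp := slope_tendsto p hp0
    have tq := slope_tendsto q hq0
    have h4q : (4:ℝ)/q ≠ 0 := by positivity
    have trat : Filter.Tendsto (fun ε => Fp ε / Fq ε) (nhdsWithin 0 (Set.Ioi (0:ℝ)))
        (nhds (q/p)) := by
      have h1 := tp.div tq h4q
      have h2 : (4/p) / (4/q) = q / p := by
        field_simp
      rw [h2] at h1
      have h3 : Filter.Tendsto (fun ε => Fp ε / Fq ε) (nhdsWithin 0 {(0:ℝ)}ᶜ)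
          (nhds (q/p)) := by
        refine h1.congr' ?_
        filter_upwards [self_mem_nhdsWithin] with ε (hε : ε ≠ 0)
        show Fp ε / ε / (Fq ε / ε) = Fp ε / Fq ε
        rw [div_div_div_cancel_right₀ hε]
      exact h3.mono_left (nhdsWithin_mono _ fun x hx => ne_of_gt hx)
    refine le_of_tendsto trat ?_
    filter_upwards [Ioo_mem_nhdsGT_of_mem (by norm_num : (0:ℝ) ∈ Set.Ico 0 (1/2))]
      with ε hε
    obtain ⟨h1, h2⟩ := hε
    have ha : (0:ℝ) < 1/2+ε := by linarith
    have hb : (0:ℝ) < 1/2-ε := by linarith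
    have hu := sphere_mem q ε hq0 ⟨h1, h2⟩
    have hv : lrNorm q (((1:ℝ)/2-ε) ^ (1/q), ((1:ℝ)/2+ε) ^ (1/q)) = 1 := by
      unfold lrNorm at hu ⊢
      simp only at hu ⊢
      rw [add_comm]
      exact hu
    have key := hL _ _ hu hv
    have hmu : mazurMap p q (((1:ℝ)/2+ε) ^ (1/q), ((1:ℝ)/2-ε) ^ (1/q))
        = (((1:ℝ)/2+ε) ^ (1/p), ((1:ℝ)/2-ε) ^ (1/p)) := by
      unfold mazurMap
      simp only
      rw [mazur_comp p q _ hp0 hq0 ha, mazur_comp p q _ hp0 hq0 hb]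
    have hmv : mazurMap p q (((1:ℝ)/2-ε) ^ (1/q), ((1:ℝ)/2+ε) ^ (1/q))
        = (((1:ℝ)/2-ε) ^ (1/p), ((1:ℝ)/2+ε) ^ (1/p)) := by
      unfold mazurMap
      simp only
      rw [mazur_comp p q _ hp0 hq0 hb, mazur_comp p q _ hp0 hq0 ha]
    rw [hmu, hmv] at key
    have hsubp : (((1:ℝ)/2+ε) ^ (1/p), ((1:ℝ)/2-ε) ^ (1/p))
        - (((1:ℝ)/2-ε) ^ (1/p), ((1:ℝ)/2+ε) ^ (1/p))
        = (((1:ℝ)/2+ε) ^ (1/p) - ((1:ℝ)/2-ε) ^ (1/p),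
           ((1:ℝ)/2-ε) ^ (1/p) - ((1:ℝ)/2+ε) ^ (1/p)) := rfl
    have hsubq : (((1:ℝ)/2+ε) ^ (1/q), ((1:ℝ)/2-ε) ^ (1/q))
        - (((1:ℝ)/2-ε) ^ (1/q), ((1:ℝ)/2+ε) ^ (1/q))
        = (((1:ℝ)/2+ε) ^ (1/q) - ((1:ℝ)/2-ε) ^ (1/q),
           ((1:ℝ)/2-ε) ^ (1/q) - ((1:ℝ)/2+ε) ^ (1/q)) := rfl
    have hABp : ((1:ℝ)/2-ε) ^ (1/p) ≤ ((1:ℝ)/2+ε) ^ (1/p) :=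
      (Real.rpow_lt_rpow hb.le (by linarith) (by positivity)).le
    have hABq : ((1:ℝ)/2-ε) ^ (1/q) < ((1:ℝ)/2+ε) ^ (1/q) :=
      Real.rpow_lt_rpow hb.le (by linarith) (by positivity)
    rw [hsubp, hsubq, lrNorm_antisym p _ _ hp0 hABp, lrNorm_antisym q _ _ hq0 hABq.le] at key
    have hFq : 0 < Fq ε :=
      mul_pos (Real.rpow_pos_of_pos two_pos _) (sub_pos.2 hABq)
    rw [div_le_iff₀ hFq]
    exact key
end

section
/- Let X be a separable Banach space that is transitive, let Y be a finite-dimensional linear subspace of X, and suppose there is a bounded linear projection P : X → X with range Y, P ∘ P = P and ‖P‖ ≤ 1. Then Y, with the norm inherited from X, is uniformly micro-semitransitive. -/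
open Metric Set

set_option maxHeartbeats 1000000
set_option synthInstance.maxHeartbeats 200000

lemma exists_isomEquiv {X : Type*} [NormedAddCommGroup X] [NormedSpace ℝ X]
    (htrans : ∀ x y : X, ‖x‖ = 1 → ‖y‖ = 1 →
      ∃ T : X →L[ℝ] X, Function.Surjective T ∧ (∀ z : X, ‖T z‖ = ‖z‖) ∧ T x = y)
    {x y : X} (hx : ‖x‖ = 1) (hy : ‖y‖ = 1) :
    ∃ g : X ≃ₗᵢ[ℝ] X, g x = y := by
  obtain ⟨T, hsurj, hnorm, hxy⟩ := htrans x y hx hy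
  exact ⟨LinearIsometryEquiv.ofSurjective ⟨T.toLinearMap, hnorm⟩ hsurj, hxy⟩


lemma exists_dense_seq {X : Type*} [NormedAddCommGroup X] [NormedSpace ℝ X]
    [TopologicalSpace.SeparableSpace X] (F : Finset X) :
    ∃ gseq : ℕ → (X ≃ₗᵢ[ℝ] X), ∀ g : X ≃ₗᵢ[ℝ] X, ∀ ε > (0:ℝ),
      ∃ n, ∀ z ∈ F, ‖g z - gseq n z‖ < ε := by
  haveI : SecondCountableTopology X := UniformSpace.secondCountable_of_separable X
  set Φ : (X ≃ₗᵢ[ℝ] X) → (F → X) := fun g z => g z with hΦ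
  obtain ⟨s, hsc, hsd⟩ := TopologicalSpace.exists_countable_dense ↥(Set.range Φ)
  have hne : (Set.range Φ).Nonempty := ⟨Φ (LinearIsometryEquiv.refl ℝ X), Set.mem_range_self _⟩
  haveI : Nonempty ↥(Set.range Φ) := hne.to_subtype
  have hsne : s.Nonempty := hsd.nonempty
  obtain ⟨f, hf⟩ := Set.Countable.exists_eq_range hsc hsne
  choose gseq hgseq using fun n => (f n).2
  refine ⟨gseq, fun g ε hε => ?_⟩
  obtain ⟨p, hpd, hps⟩ := Metric.dense_iff.mp hsd ⟨Φ g, Set.mem_range_self g⟩ ε hε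
  rw [hf] at hps
  obtain ⟨n, rfl⟩ := hps
  refine ⟨n, fun z hz => ?_⟩
  have h1 : dist (Φ g) (Φ (gseq n)) < ε := by
    have := hpd
    rw [Metric.mem_ball, Subtype.dist_eq] at this
    rw [hgseq n]
    exact (dist_comm (Φ g) _ ▸ this)
  have h2 := dist_le_pi_dist (Φ g) (Φ (gseq n)) ⟨z, hz⟩
  rw [dist_eq_norm] at h2
  exact lt_of_le_of_lt h2 h1

lemma isom_norm_sub {X : Type*} [NormedAddCommGroup X] [NormedSpace ℝ X]
    (e : X ≃ₗᵢ[ℝ] X) (a b : X) : ‖e a - e b‖ = ‖a - b‖ := by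
  rw [← map_sub, e.norm_map]

lemma key_lemma {X : Type*} [NormedAddCommGroup X] [NormedSpace ℝ X] [CompleteSpace X]
    [TopologicalSpace.SeparableSpace X]
    (htrans : ∀ x y : X, ‖x‖ = 1 → ‖y‖ = 1 →
      ∃ T : X →L[ℝ] X, Function.Surjective T ∧ (∀ z : X, ‖T z‖ = ‖z‖) ∧ T x = y)
    (x : X) (hx : ‖x‖ = 1) (F : Finset X) {ε : ℝ} (hε : 0 < ε) :
    ∃ δ > (0:ℝ), ∀ y : X, ‖y‖ = 1 → ‖y - x‖ < δ → ∀ η > (0:ℝ),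
      ∃ U : X ≃ₗᵢ[ℝ] X, ‖U x - y‖ < η ∧ ∀ z ∈ F, ‖U z - z‖ ≤ ε ∧ ‖U.symm z - z‖ ≤ ε := by
  classical
  obtain ⟨gseq, hgseq⟩ := exists_dense_seq (X := X) F
  set S : Set X := Metric.sphere (0:X) 1 with hS
  haveI : CompleteSpace ↥S := IsClosed.completeSpace_coe (hs := isClosed_sphere)
  have hxS : x ∈ S := by simpa [hS, mem_sphere_zero_iff_norm] using hx
  haveI : Nonempty ↥S := ⟨⟨x, hxS⟩⟩
  set W : Set (X ≃ₗᵢ[ℝ] X) := {w | ∀ z ∈ F, ‖w z - z‖ ≤ ε/2} with hW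
  set A : ℕ → Set ↥S := fun n => {p | ∃ w ∈ W, (p : X) = gseq n (w x)} with hA
  -- covering
  have hcover : ∀ p : ↥S, ∃ n, p ∈ A n := by
    intro p
    have hp : ‖(p : X)‖ = 1 := by
      have := p.2; simpa [hS, mem_sphere_zero_iff_norm] using this
    obtain ⟨g, hg⟩ := exists_isomEquiv htrans hx hp
    obtain ⟨n, hn⟩ := hgseq g (ε/2) (by linarith)
    refine ⟨n, g.trans (gseq n).symm, fun z hz => ?_, ?_⟩
    · have h1 : ‖(g.trans (gseq n).symm) z - z‖ = ‖g z - gseq n z‖ := by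
        rw [LinearIsometryEquiv.trans_apply, ← isom_norm_sub (gseq n),
          LinearIsometryEquiv.apply_symm_apply]
      rw [h1]
      exact (hn z hz).le
    · simp [LinearIsometryEquiv.trans_apply, LinearIsometryEquiv.apply_symm_apply, hg]
  -- Baire category
  have hunion : ⋃ n, closure (A n) = univ := by
    apply eq_univ_iff_forall.mpr
    intro p
    obtain ⟨n, hn⟩ := hcover p
    exact mem_iUnion.mpr ⟨n, subset_closure hn⟩
  obtain ⟨n, q', hq'⟩ := nonempty_interior_of_iUnion_of_closed
    (fun n => isClosed_closure (s := A n)) hunion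
  obtain ⟨r, hr, hball⟩ := Metric.mem_nhds_iff.mp (mem_interior_iff_mem_nhds.mp hq')
  obtain ⟨a, haA, had⟩ := Metric.mem_closure_iff.mp (interior_subset hq') (r/2) (by linarith)
  have hball2 : Metric.ball a (r/2) ⊆ closure (A n) := by
    intro b hb
    apply hball
    have : dist b q' < r := by
      calc dist b q' ≤ dist b a + dist a q' := dist_triangle _ _ _
        _ < r/2 + r/2 := by
            rw [Metric.mem_ball] at hb
            rw [dist_comm] at had
            exact add_lt_add hb had
        _ = r := by ring
    exact Metric.mem_ball.mpr this
  obtain ⟨w, hwW, hwa⟩ := haA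
  refine ⟨r/2, by linarith, fun y hy hyx η hη => ?_⟩
  have hyS : y ∈ S := by simpa [hS, mem_sphere_zero_iff_norm] using hy
  set p : ↥S := ⟨gseq n (w y), by
    simp [hS, mem_sphere_zero_iff_norm, (gseq n).norm_map, w.norm_map, hy]⟩ with hp
  have hpa : dist p a < r/2 := by
    rw [Subtype.dist_eq, hwa, dist_eq_norm, hp]
    rw [isom_norm_sub, isom_norm_sub]
    exact hyx
  have hpcl : p ∈ closure (A n) := hball2 (Metric.mem_ball.mpr hpa)
  obtain ⟨b, hbA, hbd⟩ := Metric.mem_closure_iff.mp hpcl η hη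
  obtain ⟨u, huW, hub⟩ := hbA
  refine ⟨u.trans w.symm, ?_, fun z hz => ⟨?_, ?_⟩⟩
  · have e1 : ‖w.symm (u x) - y‖ = ‖u x - w y‖ := by
      rw [← isom_norm_sub w, LinearIsometryEquiv.apply_symm_apply]
    rw [LinearIsometryEquiv.trans_apply, e1]
    have : ‖gseq n (u x) - gseq n (w y)‖ < η := by
      rw [← dist_eq_norm, ← hub]
      rw [Subtype.dist_eq, hp] at hbd
      rw [dist_comm] at hbd
      exact hbd
    rwa [isom_norm_sub] at this
  · have e2 : ‖w.symm (u z) - z‖ = ‖u z - w z‖ := by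
      rw [← isom_norm_sub w, LinearIsometryEquiv.apply_symm_apply]
    rw [LinearIsometryEquiv.trans_apply, e2]
    calc ‖u z - w z‖ ≤ ‖u z - z‖ + ‖z - w z‖ := norm_sub_le_norm_sub_add_norm_sub _ _ _
      _ ≤ ε/2 + ε/2 := add_le_add (huW z hz) (by rw [norm_sub_rev]; exact hwW z hz)
      _ = ε := by ring
  · have e3 : ‖u.symm (w z) - z‖ = ‖w z - u z‖ := by
      rw [← isom_norm_sub u, LinearIsometryEquiv.apply_symm_apply]
    have egoal : ((u.trans w.symm).symm) z = u.symm (w z) := by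
      simp [LinearIsometryEquiv.symm_trans, LinearIsometryEquiv.trans_apply]
    rw [egoal, e3]
    calc ‖w z - u z‖ ≤ ‖w z - z‖ + ‖z - u z‖ := norm_sub_le_norm_sub_add_norm_sub _ _ _
      _ ≤ ε/2 + ε/2 := add_le_add (hwW z hz) (by rw [norm_sub_rev]; exact huW z hz)
      _ = ε := by ring
/-- a finite-dimensional 1-complemented subspace of a separable transitive
Banach space is uniformly micro-semitransitive. -/
theorem one_complemented_finite_dim_UMST
    {X : Type*} [NormedAddCommGroup X] [NormedSpace ℝ X] [CompleteSpace X]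
    [TopologicalSpace.SeparableSpace X]
    (htrans : ∀ x y : X, ‖x‖ = 1 → ‖y‖ = 1 →
      ∃ T : X →L[ℝ] X, Function.Surjective T ∧ (∀ z : X, ‖T z‖ = ‖z‖) ∧ T x = y)
    (Y : Submodule ℝ X) [FiniteDimensional ℝ Y]
    (P : X →L[ℝ] X) (hPrange : Set.range P = (Y : Set X))
    (hPidem : ∀ x : X, P (P x) = P x) (hPnorm : ‖P‖ ≤ 1) :
    ∀ ε > (0 : ℝ), ∃ δ > (0 : ℝ), ∀ x y : Y, ‖x‖ = 1 → ‖y‖ = 1 → ‖x - y‖ ≤ δ →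
      ∃ T : Y ≃L[ℝ] Y, ‖(T : Y →L[ℝ] Y)‖ ≤ 1 ∧ T x = y ∧
        ‖(T : Y →L[ℝ] Y) - ContinuousLinearMap.id ℝ Y‖ ≤ ε := by
  classical
  intro ε hε
  -- trivial case: no unit vectors in Y
  by_cases hKne : ∃ v : Y, ‖v‖ = 1
  swap
  · exact ⟨1, one_pos, fun x y hx _ _ => absurd ⟨x, hx⟩ hKne⟩
  set ε' : ℝ := min (ε/4) (1/5) with hε'def
  have hε' : 0 < ε' := lt_min (by linarith) (by norm_num)
  have hε'ε : 4 * ε' ≤ ε := by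
    have := min_le_left (ε/4) (1/5); simp only [← hε'def] at this ⊢; linarith
  have hε'1 : 4 * ε' < 1 := by
    have := min_le_right (ε/4) (1/5); simp only [← hε'def] at this ⊢; linarith
  -- facts about P and Y
  have hPY : ∀ w : X, w ∈ Y → P w = w := by
    intro w hw
    have hw' : w ∈ (Y : Set X) := hw
    rw [← hPrange] at hw'
    obtain ⟨u, rfl⟩ := hw'
    exact hPidem u
  have hPmem : ∀ w : X, P w ∈ Y := by
    intro w
    have : P w ∈ Set.range P := Set.mem_range_self w
    rw [hPrange] at this
    exact this
  -- the sphere of Y is compact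
  set K : Set Y := Metric.sphere (0:Y) 1 with hKdef
  have hKcompact : IsCompact K := isCompact_sphere _ _
  -- ε'-net of K
  obtain ⟨t, ht⟩ := hKcompact.elim_finite_subcover
    (fun v : ↥K => Metric.ball ((v : Y)) ε') (fun v => Metric.isOpen_ball)
    (fun w hw => Set.mem_iUnion.mpr ⟨⟨w, hw⟩, Metric.mem_ball_self hε'⟩)
  set F : Finset X := t.image (fun v : ↥K => (((v : Y) : X))) with hFdef
  have hFY : ∀ z ∈ F, z ∈ Y ∧ ‖z‖ = 1 := by
    intro z hz
    rw [hFdef, Finset.mem_image] at hz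
    obtain ⟨v, _, rfl⟩ := hz
    refine ⟨SetLike.coe_mem _, ?_⟩
    exact mem_sphere_zero_iff_norm.mp v.2
  -- key lemma at each point of K
  have hkey := fun v : ↥K => key_lemma htrans ((v : Y) : X)
    (mem_sphere_zero_iff_norm.mp v.2) F hε'
  choose δf hδfpos hδf using hkey
  -- cover K by balls of radius δf v / 2
  obtain ⟨s, hs⟩ := hKcompact.elim_finite_subcover
    (fun v : ↥K => Metric.ball ((v : Y)) (δf v / 2)) (fun v => Metric.isOpen_ball)
    (fun w hw => Set.mem_iUnion.mpr ⟨⟨w, hw⟩, Metric.mem_ball_self (by linarith [hδfpos ⟨w, hw⟩])⟩)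
  obtain ⟨v₀, hv₀⟩ := hKne
  have hv₀K : v₀ ∈ K := by rw [hKdef, mem_sphere_zero_iff_norm]; exact hv₀
  have hsne : s.Nonempty := by
    have := hs hv₀K
    rw [Set.mem_iUnion₂] at this
    obtain ⟨v, hv, _⟩ := this
    exact ⟨v, hv⟩
  set δ : ℝ := s.inf' hsne (fun v => δf v / 2) with hδdef
  have hδpos : 0 < δ := by
    rw [hδdef, Finset.lt_inf'_iff]
    intro v _; linarith [hδfpos v]
  refine ⟨δ, hδpos, fun x y hx hy hxy => ?_⟩
  -- find a net point v close to x
  have hxK : x ∈ K := by rw [hKdef, mem_sphere_zero_iff_norm]; exact hx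
  have := hs hxK
  rw [Set.mem_iUnion₂] at this
  obtain ⟨v, hvs, hxv⟩ := this
  rw [Metric.mem_ball, dist_eq_norm] at hxv
  have hδle : δ ≤ δf v / 2 := Finset.inf'_le _ hvs
  -- coercion norms
  have hcoe : ∀ a b : Y, ‖((a : X)) - ((b : X))‖ = ‖a - b‖ := fun a b => rfl
  have hxX : ‖(x : X)‖ = 1 := by rw [Submodule.norm_coe]; exact hx
  have hyX : ‖(y : X)‖ = 1 := by rw [Submodule.norm_coe]; exact hy
  have hxvX : ‖(x : X) - ((v : Y) : X)‖ < δf v := by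
    rw [hcoe]; linarith [hδfpos v]
  have hyvX : ‖(y : X) - ((v : Y) : X)‖ < δf v := by
    rw [hcoe]
    have : ‖y - (v : Y)‖ ≤ ‖y - x‖ + ‖x - (v:Y)‖ := norm_sub_le_norm_sub_add_norm_sub _ _ _
    have hyx : ‖y - x‖ ≤ δ := by rw [norm_sub_rev]; exact hxy
    linarith
  -- sequences of isometries
  have hUex : ∀ m : ℕ, ∃ U : X ≃ₗᵢ[ℝ] X, ‖U ((v : Y) : X) - (y : X)‖ < 1/(m+1) ∧
      ∀ z ∈ F, ‖U z - z‖ ≤ ε' ∧ ‖U.symm z - z‖ ≤ ε' :=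
    fun m => hδf v (y : X) hyX hyvX (1/(m+1)) (by positivity)
  have hVex : ∀ m : ℕ, ∃ U : X ≃ₗᵢ[ℝ] X, ‖U ((v : Y) : X) - (x : X)‖ < 1/(m+1) ∧
      ∀ z ∈ F, ‖U z - z‖ ≤ ε' ∧ ‖U.symm z - z‖ ≤ ε' :=
    fun m => hδf v (x : X) hxX hxvX (1/(m+1)) (by positivity)
  choose Um hUm1 hUm2 using hUex
  choose Vm hVm1 hVm2 using hVex
  set Q : ℕ → (X ≃ₗᵢ[ℝ] X) := fun m => (Vm m).symm.trans (Um m) with hQdef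
  have hQapp : ∀ m z, Q m z = Um m ((Vm m).symm z) := fun m z => rfl
  have hQF : ∀ m, ∀ z ∈ F, ‖Q m z - z‖ ≤ 2 * ε' := by
    intro m z hz
    have h1 : ‖Um m ((Vm m).symm z) - Um m z‖ = ‖(Vm m).symm z - z‖ := isom_norm_sub _ _ _
    have h2 : ‖(Vm m).symm z - z‖ ≤ ε' := (hVm2 m z hz).2
    have h3 : ‖Um m z - z‖ ≤ ε' := (hUm2 m z hz).1
    calc ‖Q m z - z‖ ≤ ‖Um m ((Vm m).symm z) - Um m z‖ + ‖Um m z - z‖ := by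
          rw [hQapp]; exact norm_sub_le_norm_sub_add_norm_sub _ _ _
      _ ≤ ε' + ε' := by rw [h1]; exact add_le_add h2 h3
      _ = 2 * ε' := by ring
  have hQxy : ∀ m, ‖Q m (x : X) - (y : X)‖ < 2/(m+1) := by
    intro m
    have h1 : ‖Um m ((Vm m).symm x) - Um m ((v:Y):X)‖ = ‖(Vm m).symm (x:X) - ((v:Y):X)‖ :=
      isom_norm_sub _ _ _
    have h2 : ‖(Vm m).symm (x:X) - ((v:Y):X)‖ = ‖(x:X) - Vm m ((v:Y):X)‖ := by
      rw [← isom_norm_sub (Vm m), LinearIsometryEquiv.apply_symm_apply]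
    have h3 : ‖(x:X) - Vm m ((v:Y):X)‖ < 1/(m+1) := by
      rw [norm_sub_rev]; exact hVm1 m
    calc ‖Q m (x:X) - (y:X)‖
        ≤ ‖Um m ((Vm m).symm x) - Um m ((v:Y):X)‖ + ‖Um m ((v:Y):X) - (y:X)‖ := by
          rw [hQapp]; exact norm_sub_le_norm_sub_add_norm_sub _ _ _
      _ < 1/(m+1) + 1/(m+1) := by
          apply add_lt_add _ (hUm1 m)
          rw [h1, h2]; exact h3
      _ = 2/(m+1) := by ring
  -- the contractions on Y
  set PY : X →L[ℝ] Y := P.codRestrict Y hPmem with hPYdef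
  set Tseq : ℕ → (Y →L[ℝ] Y) := fun m =>
    PY.comp (((Q m).toLinearIsometry.toContinuousLinearMap).comp Y.subtypeL) with hTdef
  have hTapp : ∀ m (w : Y), ((Tseq m w : Y) : X) = P (Q m (w : X)) := fun m w => rfl
  have hTnorm : ∀ m, ‖Tseq m‖ ≤ 1 := by
    intro m
    apply ContinuousLinearMap.opNorm_le_bound _ zero_le_one
    intro w
    have : ‖(Tseq m w : X)‖ ≤ ‖(w : X)‖ := by
      rw [hTapp]
      calc ‖P (Q m (w:X))‖ ≤ ‖P‖ * ‖Q m (w:X)‖ := P.le_opNorm _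
        _ ≤ 1 * ‖Q m (w:X)‖ := by
            apply mul_le_mul_of_nonneg_right hPnorm (norm_nonneg _)
        _ = ‖(w:X)‖ := by rw [one_mul, (Q m).norm_map]
    rw [one_mul]
    simpa using this
  have hTid : ∀ m, ‖Tseq m - ContinuousLinearMap.id ℝ Y‖ ≤ 4 * ε' := by
    intro m
    apply ContinuousLinearMap.opNorm_le_bound _ (by linarith)
    intro w
    rcases eq_or_ne w 0 with rfl | hw0
    · simp
    -- reduce to the unit sphere
    have hwpos : 0 < ‖w‖ := norm_pos_iff.mpr hw0
    set w' : Y := ‖w‖⁻¹ • w with hw'def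
    have hw' : ‖w'‖ = 1 := by
      rw [hw'def, norm_smul, norm_inv, norm_norm, inv_mul_cancel₀ hwpos.ne']
    have hw'K : w' ∈ K := by rw [hKdef, mem_sphere_zero_iff_norm]; exact hw'
    have := ht hw'K
    rw [Set.mem_iUnion₂] at this
    obtain ⟨z, hzt, hz⟩ := this
    rw [Metric.mem_ball, dist_eq_norm] at hz
    have hzF : ((z : Y) : X) ∈ F := by
      rw [hFdef, Finset.mem_image]; exact ⟨z, hzt, rfl⟩
    have hPz : P ((z : Y) : X) = ((z : Y) : X) := hPY _ (SetLike.coe_mem _)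
    have hband : ‖(Tseq m w' : X) - (w' : X)‖ ≤ 4 * ε' := by
      rw [hTapp]
      have e1 : ‖P (Q m (w':X)) - P (Q m ((z:Y):X))‖ ≤ ε' := by
        calc ‖P (Q m (w':X)) - P (Q m ((z:Y):X))‖
            = ‖P (Q m (w':X) - Q m ((z:Y):X))‖ := by rw [map_sub]
          _ ≤ ‖P‖ * ‖Q m (w':X) - Q m ((z:Y):X)‖ := P.le_opNorm _
          _ ≤ 1 * ‖Q m (w':X) - Q m ((z:Y):X)‖ :=
              mul_le_mul_of_nonneg_right hPnorm (norm_nonneg _)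
          _ = ‖(w':X) - ((z:Y):X)‖ := by rw [one_mul, isom_norm_sub]
          _ ≤ ε' := by rw [hcoe]; exact hz.le
      have e2 : ‖P (Q m ((z:Y):X)) - ((z:Y):X)‖ ≤ 2 * ε' := by
        calc ‖P (Q m ((z:Y):X)) - ((z:Y):X)‖
            = ‖P (Q m ((z:Y):X)) - P ((z:Y):X)‖ := by rw [hPz]
          _ = ‖P (Q m ((z:Y):X) - ((z:Y):X))‖ := by rw [map_sub]
          _ ≤ ‖P‖ * ‖Q m ((z:Y):X) - ((z:Y):X)‖ := P.le_opNorm _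
          _ ≤ 1 * ‖Q m ((z:Y):X) - ((z:Y):X)‖ :=
              mul_le_mul_of_nonneg_right hPnorm (norm_nonneg _)
          _ ≤ 2 * ε' := by rw [one_mul]; exact hQF m _ hzF
      have e3 : ‖((z:Y):X) - (w':X)‖ ≤ ε' := by
        rw [hcoe, norm_sub_rev]; exact hz.le
      calc ‖P (Q m (w':X)) - (w':X)‖
          ≤ ‖P (Q m (w':X)) - P (Q m ((z:Y):X))‖ + ‖P (Q m ((z:Y):X)) - (w':X)‖ :=
            norm_sub_le_norm_sub_add_norm_sub _ _ _
        _ ≤ ε' + (‖P (Q m ((z:Y):X)) - ((z:Y):X)‖ + ‖((z:Y):X) - (w':X)‖) := by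
            gcongr
            exact norm_sub_le_norm_sub_add_norm_sub _ _ _
        _ ≤ ε' + (2 * ε' + ε') := by gcongr
        _ = 4 * ε' := by ring
    have hlin : (Tseq m - ContinuousLinearMap.id ℝ Y) w
        = ‖w‖ • ((Tseq m - ContinuousLinearMap.id ℝ Y) w') := by
      rw [← map_smul]
      congr 1
      rw [hw'def, smul_smul, mul_inv_cancel₀ hwpos.ne', one_smul]
    calc ‖(Tseq m - ContinuousLinearMap.id ℝ Y) w‖
        = ‖w‖ * ‖(Tseq m - ContinuousLinearMap.id ℝ Y) w'‖ := by
          rw [hlin, norm_smul, norm_norm]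
      _ ≤ ‖w‖ * (4 * ε') := by
          apply mul_le_mul_of_nonneg_left _ (norm_nonneg _)
          have : ‖Tseq m w' - w'‖ ≤ 4 * ε' := by
            have := hband
            rwa [hcoe] at this
          simpa using this
      _ = 4 * ε' * ‖w‖ := by ring
  have hTx : ∀ m, ‖(Tseq m x : X) - (y : X)‖ ≤ 2/(m+1) := by
    intro m
    rw [hTapp]
    have hPyy : P (y : X) = (y : X) := hPY _ (SetLike.coe_mem _)
    calc ‖P (Q m (x:X)) - (y:X)‖ = ‖P (Q m (x:X)) - P (y:X)‖ := by rw [hPyy]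
      _ = ‖P (Q m (x:X) - (y:X))‖ := by rw [map_sub]
      _ ≤ ‖P‖ * ‖Q m (x:X) - (y:X)‖ := P.le_opNorm _
      _ ≤ 1 * ‖Q m (x:X) - (y:X)‖ := mul_le_mul_of_nonneg_right hPnorm (norm_nonneg _)
      _ ≤ 2/(m+1) := by rw [one_mul]; exact (hQxy m).le
  -- extract a convergent subsequence
  haveI : FiniteDimensional ℝ (↥Y →L[ℝ] ↥Y) := inferInstance
  haveI : ProperSpace (↥Y →L[ℝ] ↥Y) := by exact FiniteDimensional.proper ℝ (↥Y →L[ℝ] ↥Y)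
  have hTmem : ∀ m, Tseq m ∈ Metric.closedBall (0 : Y →L[ℝ] Y) 1 := by
    intro m
    exact Metric.mem_closedBall.mpr ((dist_zero_right (Tseq m)).le.trans (hTnorm m))
  obtain ⟨T₀, hT₀mem, φ, hφ, hφtend⟩ :=
    (isCompact_closedBall (0 : Y →L[ℝ] Y) 1).tendsto_subseq hTmem
  have hT₀norm : ‖T₀‖ ≤ 1 :=
    (dist_zero_right T₀).symm.le.trans (Metric.mem_closedBall.mp hT₀mem)
  have hT₀id : ‖T₀ - ContinuousLinearMap.id ℝ Y‖ ≤ 4 * ε' := by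
    have htendsub : Filter.Tendsto (fun m => ‖Tseq (φ m) - ContinuousLinearMap.id ℝ Y‖)
        Filter.atTop (nhds ‖T₀ - ContinuousLinearMap.id ℝ Y‖) :=
      by exact (Filter.Tendsto.norm (E := (↥Y →L[ℝ] ↥Y)) (hφtend.sub tendsto_const_nhds))
    exact le_of_tendsto htendsub (Filter.Eventually.of_forall fun m => hTid (φ m))
  -- T₀ x = y
  have hT₀x : T₀ x = y := by
    have h1 : Filter.Tendsto (fun m => Tseq (φ m) x) Filter.atTop (nhds (T₀ x)) := by
      have : Continuous (fun A : Y →L[ℝ] Y => A x) :=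
        (ContinuousLinearMap.apply ℝ Y x).continuous
      exact (this.tendsto T₀).comp hφtend
    have h2 : Filter.Tendsto (fun m => Tseq (φ m) x) Filter.atTop (nhds y) := by
      rw [tendsto_iff_dist_tendsto_zero]
      apply squeeze_zero (fun m => dist_nonneg)
        (g := fun m => 2/((φ m : ℝ)+1))
      · intro m
        rw [Subtype.dist_eq, dist_eq_norm]
        exact hTx (φ m)
      · have base : Filter.Tendsto (fun n : ℕ => 2/((n:ℝ)+1)) Filter.atTop (nhds 0) := by
          have := tendsto_one_div_add_atTop_nhds_zero_nat (𝕜 := ℝ)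
          have h := this.const_mul (2:ℝ)
          simpa [div_eq_mul_inv, mul_comm, mul_assoc, mul_left_comm] using h
        exact base.comp hφ.tendsto_atTop
    exact tendsto_nhds_unique h1 h2
  -- invertibility
  have hinj : Function.Injective T₀ := by
    intro a b hab
    by_contra hne
    have h0 : a - b ≠ 0 := sub_ne_zero_of_ne hne
    have h2 : T₀ (a - b) = 0 := by rw [map_sub, hab, sub_self]
    have h1 : (T₀ - ContinuousLinearMap.id ℝ Y) (a - b) = -(a - b) := by
      rw [ContinuousLinearMap.sub_apply, h2, ContinuousLinearMap.id_apply, zero_sub]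
    have h3 : ‖(T₀ - ContinuousLinearMap.id ℝ Y) (a - b)‖ ≤ 4 * ε' * ‖a - b‖ :=
      le_trans ((T₀ - ContinuousLinearMap.id ℝ Y).le_opNorm _)
        (mul_le_mul_of_nonneg_right hT₀id (norm_nonneg _))
    rw [h1, norm_neg] at h3
    have h4 : 0 < ‖a - b‖ := norm_pos_iff.mpr h0
    nlinarith
  have hbij : Function.Bijective T₀ := by
    refine ⟨hinj, ?_⟩
    have := (LinearMap.injective_iff_surjective (f := (T₀ : Y →ₗ[ℝ] Y))).mp hinj
    exact this
  set e : Y ≃ₗ[ℝ] Y := LinearEquiv.ofBijective (T₀ : Y →ₗ[ℝ] Y) hbij with hedef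
  set T : Y ≃L[ℝ] Y := e.toContinuousLinearEquiv with hTdef2
  have hcoeT : (T : Y →L[ℝ] Y) = T₀ := by
    ext w; rfl
  refine ⟨T, ?_, ?_, ?_⟩
  · rw [hcoeT]; exact hT₀norm
  · show (T : Y →L[ℝ] Y) x = y
    rw [hcoeT]; exact hT₀x
  · rw [hcoeT]; linarith
end

section
/- Let X be a Banach space whose norm is equivalent to a norm induced by an inner product (a renorming of a Hilbert space), with unit sphere S. Then the set of points of S that admit an inner ellipsoid is dense in S, and there exists at least one point of S that admits an outer ellipsoid. -/
/-- A function `n` is a norm coming from an inner product iff it is a norm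
satisfying the parallelogram law. -/
def IsEuclideanNorm {X : Type*} [AddCommGroup X] [Module ℝ X] (n : X → ℝ) : Prop :=
  (∀ z : X, 0 ≤ n z) ∧ (∀ z : X, n z = 0 ↔ z = 0) ∧
  (∀ (c : ℝ) (z : X), n (c • z) = |c| * n z) ∧
  (∀ u v : X, n (u + v) ≤ n u + n v) ∧
  (∀ u v : X, n (u + v) ^ 2 + n (u - v) ^ 2 = 2 * n u ^ 2 + 2 * n v ^ 2)

/-- The norm of `X` is equivalent to a norm induced by an inner product. -/
def IsHilbertRenorming (X : Type*) [NormedAddCommGroup X] [Module ℝ X] : Prop :=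
  ∃ n : X → ℝ, IsEuclideanNorm n ∧
    ∃ a > (0 : ℝ), ∃ b > (0 : ℝ), ∀ z : X, a * ‖z‖ ≤ n z ∧ n z ≤ b * ‖z‖

/-- The point `x` of the unit sphere admits an inner ellipsoid: an equivalent
inner-product norm `n` with `‖z‖ ≤ n z` everywhere and `n x = 1`. -/
def InnerEllipsoidAt {X : Type*} [NormedAddCommGroup X] [Module ℝ X] (x : X) : Prop :=
  ∃ n : X → ℝ, IsEuclideanNorm n ∧ (∃ b > (0 : ℝ), ∀ z : X, n z ≤ b * ‖z‖) ∧
    (∀ z : X, ‖z‖ ≤ n z) ∧ n x = 1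

/-- The point `x` of the unit sphere admits an outer ellipsoid: an equivalent
inner-product norm `n` with `n z ≤ ‖z‖` everywhere and `n x = 1`. -/
def OuterEllipsoidAt {X : Type*} [NormedAddCommGroup X] [Module ℝ X] (x : X) : Prop :=
  ∃ n : X → ℝ, IsEuclideanNorm n ∧ (∃ a > (0 : ℝ), ∀ z : X, a * ‖z‖ ≤ n z) ∧
    (∀ z : X, n z ≤ ‖z‖) ∧ n x = 1

section Bilin
variable {X : Type*} [NormedAddCommGroup X] [NormedSpace ℝ X]

/-- Cauchy-Schwarz for a positive symmetric bilinear form. -/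
theorem bil_cs (B : X →ₗ[ℝ] X →ₗ[ℝ] ℝ) (hs : ∀ u v, B u v = B v u)
    (hp : ∀ z, 0 ≤ B z z) (u v : X) : (B u v) ^ 2 ≤ B u u * B v v := by
  have h : ∀ t : ℝ, 0 ≤ B u u * (t * t) + (2 * B u v) * t + B v v := by
    intro t
    have := hp (t • u + v)
    simp only [map_add, map_smul, LinearMap.add_apply, LinearMap.smul_apply, smul_eq_mul] at this
    rw [hs v u] at this
    nlinarith [this]
  have := discrim_le_zero h
  simp only [discrim] at this
  nlinarith

theorem bil_cs_abs (B : X →ₗ[ℝ] X →ₗ[ℝ] ℝ) (hs : ∀ u v, B u v = B v u)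
    (hp : ∀ z, 0 ≤ B z z) (u v : X) : |B u v| ≤ Real.sqrt (B u u) * Real.sqrt (B v v) := by
  have h := bil_cs B hs hp u v
  have h2 : |B u v| = Real.sqrt ((B u v) ^ 2) := by
    rw [Real.sqrt_sq_eq_abs]
  rw [h2, ← Real.sqrt_mul (hp u)]
  exact Real.sqrt_le_sqrt h

theorem bil_sqrt_triangle (B : X →ₗ[ℝ] X →ₗ[ℝ] ℝ) (hs : ∀ u v, B u v = B v u)
    (hp : ∀ z, 0 ≤ B z z) (u v : X) :
    Real.sqrt (B (u + v) (u + v)) ≤ Real.sqrt (B u u) + Real.sqrt (B v v) := by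
  have hcs := bil_cs_abs B hs hp u v
  have hexp : B (u + v) (u + v) = B u u + 2 * B u v + B v v := by
    simp only [map_add, LinearMap.add_apply]
    rw [hs v u]; ring
  have h1 : B (u + v) (u + v) ≤ (Real.sqrt (B u u) + Real.sqrt (B v v)) ^ 2 := by
    rw [hexp]
    have e1 : Real.sqrt (B u u) ^ 2 = B u u := Real.sq_sqrt (hp u)
    have e2 : Real.sqrt (B v v) ^ 2 = B v v := Real.sq_sqrt (hp v)
    nlinarith [abs_le.mp (abs_abs (B u v) ▸ le_refl |B u v|), le_abs_self (B u v)]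
  calc Real.sqrt (B (u + v) (u + v)) ≤ Real.sqrt ((Real.sqrt (B u u) + Real.sqrt (B v v)) ^ 2) :=
        Real.sqrt_le_sqrt h1
    _ = Real.sqrt (B u u) + Real.sqrt (B v v) := by
        rw [Real.sqrt_sq (by positivity)]

/-- The square root of a positive-definite bounded-below quadratic form is a Euclidean norm. -/
theorem isEuclideanNorm_sqrt (B : X →ₗ[ℝ] X →ₗ[ℝ] ℝ) (hs : ∀ u v, B u v = B v u)
    (c : ℝ) (hc : 0 < c) (hlow : ∀ z, c * ‖z‖ ^ 2 ≤ B z z) :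
    IsEuclideanNorm (fun z => Real.sqrt (B z z)) := by
  have hp : ∀ z : X, 0 ≤ B z z := fun z => le_trans (by positivity) (hlow z)
  refine ⟨fun z => Real.sqrt_nonneg _, ?_, ?_, ?_, ?_⟩
  · intro z
    constructor
    · intro h
      have h0 : B z z ≤ 0 := Real.sqrt_eq_zero'.mp h
      have := hlow z
      by_contra hz
      have h3 : 0 < ‖z‖ := norm_pos_iff.mpr hz
      nlinarith [mul_pos hc (by positivity : (0:ℝ) < ‖z‖ ^ 2)]
    · intro h; subst h; simp
  · intro a z
    show Real.sqrt (B (a • z) (a • z)) = |a| * Real.sqrt (B z z)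
    have : B (a • z) (a • z) = a ^ 2 * B z z := by
      simp only [map_smul, LinearMap.smul_apply, smul_eq_mul]; ring
    rw [this, Real.sqrt_mul (sq_nonneg a), Real.sqrt_sq_eq_abs]
  · exact fun u v => bil_sqrt_triangle B hs hp u v
  · intro u v
    rw [Real.sq_sqrt (hp _), Real.sq_sqrt (hp _), Real.sq_sqrt (hp _), Real.sq_sqrt (hp _)]
    simp only [map_add, map_sub, LinearMap.add_apply, LinearMap.sub_apply]
    ring

end Bilin

section JvN
variable {X : Type*} [NormedAddCommGroup X] [NormedSpace ℝ X]

/-- Jordan-von Neumann: a Euclidean norm comes from a symmetric bilinear form. -/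
theorem exists_bilin_of_euclidean (n : X → ℝ) (hn : IsEuclideanNorm n) :
    ∃ B : X →ₗ[ℝ] X →ₗ[ℝ] ℝ, (∀ u v, B u v = B v u) ∧ (∀ z, B z z = n z ^ 2) := by
  obtain ⟨hpos, hzero, hhom, htri, hpar⟩ := hn
  have n_neg : ∀ z : X, n (-z) = n z := by
    intro z
    have : (-z : X) = (-1 : ℝ) • z := by simp
    rw [this, hhom]; norm_num
  have n_two : ∀ z : X, n (z + z) = 2 * n z := by
    intro z
    rw [← two_smul ℝ z, hhom]
    norm_num
  set q : X → ℝ := fun z => n z ^ 2 with hq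
  have q_neg : ∀ z, q (-z) = q z := fun z => by simp only [hq, n_neg]
  have q0 : q 0 = 0 := by
    have : n (0 : X) = 0 := (hzero 0).mpr rfl
    simp [hq, this]
  set p : X → X → ℝ := fun u v => (q (u + v) - q (u - v)) / 4 with hp
  have psymm : ∀ u v, p u v = p v u := by
    intro u v
    have h1 : u + v = v + u := by abel
    have h2 : u - v = -(v - u) := by abel
    simp only [hp, h1, h2, q_neg]
  have hA : ∀ u w v, p (u + w) v + p (u - w) v = 2 * p u v := by
    intro u w v
    have e1 : u + w + v = (u + v) + w := by abel
    have e2 : u + w - v = (u - v) + w := by abel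
    have e3 : u - w + v = (u + v) - w := by abel
    have e4 : u - w - v = (u - v) - w := by abel
    have h1 := hpar (u + v) w
    have h2 := hpar (u - v) w
    simp only [hp, e1, e2, e3, e4]
    simp only [hq] at h1 h2 ⊢
    linarith
  have p0 : ∀ v, p 0 v = 0 := by
    intro v
    simp only [hp, zero_add, zero_sub, q_neg]
    ring
  have pdouble : ∀ u v, p (u + u) v = 2 * p u v := by
    intro u v
    have := hA u u v
    simp only [sub_self, p0] at this
    linarith
  have padd : ∀ u w v, p (u + w) v = p u v + p w v := by
    intro u w v
    set m := (1/2 : ℝ) • (u + w) with hm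
    set d := (1/2 : ℝ) • (u - w) with hd
    have hmd1 : m + d = u := by
      rw [hm, hd, ← smul_add]
      have e : (u + w) + (u - w) = u + u := by abel
      rw [e, ← two_smul ℝ u, smul_smul]
      norm_num
    have hmd2 : m - d = w := by
      rw [hm, hd, ← smul_sub]
      have e : (u + w) - (u - w) = w + w := by abel
      rw [e, ← two_smul ℝ w, smul_smul]
      norm_num
    have hmm : m + m = u + w := by
      rw [hm, ← two_smul ℝ, smul_smul]
      norm_num
    have h1 := hA m d v
    rw [hmd1, hmd2] at h1
    have h2 := pdouble m v
    rw [hmm] at h2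
    linarith
  -- bound used for continuity in the scalar variable
  have ndiff : ∀ a b : X, n a - n b ≤ n (a - b) := by
    intro a b
    have := htri (a - b) b
    simp only [sub_add_cancel] at this
    linarith
  have pbound : ∀ z v, |p z v| ≤ n z * (n z + n v) := by
    intro z v
    have key : ∀ a b : X, n a - n b ≤ n (a + b) := by
      intro a b
      have := ndiff a (-b)
      rw [n_neg, sub_neg_eq_add] at this
      exact this
    have h1 : n (z + v) - n (z - v) ≤ 2 * n z := by
      have := key (z + v) (z - v)
      have e : (z + v) + (z - v) = z + z := by abel
      rw [e, n_two] at this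
      linarith
    have h2 : n (z - v) - n (z + v) ≤ 2 * n z := by
      have := key (z - v) (z + v)
      have e : (z - v) + (z + v) = z + z := by abel
      rw [e, n_two] at this
      linarith
    have h3 : n (z + v) ≤ n z + n v := htri z v
    have h4 : n (z - v) ≤ n z + n v := by
      have := htri z (-v)
      rw [n_neg] at this
      simpa [sub_eq_add_neg] using this
    have e1 : |p z v| = |q (z + v) - q (z - v)| / 4 := by
      rw [hp]; rw [abs_div]; norm_num
    have e2 : |q (z + v) - q (z - v)| ≤ (2 * n z) * (n (z + v) + n (z - v)) := by
      have : q (z + v) - q (z - v) = (n (z+v) - n (z-v)) * (n (z+v) + n (z-v)) := by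
        simp only [hq]; ring
      rw [this, abs_mul]
      have hnn : 0 ≤ n (z + v) + n (z - v) := by
        have := hpos (z + v); have := hpos (z - v); linarith
      rw [abs_of_nonneg hnn]
      apply mul_le_mul_of_nonneg_right _ hnn
      rw [abs_le]
      constructor <;> [linarith; linarith]
    have hnz := hpos z
    have hnv := hpos v
    have hzv := hpos (z + v)
    have hzv2 := hpos (z - v)
    calc |p z v| = |q (z + v) - q (z - v)| / 4 := e1
      _ ≤ (2 * n z) * (n (z + v) + n (z - v)) / 4 := by linarith
      _ ≤ n z * (n z + n v) := by nlinarith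
  have psmul : ∀ (a : ℝ) u v, p (a • u) v = a * p u v := by
    intro a u v
    set f : ℝ → ℝ := fun c => p (c • u) v with hf
    have fadd : ∀ c d : ℝ, f (c + d) = f c + f d := by
      intro c d
      simp only [hf, add_smul]
      exact padd _ _ _
    have fcont : Continuous f := by
      rw [Metric.continuous_iff]
      intro c ε hε
      set C := n u * (n u + n v) with hC
      have hC0 : 0 ≤ C := by
        have := hpos u; have := hpos v; positivity
      refine ⟨min 1 (ε / (C + 1)), by positivity, ?_⟩
      intro c' hc'
      rw [Real.dist_eq] at hc'
      have hd1 : |c' - c| < 1 := lt_of_lt_of_le hc' (min_le_left _ _)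
      have hd2 : |c' - c| < ε / (C + 1) := lt_of_lt_of_le hc' (min_le_right _ _)
      have hdiff : f c' - f c = p ((c' - c) • u) v := by
        have : f c' = f ((c' - c) + c) := by ring_nf
        rw [this, fadd]
        ring
      have hb := pbound ((c' - c) • u) v
      rw [hhom] at hb
      have habs : |c' - c| ≤ 1 := le_of_lt hd1
      have hnu := hpos u
      have hnv := hpos v
      rw [Real.dist_eq, hdiff]
      have h5 : |p ((c' - c) • u) v| ≤ |c' - c| * (n u * (n u + n v)) := by
        have : |c' - c| * n u * (|c' - c| * n u + n v) ≤ |c' - c| * (n u * (n u + n v)) := by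
          nlinarith [mul_nonneg (mul_nonneg (abs_nonneg (c' - c)) (mul_nonneg hnu hnu)) (sub_nonneg.mpr habs)]
        linarith
      have h6 : |c' - c| * (C + 1) < ε := by
        rcases le_or_gt (C + 1) 0 with h | h
        · nlinarith
        · calc |c' - c| * (C + 1) < (ε / (C + 1)) * (C + 1) := by
                apply mul_lt_mul_of_pos_right hd2 h
            _ = ε := by field_simp
      calc |p ((c' - c) • u) v| ≤ |c' - c| * C := h5
        _ ≤ |c' - c| * (C + 1) := by nlinarith [abs_nonneg (c' - c)]
        _ < ε := h6
    have f0 : f 0 = 0 := by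
      simp only [hf, zero_smul]
      have := p0 v
      simpa using this
    set g : ℝ →+ ℝ := AddMonoidHom.mk' f fadd with hg
    have := (g.toRealLinearMap fcont).map_smul a 1
    simp only [smul_eq_mul, mul_one] at this
    have hfa : f a = a * f 1 := by
      have h1 : (g.toRealLinearMap fcont) a = f a := rfl
      have h2 : (g.toRealLinearMap fcont) 1 = f 1 := rfl
      rw [h1, h2] at this
      simpa using this
    simp only [hf] at hfa
    rw [one_smul] at hfa
    exact hfa
  have pdiag : ∀ u, p u u = q u := by
    intro u
    have : p u u = (q (u + u) - q 0) / 4 := by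
      simp only [hp, sub_self]
    rw [this, q0]
    have : q (u + u) = 4 * q u := by
      simp only [hq, n_two]; ring
    rw [this]; ring
  refine ⟨LinearMap.mk₂ ℝ p padd (fun c m v => by simp only [smul_eq_mul]; exact psmul c m v)
      (fun m u v => by rw [psymm m (u+v), padd, psymm u m, psymm v m])
      (fun c m v => by simp only [smul_eq_mul]; rw [psymm m (c • v), psmul, psymm v m]), ?_, ?_⟩
  · intro u v
    simp only [LinearMap.mk₂_apply]
    exact psymm u v
  · intro z
    simp only [LinearMap.mk₂_apply]
    exact pdiag z

end JvN

section Engine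
variable {X : Type*} [NormedAddCommGroup X] [NormedSpace ℝ X]

theorem exists_norm_one (X : Type*) [NormedAddCommGroup X] [NormedSpace ℝ X] [Nontrivial X] :
    ∃ w : X, ‖w‖ = 1 := by
  obtain ⟨v, hv⟩ := exists_ne (0 : X)
  refine ⟨‖v‖⁻¹ • v, ?_⟩
  have hv0 : 0 < ‖v‖ := norm_pos_iff.mpr hv
  rw [norm_smul, Real.norm_eq_abs, abs_of_nonneg (by positivity)]
  field_simp

/-- Invariant of the inner-ellipsoid iteration. -/
def PIn (B₀ B : X →ₗ[ℝ] X →ₗ[ℝ] ℝ) (z : X) (σ : ℝ) (k : ℕ) : Prop :=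
  (∀ u v, B u v = B v u) ∧ (∀ w, ‖w‖ ^ 2 ≤ B w w) ∧
  (∀ w, B w w ≤ (2 - (1/2) * (1/4) ^ k) * (B₀ w w)) ∧ ‖z‖ = 1 ∧
  (∀ w, ‖w‖ = 1 → B z z ≤ B w w + σ * (1/16) ^ k)

/-- Relation between consecutive steps of the iteration. -/
def RIn (M σ : ℝ) (k : ℕ) (B B' : X →ₗ[ℝ] X →ₗ[ℝ] ℝ) (z z' : X) : Prop :=
  (∀ w, B w w ≤ B' w w) ∧
  (∀ w, B' w w ≤ B w w + (1/16) * (1/4) ^ k * (2 * M * ‖w‖ ^ 2)) ∧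
  (∀ u v, |B' u v - B u v| ≤ (1/16) * (1/4) ^ k * (4 * M * ‖u‖ * ‖v‖)) ∧
  ‖z' - z‖ ≤ 10 * Real.sqrt σ * (1/2) ^ k

theorem sqrt17_le : Real.sqrt 17 ≤ 5 := by
  have h25 : Real.sqrt 25 = 5 := by
    rw [show (25 : ℝ) = 5 ^ 2 by norm_num, Real.sqrt_sq (by norm_num)]
  calc Real.sqrt 17 ≤ Real.sqrt 25 := Real.sqrt_le_sqrt (by norm_num)
    _ = 5 := h25

theorem pow16_eq (k : ℕ) : (1/16 : ℝ) ^ k = (1/4 : ℝ) ^ k * (1/4 : ℝ) ^ k := by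
  rw [← mul_pow]; norm_num

theorem pow4_eq (k : ℕ) : (1/4 : ℝ) ^ k = (1/2 : ℝ) ^ k * (1/2 : ℝ) ^ k := by
  rw [← mul_pow]; norm_num

set_option maxHeartbeats 1000000 in
theorem inner_step [Nontrivial X] (B₀ : X →ₗ[ℝ] X →ₗ[ℝ] ℝ) (M σ : ℝ) (hσ : 0 < σ) (hM : 0 < M)
    (hlow₀ : ∀ z : X, ‖z‖ ^ 2 ≤ B₀ z z) (hup₀ : ∀ z : X, B₀ z z ≤ M * ‖z‖ ^ 2)
    (k : ℕ) (B : X →ₗ[ℝ] X →ₗ[ℝ] ℝ) (z : X) (h : PIn B₀ B z σ k) :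
    ∃ q : (X →ₗ[ℝ] X →ₗ[ℝ] ℝ) × X, PIn B₀ q.1 q.2 σ (k+1) ∧ RIn M σ k B q.1 z q.2 := by
  obtain ⟨hsymm, hlow, hupI, hznorm, hzmin⟩ := h
  have hx0 : (0:ℝ) < (1/4 : ℝ) ^ k := by positivity
  have hx1 : (1/4 : ℝ) ^ k ≤ 1 := pow_le_one₀ (by norm_num) (by norm_num)
  have hB₀pos : ∀ w : X, 0 ≤ B₀ w w := fun w => le_trans (by positivity) (hlow₀ w)
  have hposB : ∀ w : X, 0 ≤ B w w := fun w => le_trans (by positivity) (hlow w)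
  have hup2 : ∀ w : X, B w w ≤ 2 * M * ‖w‖ ^ 2 := by
    intro w
    have h1 := hupI w
    have h2 := hup₀ w
    have h3 := hB₀pos w
    nlinarith
  have hcs := bil_cs B hsymm hposB
  have hcsabs := bil_cs_abs B hsymm hposB
  -- the normalized direction
  have hBzz1 : 1 ≤ B z z := by
    have := hlow z
    rw [hznorm] at this; linarith
  set s : ℝ := Real.sqrt (B z z) with hs
  have hs2 : s ^ 2 = B z z := Real.sq_sqrt (by linarith)
  have hspos : 0 < s := Real.sqrt_pos.mpr (by linarith)
  set zh : X := s⁻¹ • z with hzh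
  have hzhzh : B zh zh = 1 := by
    rw [hzh]
    simp only [map_smul, LinearMap.smul_apply, smul_eq_mul]
    rw [← hs2]
    field_simp
  have hBzzh : B z zh = s := by
    rw [hzh]
    simp only [map_smul, smul_eq_mul]
    rw [← hs2]
    field_simp
  set t : ℝ := (1/16) * (1/4) ^ k with ht
  have ht0 : 0 < t := by positivity
  -- the pinched form
  obtain ⟨D, hDapp⟩ : ∃ D : X →ₗ[ℝ] X →ₗ[ℝ] ℝ, ∀ u v, D u v = B u v - B u zh * B v zh := by
    refine ⟨LinearMap.mk₂ ℝ (fun u v => B u v - B u zh * B v zh)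
      (fun u₁ u₂ v => by simp only [map_add, LinearMap.add_apply]; ring)
      (fun c u v => by simp only [map_smul, LinearMap.smul_apply, smul_eq_mul]; ring)
      (fun u v₁ v₂ => by simp only [map_add, LinearMap.add_apply]; ring)
      (fun c u v => by simp only [map_smul, LinearMap.smul_apply, smul_eq_mul]; ring),
      fun u v => ?_⟩
    simp only [LinearMap.mk₂_apply]
  have hD0 : ∀ w, 0 ≤ D w w := by
    intro w
    rw [hDapp]
    have := hcs w zh
    rw [hzhzh] at this
    nlinarith
  have hDle : ∀ w, D w w ≤ B w w := by
    intro w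
    rw [hDapp]
    nlinarith [sq_nonneg (B w zh)]
  obtain ⟨B', hB'app0⟩ : ∃ B' : X →ₗ[ℝ] X →ₗ[ℝ] ℝ, ∀ u v, B' u v = B u v + t * D u v := by
    refine ⟨B + t • D, fun u v => ?_⟩
    simp [LinearMap.add_apply, LinearMap.smul_apply, smul_eq_mul]
  have hB'app : ∀ u v, B' u v = B u v + t * (B u v - B u zh * B v zh) := by
    intro u v
    rw [hB'app0, hDapp]
  have hB'symm : ∀ u v, B' u v = B' v u := by
    intro u v
    rw [hB'app0, hB'app0, hDapp, hDapp, hsymm u v]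
    ring
  have hB'ge : ∀ w, B w w ≤ B' w w := by
    intro w
    rw [hB'app0]
    nlinarith [hD0 w]
  have hB'low : ∀ w, ‖w‖ ^ 2 ≤ B' w w := fun w => le_trans (hlow w) (hB'ge w)
  have hB'le : ∀ w, B' w w ≤ (1 + t) * B w w := by
    intro w
    rw [hB'app0]
    nlinarith [hDle w, hD0 w]
  have hB'up : ∀ w, B' w w ≤ (2 - (1/2) * (1/4) ^ (k+1)) * (B₀ w w) := by
    intro w
    have h1 := hB'le w
    have h2 := hupI w
    have h3 := hB₀pos w
    have h4 := hposB w
    have hpow : (1/4 : ℝ) ^ (k+1) = (1/4) * (1/4) ^ k := by ring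
    rw [hpow]
    nlinarith [mul_pos hx0 hx0]
  have hB'bd : ∀ w, B' w w ≤ B w w + t * (2 * M * ‖w‖ ^ 2) := by
    intro w
    have h1 := hDle w
    have h2 := hup2 w
    rw [hB'app0]
    nlinarith [hD0 w]
  have hB'near : ∀ u v, |B' u v - B u v| ≤ t * (4 * M * ‖u‖ * ‖v‖) := by
    intro u v
    rw [hB'app0]
    have e : B u v + t * D u v - B u v = t * D u v := by ring
    rw [e, abs_mul, abs_of_pos ht0]
    apply mul_le_mul_of_nonneg_left _ (le_of_lt ht0)
    rw [hDapp]
    have h1 : |B u v - B u zh * B v zh| ≤ |B u v| + |B u zh| * |B v zh| := by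
      calc |B u v - B u zh * B v zh| ≤ |B u v| + |B u zh * B v zh| := abs_sub _ _
        _ = |B u v| + |B u zh| * |B v zh| := by rw [abs_mul]
    have h2 := hcsabs u v
    have h3 := hcsabs u zh
    have h4 := hcsabs v zh
    rw [hzhzh, Real.sqrt_one, mul_one] at h3 h4
    have hsu : Real.sqrt (B u u) ≤ Real.sqrt (2 * M) * ‖u‖ := by
      have : B u u ≤ (Real.sqrt (2 * M) * ‖u‖) ^ 2 := by
        rw [mul_pow, Real.sq_sqrt (by positivity)]
        exact hup2 u
      have := Real.sqrt_le_sqrt this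
      rwa [Real.sqrt_sq (by positivity)] at this
    have hsv : Real.sqrt (B v v) ≤ Real.sqrt (2 * M) * ‖v‖ := by
      have : B v v ≤ (Real.sqrt (2 * M) * ‖v‖) ^ 2 := by
        rw [mul_pow, Real.sq_sqrt (by positivity)]
        exact hup2 v
      have := Real.sqrt_le_sqrt this
      rwa [Real.sqrt_sq (by positivity)] at this
    have hprod : Real.sqrt (B u u) * Real.sqrt (B v v) ≤ 2 * M * ‖u‖ * ‖v‖ := by
      have := mul_le_mul hsu hsv (Real.sqrt_nonneg _) (by positivity)
      calc Real.sqrt (B u u) * Real.sqrt (B v v)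
          ≤ (Real.sqrt (2*M) * ‖u‖) * (Real.sqrt (2*M) * ‖v‖) := this
        _ = (Real.sqrt (2*M) * Real.sqrt (2*M)) * (‖u‖ * ‖v‖) := by ring
        _ = 2 * M * ‖u‖ * ‖v‖ := by
            rw [Real.mul_self_sqrt (by positivity : (0:ℝ) ≤ 2*M)]
            ring
    calc |B u v - B u zh * B v zh| ≤ |B u v| + |B u zh| * |B v zh| := h1
      _ ≤ Real.sqrt (B u u) * Real.sqrt (B v v) + Real.sqrt (B u u) * Real.sqrt (B v v) := by
          have := mul_le_mul h3 h4 (abs_nonneg _) (Real.sqrt_nonneg _)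
          linarith
      _ ≤ 2 * M * ‖u‖ * ‖v‖ + 2 * M * ‖u‖ * ‖v‖ := by linarith
      _ = 4 * M * ‖u‖ * ‖v‖ := by ring
  -- choose an approximate minimizer of B' on the unit sphere
  set SS : Set ℝ := {r : ℝ | ∃ w : X, ‖w‖ = 1 ∧ B' w w = r} with hSS
  have hSSne : SS.Nonempty := by
    obtain ⟨w, hw⟩ := exists_norm_one X
    exact ⟨B' w w, w, hw, rfl⟩
  have hSSbdd : BddBelow SS := by
    refine ⟨1, ?_⟩
    rintro r ⟨w, hw, rfl⟩
    have := hB'low w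
    rw [hw] at this; simpa using this
  obtain ⟨r, ⟨z'', hz''norm, hz''eq⟩, hr⟩ := Real.lt_sInf_add_pos hSSne
    (show (0:ℝ) < σ * (1/16) ^ (k+1) by positivity)
  have hzmin'' : ∀ w, ‖w‖ = 1 → B' z'' z'' ≤ B' w w + σ * (1/16) ^ (k+1) := by
    intro w hw
    have hle : sInf SS ≤ B' w w := csInf_le hSSbdd ⟨w, hw, rfl⟩
    rw [hz''eq]
    linarith
  -- fix the sign
  obtain ⟨z', hz'norm, hzmin', hpz'⟩ :
      ∃ z' : X, ‖z'‖ = 1 ∧ (∀ w, ‖w‖ = 1 → B' z' z' ≤ B' w w + σ * (1/16) ^ (k+1)) ∧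
        0 ≤ B z' zh := by
    rcases le_or_gt 0 (B z'' zh) with hp | hp
    · exact ⟨z'', hz''norm, hzmin'', hp⟩
    · refine ⟨-z'', by simpa using hz''norm, ?_, ?_⟩
      · intro w hw
        have e : B' (-z'') (-z'') = B' z'' z'' := by simp
        rw [e]
        exact hzmin'' w hw
      · have e : B (-z'') zh = -(B z'' zh) := by simp
        rw [e]
        linarith
  refine ⟨(B', z'), ⟨hB'symm, hB'low, hB'up, hz'norm, hzmin'⟩, hB'ge, hB'bd, hB'near, ?_⟩
  -- distance estimate
  set p : ℝ := B z' zh with hpdef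
  have hDzz : D z z = 0 := by
    rw [hDapp, hBzzh, ← hs2]; ring
  have hB'zz : B' z z = B z z := by rw [hB'app0, hDzz]; ring
  have h1 : B z z ≤ B z' z' + σ * (1/16) ^ k := hzmin z' hz'norm
  have h2 : B' z' z' ≤ B z z + σ * (1/16) ^ (k+1) := by
    have := hzmin' z hznorm
    rwa [hB'zz] at this
  have hDz'z' : D z' z' = B z' z' - p * p := by rw [hDapp, hpdef]
  have hDz'le : D z' z' ≤ 17 * σ * (1/4) ^ k := by
    have h4 : t * D z' z' ≤ σ * (1/16) ^ k + σ * (1/16) ^ (k+1) := by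
      have e := hB'app0 z' z'
      have e2 := hDz'z'
      linarith [h1, h2]
    have h5 : σ * (1/16) ^ k + σ * (1/16) ^ (k+1) = t * (17 * σ * (1/4) ^ k) := by
      rw [ht, pow_succ, pow16_eq k]
      ring
    rw [h5] at h4
    exact le_of_mul_le_mul_left h4 ht0
  have hp0 : 0 ≤ p := by rw [hpdef]; exact hpz'
  set w : X := z' - p • zh with hwdef
  have hBww : B w w = D z' z' := by
    rw [hwdef]
    simp only [map_sub, map_smul, LinearMap.sub_apply, LinearMap.smul_apply, smul_eq_mul]
    rw [hsymm zh z', hzhzh, ← hpdef, hDz'z']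
    ring
  have hw2 : ‖w‖ ^ 2 ≤ 17 * σ * (1/4) ^ k := by
    calc ‖w‖ ^ 2 ≤ B w w := hlow w
      _ = D z' z' := hBww
      _ ≤ 17 * σ * (1/4) ^ k := hDz'le
  have hwnorm : ‖w‖ ≤ Real.sqrt (17 * σ) * (1/2) ^ k := by
    have hrhs : (Real.sqrt (17 * σ) * (1/2 : ℝ) ^ k) ^ 2 = 17 * σ * (1/4) ^ k := by
      rw [mul_pow, Real.sq_sqrt (by positivity), pow4_eq]
      ring
    have h6 : ‖w‖ ^ 2 ≤ (Real.sqrt (17 * σ) * (1/2 : ℝ) ^ k) ^ 2 := by rw [hrhs]; exact hw2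
    have h7 := Real.sqrt_le_sqrt h6
    rwa [Real.sqrt_sq (norm_nonneg w), Real.sqrt_sq (by positivity)] at h7
  set c₁ : ℝ := p * s⁻¹ with hc₁def
  have hc₁0 : 0 ≤ c₁ := by
    rw [hc₁def]
    exact mul_nonneg hp0 (by positivity)
  have hzeq : c₁ • z = p • zh := by
    rw [hc₁def, hzh, smul_smul]
  have hwz : z' - c₁ • z = w := by rw [hzeq, hwdef]
  have habs1 : |1 - c₁| ≤ ‖w‖ := by
    have h12 := abs_norm_sub_norm_le z' (c₁ • z)
    rw [hwz] at h12
    rwa [hz'norm, norm_smul, Real.norm_eq_abs, abs_of_nonneg hc₁0, hznorm, mul_one] at h12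
  have e : z' - z = (c₁ - 1) • z + w := by
    rw [← hwz, sub_smul, one_smul]
    abel
  calc ‖z' - z‖ = ‖(c₁ - 1) • z + w‖ := by rw [e]
    _ ≤ ‖(c₁ - 1) • z‖ + ‖w‖ := norm_add_le _ _
    _ = |c₁ - 1| + ‖w‖ := by rw [norm_smul, Real.norm_eq_abs, hznorm, mul_one]
    _ ≤ ‖w‖ + ‖w‖ := by rw [abs_sub_comm]; linarith [habs1]
    _ ≤ 2 * (Real.sqrt (17 * σ) * (1/2) ^ k) := by linarith [hwnorm]
    _ ≤ 10 * Real.sqrt σ * (1/2) ^ k := by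
        have h8 : Real.sqrt (17 * σ) = Real.sqrt 17 * Real.sqrt σ := Real.sqrt_mul (by norm_num) σ
        have h9 := sqrt17_le
        have h10 : (0:ℝ) ≤ (1/2 : ℝ) ^ k := by positivity
        have h11 : (0:ℝ) ≤ Real.sqrt σ := Real.sqrt_nonneg σ
        have h13 : (0:ℝ) ≤ Real.sqrt 17 := Real.sqrt_nonneg 17
        rw [h8]
        nlinarith [mul_le_mul_of_nonneg_right (mul_le_mul_of_nonneg_right h9 h11) h10]

noncomputable def innerSeq [Nontrivial X] (B₀ : X →ₗ[ℝ] X →ₗ[ℝ] ℝ) (M σ : ℝ)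
    (hσ : 0 < σ) (hM : 0 < M)
    (hlow₀ : ∀ z : X, ‖z‖ ^ 2 ≤ B₀ z z) (hup₀ : ∀ z : X, B₀ z z ≤ M * ‖z‖ ^ 2)
    (z₀ : X) (h₀ : PIn B₀ B₀ z₀ σ 0) :
    ∀ k : ℕ, {q : (X →ₗ[ℝ] X →ₗ[ℝ] ℝ) × X // PIn B₀ q.1 q.2 σ k}
  | 0 => ⟨(B₀, z₀), h₀⟩
  | (k+1) =>
    ⟨(inner_step B₀ M σ hσ hM hlow₀ hup₀ k _ _
        (innerSeq B₀ M σ hσ hM hlow₀ hup₀ z₀ h₀ k).2).choose,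
      (inner_step B₀ M σ hσ hM hlow₀ hup₀ k _ _
        (innerSeq B₀ M σ hσ hM hlow₀ hup₀ z₀ h₀ k).2).choose_spec.1⟩

theorem innerSeq_rel [Nontrivial X] (B₀ : X →ₗ[ℝ] X →ₗ[ℝ] ℝ) (M σ : ℝ)
    (hσ : 0 < σ) (hM : 0 < M)
    (hlow₀ : ∀ z : X, ‖z‖ ^ 2 ≤ B₀ z z) (hup₀ : ∀ z : X, B₀ z z ≤ M * ‖z‖ ^ 2)
    (z₀ : X) (h₀ : PIn B₀ B₀ z₀ σ 0) (k : ℕ) :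
    RIn M σ k (innerSeq B₀ M σ hσ hM hlow₀ hup₀ z₀ h₀ k).1.1
      (innerSeq B₀ M σ hσ hM hlow₀ hup₀ z₀ h₀ (k+1)).1.1
      (innerSeq B₀ M σ hσ hM hlow₀ hup₀ z₀ h₀ k).1.2
      (innerSeq B₀ M σ hσ hM hlow₀ hup₀ z₀ h₀ (k+1)).1.2 := by
  have h := (inner_step B₀ M σ hσ hM hlow₀ hup₀ k _ _
      (innerSeq B₀ M σ hσ hM hlow₀ hup₀ z₀ h₀ k).2).choose_spec.2
  exact h

set_option maxHeartbeats 8000000 in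
theorem inner_engine [Nontrivial X] [CompleteSpace X] (B₀ : X →ₗ[ℝ] X →ₗ[ℝ] ℝ) (M σ : ℝ)
    (hσ : 0 < σ) (hM : 0 < M)
    (hsymm₀ : ∀ u v, B₀ u v = B₀ v u)
    (hlow₀ : ∀ z : X, ‖z‖ ^ 2 ≤ B₀ z z) (hup₀ : ∀ z : X, B₀ z z ≤ M * ‖z‖ ^ 2)
    (z₀ : X) (hz₀ : ‖z₀‖ = 1) (hmin₀ : ∀ w, ‖w‖ = 1 → B₀ z₀ z₀ ≤ B₀ w w + σ) :
    ∃ y : X, ‖y‖ = 1 ∧ ‖y - z₀‖ ≤ 20 * Real.sqrt σ ∧ InnerEllipsoidAt y := by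
  have hB₀pos : ∀ w : X, 0 ≤ B₀ w w := fun w => le_trans (by positivity) (hlow₀ w)
  have h₀ : PIn B₀ B₀ z₀ σ 0 := by
    refine ⟨hsymm₀, hlow₀, ?_, hz₀, ?_⟩
    · intro w
      have := hB₀pos w
      norm_num
      nlinarith
    · intro w hw
      have := hmin₀ w hw
      norm_num
      linarith
  set Q := innerSeq B₀ M σ hσ hM hlow₀ hup₀ z₀ h₀ with hQ
  set Bs : ℕ → (X →ₗ[ℝ] X →ₗ[ℝ] ℝ) := fun k => (Q k).1.1 with hBs
  set Z : ℕ → X := fun k => (Q k).1.2 with hZ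
  have hP : ∀ k, PIn B₀ (Bs k) (Z k) σ k := fun k => (Q k).2
  have hR : ∀ k, RIn M σ k (Bs k) (Bs (k+1)) (Z k) (Z (k+1)) :=
    fun k => innerSeq_rel B₀ M σ hσ hM hlow₀ hup₀ z₀ h₀ k
  have hBsymm : ∀ k u v, Bs k u v = Bs k v u := fun k => (hP k).1
  have hBlow : ∀ k w, ‖w‖ ^ 2 ≤ Bs k w w := fun k => (hP k).2.1
  have hZnorm : ∀ k, ‖Z k‖ = 1 := fun k => (hP k).2.2.2.1
  have hZmin : ∀ k w, ‖w‖ = 1 → Bs k (Z k) (Z k) ≤ Bs k w w + σ * (1/16) ^ k :=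
    fun k => (hP k).2.2.2.2
  have hmono : ∀ k w, Bs k w w ≤ Bs (k+1) w w := fun k => (hR k).1
  have hstep : ∀ k w, Bs (k+1) w w ≤ Bs k w w + (1/16) * (1/4) ^ k * (2 * M * ‖w‖ ^ 2) :=
    fun k => (hR k).2.1
  have hnear : ∀ k u v, |Bs (k+1) u v - Bs k u v| ≤ (1/16) * (1/4) ^ k * (4 * M * ‖u‖ * ‖v‖) :=
    fun k => (hR k).2.2.1
  have hdist : ∀ k, ‖Z (k+1) - Z k‖ ≤ 10 * Real.sqrt σ * (1/2) ^ k := fun k => (hR k).2.2.2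
  have hZ0 : Z 0 = z₀ := rfl
  have hBs0 : Bs 0 = B₀ := rfl
  clear_value Z Bs Q
  -- the limit point y
  have hZcauchy : CauchySeq Z := by
    apply cauchySeq_of_le_geometric (1/2) (10 * Real.sqrt σ) (by norm_num)
    intro n
    rw [dist_eq_norm, norm_sub_rev]
    exact hdist n
  obtain ⟨y, hy⟩ := cauchySeq_tendsto_of_complete hZcauchy
  have hynorm : ‖y‖ = 1 := by
    have h1 : Filter.Tendsto (fun k => ‖Z k‖) Filter.atTop (nhds ‖y‖) := hy.norm
    have h2 : Filter.Tendsto (fun k => ‖Z k‖) Filter.atTop (nhds 1) := by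
      refine Filter.Tendsto.congr (fun k => (hZnorm k).symm) tendsto_const_nhds
    exact (tendsto_nhds_unique h1 h2)
  have hydist : ‖y - z₀‖ ≤ 20 * Real.sqrt σ := by
    have h1 := dist_le_of_le_geometric_of_tendsto₀ (1/2) (10 * Real.sqrt σ) (by norm_num)
      (fun n => by rw [dist_eq_norm, norm_sub_rev]; exact hdist n) hy
    rw [dist_eq_norm, hZ0] at h1
    rw [norm_sub_rev]
    calc ‖z₀ - y‖ ≤ 10 * Real.sqrt σ / (1 - 1/2) := h1
      _ = 20 * Real.sqrt σ := by ring
  -- the limit bilinear form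
  have hBcauchy : ∀ u v : X, ∃ l : ℝ,
      Filter.Tendsto (fun k => Bs k u v) Filter.atTop (nhds l) := by
    intro u v
    apply cauchySeq_tendsto_of_complete
    apply cauchySeq_of_le_geometric (1/4) (M * ‖u‖ * ‖v‖ / 4) (by norm_num)
    intro n
    rw [Real.dist_eq, abs_sub_comm]
    calc |Bs (n+1) u v - Bs n u v| ≤ (1/16) * (1/4) ^ n * (4 * M * ‖u‖ * ‖v‖) := hnear n u v
      _ = M * ‖u‖ * ‖v‖ / 4 * (1/4) ^ n := by ring
  choose L hL using hBcauchy
  obtain ⟨Binf, hBinfapp⟩ : ∃ Binf : X →ₗ[ℝ] X →ₗ[ℝ] ℝ, ∀ u v, Binf u v = L u v := by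
    refine ⟨LinearMap.mk₂ ℝ L ?_ ?_ ?_ ?_, fun u v => rfl⟩
    · intro u₁ u₂ v
      refine tendsto_nhds_unique (hL (u₁ + u₂) v) ?_
      refine Filter.Tendsto.congr (fun k => ?_) ((hL u₁ v).add (hL u₂ v))
      simp [map_add, LinearMap.add_apply]
    · intro c u v
      refine tendsto_nhds_unique (hL (c • u) v) ?_
      refine Filter.Tendsto.congr (fun k => ?_) ((hL u v).const_mul c)
      simp [map_smul, LinearMap.smul_apply, smul_eq_mul]
    · intro u v₁ v₂
      refine tendsto_nhds_unique (hL u (v₁ + v₂)) ?_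
      refine Filter.Tendsto.congr (fun k => ?_) ((hL u v₁).add (hL u v₂))
      simp [map_add]
    · intro c u v
      refine tendsto_nhds_unique (hL u (c • v)) ?_
      refine Filter.Tendsto.congr (fun k => ?_) ((hL u v).const_mul c)
      simp [map_smul, smul_eq_mul]
  have hLtendsto : ∀ u v, Filter.Tendsto (fun k => Bs k u v) Filter.atTop (nhds (Binf u v)) := by
    intro u v
    rw [hBinfapp]
    exact hL u v
  have hBinfsymm : ∀ u v, Binf u v = Binf v u := by
    intro u v
    refine tendsto_nhds_unique (hLtendsto u v) ?_
    exact Filter.Tendsto.congr (fun k => hBsymm k v u) (hLtendsto v u)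
  have hBinfge : ∀ k w, Bs k w w ≤ Binf w w := by
    intro k w
    have hmono' : Monotone (fun m => Bs m w w) := monotone_nat_of_le_succ (fun m => hmono m w)
    exact ge_of_tendsto (hLtendsto w w) (Filter.eventually_atTop.mpr ⟨k, fun m hm => hmono' hm⟩)
  have hBinflow : ∀ w : X, ‖w‖ ^ 2 ≤ Binf w w := fun w => le_trans (hBlow 0 w) (hBinfge 0 w)
  have hBinfpos : ∀ w : X, 0 ≤ Binf w w := fun w => le_trans (by positivity) (hBinflow w)
  have htail : ∀ k (w : X), Binf w w ≤ Bs k w w + (1/12) * (1/4) ^ k * (2 * M * ‖w‖ ^ 2) := by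
    intro k w
    have claim : ∀ m, Bs (k + m) w w ≤
        Bs k w w + ((1/12) * (1/4) ^ k - (1/12) * (1/4) ^ (k + m)) * (2 * M * ‖w‖ ^ 2) := by
      intro m
      induction m with
      | zero => simp
      | succ m ih =>
        have h1 := hstep (k + m) w
        have e : k + (m + 1) = (k + m) + 1 := by ring
        rw [e]
        have hpow : (1/4 : ℝ) ^ ((k + m) + 1) = (1/4) * (1/4) ^ (k + m) := by ring
        have hE : (0:ℝ) ≤ 2 * M * ‖w‖ ^ 2 := by positivity
        have e2 : ((1/12) * (1/4 : ℝ) ^ k - (1/12) * (1/4) ^ ((k+m)+1)) =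
            ((1/12) * (1/4) ^ k - (1/12) * (1/4) ^ (k+m)) + (1/16) * (1/4) ^ (k+m) := by
          rw [hpow]; ring
        rw [e2]
        have := ih
        nlinarith
    refine le_of_tendsto (hLtendsto w w) (Filter.eventually_atTop.mpr ⟨k, fun m hm => ?_⟩)
    obtain ⟨m', rfl⟩ := Nat.exists_eq_add_of_le hm
    calc Bs (k + m') w w
        ≤ Bs k w w + ((1/12) * (1/4) ^ k - (1/12) * (1/4) ^ (k + m')) * (2 * M * ‖w‖ ^ 2) :=
          claim m'
      _ ≤ Bs k w w + (1/12) * (1/4) ^ k * (2 * M * ‖w‖ ^ 2) := by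
          have h1 : (0:ℝ) < (1/4 : ℝ) ^ (k + m') := by positivity
          have hE : (0:ℝ) ≤ 2 * M * ‖w‖ ^ 2 := by positivity
          nlinarith
  have hBinfup : ∀ w : X, Binf w w ≤ 2 * M * ‖w‖ ^ 2 := by
    intro w
    have h1 := htail 0 w
    have h2 := hup₀ w
    rw [hBs0] at h1
    have h3 : (0:ℝ) ≤ M * ‖w‖ ^ 2 := by positivity
    norm_num at h1
    nlinarith
  -- the minimum property at y
  have hBinfcross : ∀ u v : X, |Binf u v| ≤ 2 * M * ‖u‖ * ‖v‖ := by
    intro u v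
    have h := bil_cs_abs Binf hBinfsymm hBinfpos u v
    have hsu : Real.sqrt (Binf u u) ≤ Real.sqrt (2 * M) * ‖u‖ := by
      have h2 : Binf u u ≤ (Real.sqrt (2 * M) * ‖u‖) ^ 2 := by
        rw [mul_pow, Real.sq_sqrt (by positivity)]
        exact hBinfup u
      have := Real.sqrt_le_sqrt h2
      rwa [Real.sqrt_sq (by positivity)] at this
    have hsv : Real.sqrt (Binf v v) ≤ Real.sqrt (2 * M) * ‖v‖ := by
      have h2 : Binf v v ≤ (Real.sqrt (2 * M) * ‖v‖) ^ 2 := by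
        rw [mul_pow, Real.sq_sqrt (by positivity)]
        exact hBinfup v
      have := Real.sqrt_le_sqrt h2
      rwa [Real.sqrt_sq (by positivity)] at this
    calc |Binf u v| ≤ Real.sqrt (Binf u u) * Real.sqrt (Binf v v) := h
      _ ≤ (Real.sqrt (2*M) * ‖u‖) * (Real.sqrt (2*M) * ‖v‖) :=
          mul_le_mul hsu hsv (Real.sqrt_nonneg _) (by positivity)
      _ = (Real.sqrt (2*M) * Real.sqrt (2*M)) * (‖u‖ * ‖v‖) := by ring
      _ = 2 * M * ‖u‖ * ‖v‖ := by
          rw [Real.mul_self_sqrt (by positivity : (0:ℝ) ≤ 2*M)]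
          ring
  have hdiag : Filter.Tendsto (fun k => Binf (Z k) (Z k)) Filter.atTop (nhds (Binf y y)) := by
    rw [tendsto_iff_dist_tendsto_zero]
    apply squeeze_zero (fun k => dist_nonneg) (g := fun k => 4 * M * dist (Z k) y)
    · intro k
      have e : Binf (Z k) (Z k) - Binf y y = Binf (Z k - y) (Z k) + Binf y (Z k - y) := by
        simp only [map_sub, LinearMap.sub_apply]
        ring
      rw [Real.dist_eq, e]
      have h1 := hBinfcross (Z k - y) (Z k)
      have h2 := hBinfcross y (Z k - y)
      rw [hZnorm k] at h1
      rw [hynorm] at h2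
      have h3 := abs_add_le (Binf (Z k - y) (Z k)) (Binf y (Z k - y))
      rw [dist_eq_norm]
      nlinarith [norm_nonneg (Z k - y), abs_nonneg (Binf (Z k - y) (Z k)),
        abs_nonneg (Binf y (Z k - y))]
    · have h0 := (tendsto_iff_dist_tendsto_zero.mp hy).const_mul (4 * M)
      simpa using h0
  have hminy : ∀ w : X, ‖w‖ = 1 → Binf y y ≤ Binf w w := by
    intro w hw
    set err : ℕ → ℝ := fun k => σ * (1/16) ^ k + (1/12) * (1/4) ^ k * (2 * M) with herr
    have hbound : ∀ k, Binf (Z k) (Z k) ≤ Binf w w + err k := by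
      intro k
      have h1 := hZmin k w hw
      have h2 := htail k (Z k)
      have h3 := hBinfge k w
      rw [hZnorm k] at h2
      norm_num at h2
      rw [herr]
      linarith
    have herr0 : Filter.Tendsto err Filter.atTop (nhds 0) := by
      rw [herr]
      have h1 : Filter.Tendsto (fun k => σ * (1/16 : ℝ) ^ k) Filter.atTop (nhds 0) := by
        have := (tendsto_pow_atTop_nhds_zero_of_lt_one (by norm_num : (0:ℝ) ≤ 1/16)
          (by norm_num : (1/16 : ℝ) < 1)).const_mul σ
        simpa using this
      have h2 : Filter.Tendsto (fun k => (1/12) * (1/4 : ℝ) ^ k * (2 * M)) Filter.atTop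
          (nhds 0) := by
        have := (tendsto_pow_atTop_nhds_zero_of_lt_one (by norm_num : (0:ℝ) ≤ 1/4)
          (by norm_num : (1/4 : ℝ) < 1)).const_mul (1/12 : ℝ)
        have h3 := this.mul_const (2 * M)
        simpa using h3
      have := h1.add h2
      simpa using this
    have hrhs : Filter.Tendsto (fun k => Binf w w + err k) Filter.atTop (nhds (Binf w w)) := by
      have h4 := herr0.const_add (Binf w w)
      rw [add_zero] at h4
      exact h4
    exact le_of_tendsto_of_tendsto' hdiag hrhs hbound
  -- conclude
  set lam : ℝ := Binf y y with hlam
  have hlam1 : 1 ≤ lam := by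
    have := hBinflow y
    rw [hynorm] at this
    simpa using this
  have hlampos : 0 < lam := by linarith
  have hscaled : ∀ z : X, lam * ‖z‖ ^ 2 ≤ Binf z z := by
    intro z
    rcases eq_or_ne z 0 with rfl | hz
    · simp
    · have hz0 : 0 < ‖z‖ := norm_pos_iff.mpr hz
      set w : X := ‖z‖⁻¹ • z with hw
      have hwnorm : ‖w‖ = 1 := by
        rw [hw, norm_smul, Real.norm_eq_abs, abs_of_nonneg (by positivity)]
        field_simp
      have h1 := hminy w hwnorm
      have h2 : Binf w w = ‖z‖⁻¹ * (‖z‖⁻¹ * Binf z z) := by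
        rw [hw]
        simp [map_smul, LinearMap.smul_apply, smul_eq_mul]
      rw [h2] at h1
      have h3 : lam * ‖z‖ ^ 2 ≤ ‖z‖⁻¹ * (‖z‖⁻¹ * Binf z z) * ‖z‖ ^ 2 := by
        nlinarith
      calc lam * ‖z‖ ^ 2 ≤ ‖z‖⁻¹ * (‖z‖⁻¹ * Binf z z) * ‖z‖ ^ 2 := h3
        _ = (‖z‖⁻¹ * ‖z‖) * (‖z‖⁻¹ * ‖z‖) * Binf z z := by ring
        _ = Binf z z := by rw [inv_mul_cancel₀ (ne_of_gt hz0)]; ring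
  refine ⟨y, hynorm, hydist, ?_⟩
  -- build the final norm
  obtain ⟨Bfin, happ⟩ : ∃ Bfin : X →ₗ[ℝ] X →ₗ[ℝ] ℝ, ∀ u v : X, Bfin u v = lam⁻¹ * Binf u v :=
    ⟨lam⁻¹ • Binf, fun u v => by simp [LinearMap.smul_apply, smul_eq_mul]⟩
  have hsymm' : ∀ u v, Bfin u v = Bfin v u := by
    intro u v
    rw [happ, happ, hBinfsymm]
  have hlow' : ∀ z : X, 1 * ‖z‖ ^ 2 ≤ Bfin z z := by
    intro z
    rw [happ]
    have h1 := hscaled z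
    have h2 : lam⁻¹ * (lam * ‖z‖ ^ 2) ≤ lam⁻¹ * Binf z z :=
      mul_le_mul_of_nonneg_left h1 (by positivity)
    calc 1 * ‖z‖ ^ 2 = lam⁻¹ * (lam * ‖z‖ ^ 2) := by
          rw [← mul_assoc, inv_mul_cancel₀ (ne_of_gt hlampos)]
      _ ≤ lam⁻¹ * Binf z z := h2
  have hisE := isEuclideanNorm_sqrt Bfin hsymm' 1 one_pos hlow'
  refine ⟨fun z => Real.sqrt (Bfin z z), hisE, ⟨Real.sqrt (2 * M), by positivity, ?_⟩,
    ?_, ?_⟩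
  · intro z
    have h1 : Bfin z z ≤ 2 * M * ‖z‖ ^ 2 := by
      rw [happ]
      have h2 := hBinfup z
      have h3 := hBinfpos z
      have h4 : lam⁻¹ ≤ 1 := by
        have h5 : lam⁻¹ * lam = 1 := inv_mul_cancel₀ (ne_of_gt hlampos)
        nlinarith [inv_pos.mpr hlampos]
      nlinarith [inv_pos.mpr hlampos]
    calc Real.sqrt (Bfin z z) ≤ Real.sqrt (2 * M * ‖z‖ ^ 2) := Real.sqrt_le_sqrt h1
      _ = Real.sqrt (2 * M) * ‖z‖ := by
          rw [Real.sqrt_mul (by positivity), Real.sqrt_sq (norm_nonneg z)]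
  · intro z
    have h1 := hlow' z
    rw [one_mul] at h1
    have h2 := Real.sqrt_le_sqrt h1
    rwa [Real.sqrt_sq (norm_nonneg z)] at h2
  · show Real.sqrt (Bfin y y) = 1
    rw [happ, ← hlam, inv_mul_cancel₀ (ne_of_gt hlampos), Real.sqrt_one]

/-- Invariant of the outer-ellipsoid iteration. -/
def POut (B₀ B : X →ₗ[ℝ] X →ₗ[ℝ] ℝ) (z : X) (σ : ℝ) (k : ℕ) : Prop :=
  (∀ u v, B u v = B v u) ∧ (∀ w, ‖w‖ ^ 2 ≤ B w w) ∧
  (∀ w, B w w ≤ (2 - (1/2) * (1/4) ^ k) * (B₀ w w)) ∧ ‖z‖ = 1 ∧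
  (∀ w, ‖w‖ = 1 → B w w ≤ B z z + σ * (1/16) ^ k)

theorem sqrt18_le : Real.sqrt 18 ≤ 5 := by
  have h25 : Real.sqrt 25 = 5 := by
    rw [show (25 : ℝ) = 5 ^ 2 by norm_num, Real.sqrt_sq (by norm_num)]
  calc Real.sqrt 18 ≤ Real.sqrt 25 := Real.sqrt_le_sqrt (by norm_num)
    _ = 5 := h25

set_option maxHeartbeats 1000000 in
theorem outer_step [Nontrivial X] (B₀ : X →ₗ[ℝ] X →ₗ[ℝ] ℝ) (M σ : ℝ) (hσ : 0 < σ) (hM : 0 < M)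
    (hlow₀ : ∀ z : X, ‖z‖ ^ 2 ≤ B₀ z z) (hup₀ : ∀ z : X, B₀ z z ≤ M * ‖z‖ ^ 2)
    (k : ℕ) (B : X →ₗ[ℝ] X →ₗ[ℝ] ℝ) (z : X) (h : POut B₀ B z σ k) :
    ∃ q : (X →ₗ[ℝ] X →ₗ[ℝ] ℝ) × X, POut B₀ q.1 q.2 σ (k+1) ∧ RIn M σ k B q.1 z q.2 := by
  obtain ⟨hsymm, hlow, hupI, hznorm, hzmax⟩ := h
  have hx0 : (0:ℝ) < (1/4 : ℝ) ^ k := by positivity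
  have hx1 : (1/4 : ℝ) ^ k ≤ 1 := pow_le_one₀ (by norm_num) (by norm_num)
  have hB₀pos : ∀ w : X, 0 ≤ B₀ w w := fun w => le_trans (by positivity) (hlow₀ w)
  have hposB : ∀ w : X, 0 ≤ B w w := fun w => le_trans (by positivity) (hlow w)
  have hup2 : ∀ w : X, B w w ≤ 2 * M * ‖w‖ ^ 2 := by
    intro w
    have h1 := hupI w
    have h2 := hup₀ w
    have h3 := hB₀pos w
    nlinarith
  have hcs := bil_cs B hsymm hposB
  have hcsabs := bil_cs_abs B hsymm hposB
  have hBzz1 : 1 ≤ B z z := by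
    have := hlow z
    rw [hznorm] at this; linarith
  set s : ℝ := Real.sqrt (B z z) with hs
  have hs2 : s ^ 2 = B z z := Real.sq_sqrt (by linarith)
  have hspos : 0 < s := Real.sqrt_pos.mpr (by linarith)
  set zh : X := s⁻¹ • z with hzh
  have hzhzh : B zh zh = 1 := by
    rw [hzh]
    simp only [map_smul, LinearMap.smul_apply, smul_eq_mul]
    rw [← hs2]
    field_simp
  have hBzzh : B z zh = s := by
    rw [hzh]
    simp only [map_smul, smul_eq_mul]
    rw [← hs2]
    field_simp
  set t : ℝ := (1/16) * (1/4) ^ k with ht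
  have ht0 : 0 < t := by positivity
  obtain ⟨D, hDapp⟩ : ∃ D : X →ₗ[ℝ] X →ₗ[ℝ] ℝ, ∀ u v, D u v = B u zh * B v zh := by
    refine ⟨LinearMap.mk₂ ℝ (fun u v => B u zh * B v zh)
      (fun u₁ u₂ v => by simp only [map_add, LinearMap.add_apply]; ring)
      (fun c u v => by simp only [map_smul, LinearMap.smul_apply, smul_eq_mul]; ring)
      (fun u v₁ v₂ => by simp only [map_add, LinearMap.add_apply]; ring)
      (fun c u v => by simp only [map_smul, LinearMap.smul_apply, smul_eq_mul]; ring),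
      fun u v => ?_⟩
    simp only [LinearMap.mk₂_apply]
  have hD0 : ∀ w, 0 ≤ D w w := by
    intro w
    rw [hDapp]
    exact mul_self_nonneg _
  have hDle : ∀ w, D w w ≤ B w w := by
    intro w
    rw [hDapp]
    have := hcs w zh
    rw [hzhzh] at this
    nlinarith
  obtain ⟨B', hB'app0⟩ : ∃ B' : X →ₗ[ℝ] X →ₗ[ℝ] ℝ, ∀ u v, B' u v = B u v + t * D u v := by
    refine ⟨B + t • D, fun u v => ?_⟩
    simp [LinearMap.add_apply, LinearMap.smul_apply, smul_eq_mul]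
  have hB'symm : ∀ u v, B' u v = B' v u := by
    intro u v
    rw [hB'app0, hB'app0, hDapp, hDapp, hsymm u v]
    ring
  have hB'ge : ∀ w, B w w ≤ B' w w := by
    intro w
    rw [hB'app0]
    nlinarith [hD0 w]
  have hB'low : ∀ w, ‖w‖ ^ 2 ≤ B' w w := fun w => le_trans (hlow w) (hB'ge w)
  have hB'le : ∀ w, B' w w ≤ (1 + t) * B w w := by
    intro w
    rw [hB'app0]
    nlinarith [hDle w, hD0 w]
  have hB'up : ∀ w, B' w w ≤ (2 - (1/2) * (1/4) ^ (k+1)) * (B₀ w w) := by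
    intro w
    have h1 := hB'le w
    have h2 := hupI w
    have h3 := hB₀pos w
    have h4 := hposB w
    have hpow : (1/4 : ℝ) ^ (k+1) = (1/4) * (1/4) ^ k := by ring
    rw [hpow]
    nlinarith [mul_pos hx0 hx0]
  have hB'bd : ∀ w, B' w w ≤ B w w + t * (2 * M * ‖w‖ ^ 2) := by
    intro w
    have h1 := hDle w
    have h2 := hup2 w
    rw [hB'app0]
    nlinarith [hD0 w]
  have hB'near : ∀ u v, |B' u v - B u v| ≤ t * (4 * M * ‖u‖ * ‖v‖) := by
    intro u v
    rw [hB'app0]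
    have e : B u v + t * D u v - B u v = t * D u v := by ring
    rw [e, abs_mul, abs_of_pos ht0]
    apply mul_le_mul_of_nonneg_left _ (le_of_lt ht0)
    rw [hDapp]
    have h3 := hcsabs u zh
    have h4 := hcsabs v zh
    rw [hzhzh, Real.sqrt_one, mul_one] at h3 h4
    have hsu : Real.sqrt (B u u) ≤ Real.sqrt (2 * M) * ‖u‖ := by
      have h2 : B u u ≤ (Real.sqrt (2 * M) * ‖u‖) ^ 2 := by
        rw [mul_pow, Real.sq_sqrt (by positivity)]
        exact hup2 u
      have := Real.sqrt_le_sqrt h2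
      rwa [Real.sqrt_sq (by positivity)] at this
    have hsv : Real.sqrt (B v v) ≤ Real.sqrt (2 * M) * ‖v‖ := by
      have h2 : B v v ≤ (Real.sqrt (2 * M) * ‖v‖) ^ 2 := by
        rw [mul_pow, Real.sq_sqrt (by positivity)]
        exact hup2 v
      have := Real.sqrt_le_sqrt h2
      rwa [Real.sqrt_sq (by positivity)] at this
    calc |B u zh * B v zh| = |B u zh| * |B v zh| := abs_mul _ _
      _ ≤ Real.sqrt (B u u) * Real.sqrt (B v v) :=
          mul_le_mul h3 h4 (abs_nonneg _) (Real.sqrt_nonneg _)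
      _ ≤ (Real.sqrt (2*M) * ‖u‖) * (Real.sqrt (2*M) * ‖v‖) :=
          mul_le_mul hsu hsv (Real.sqrt_nonneg _) (by positivity)
      _ = (Real.sqrt (2*M) * Real.sqrt (2*M)) * (‖u‖ * ‖v‖) := by ring
      _ ≤ 4 * M * ‖u‖ * ‖v‖ := by
          rw [Real.mul_self_sqrt (by positivity : (0:ℝ) ≤ 2*M)]
          nlinarith [norm_nonneg u, norm_nonneg v, mul_nonneg (norm_nonneg u) (norm_nonneg v)]
  -- choose an approximate maximizer of B' on the unit sphere
  set SS : Set ℝ := {r : ℝ | ∃ w : X, ‖w‖ = 1 ∧ B' w w = r} with hSS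
  have hSSne : SS.Nonempty := by
    obtain ⟨w, hw⟩ := exists_norm_one X
    exact ⟨B' w w, w, hw, rfl⟩
  have hSSbdd : BddAbove SS := by
    refine ⟨(1 + t) * (2 * M), ?_⟩
    rintro r ⟨w, hw, rfl⟩
    have h1 := hB'le w
    have h2 := hup2 w
    rw [hw] at h2
    norm_num at h2
    nlinarith
  obtain ⟨r, ⟨z'', hz''norm, hz''eq⟩, hr⟩ := Real.add_neg_lt_sSup hSSne
    (neg_lt_zero.mpr (show (0:ℝ) < σ * (1/16) ^ (k+1) by positivity))
  have hzmax'' : ∀ w, ‖w‖ = 1 → B' w w ≤ B' z'' z'' + σ * (1/16) ^ (k+1) := by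
    intro w hw
    have hle : B' w w ≤ sSup SS := le_csSup hSSbdd ⟨w, hw, rfl⟩
    rw [← hz''eq] at hr
    linarith
  obtain ⟨z', hz'norm, hzmax', hpz'⟩ :
      ∃ z' : X, ‖z'‖ = 1 ∧ (∀ w, ‖w‖ = 1 → B' w w ≤ B' z' z' + σ * (1/16) ^ (k+1)) ∧
        0 ≤ B z' zh := by
    rcases le_or_gt 0 (B z'' zh) with hp | hp
    · exact ⟨z'', hz''norm, hzmax'', hp⟩
    · refine ⟨-z'', by simpa using hz''norm, ?_, ?_⟩
      · intro w hw
        have e : B' (-z'') (-z'') = B' z'' z'' := by simp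
        rw [e]
        exact hzmax'' w hw
      · have e : B (-z'') zh = -(B z'' zh) := by simp
        rw [e]
        linarith
  refine ⟨(B', z'), ⟨hB'symm, hB'low, hB'up, hz'norm, hzmax'⟩, hB'ge, hB'bd, hB'near, ?_⟩
  -- distance estimate
  set p : ℝ := B z' zh with hpdef
  have hp0 : 0 ≤ p := by rw [hpdef]; exact hpz'
  have hDzz : D z z = B z z := by
    rw [hDapp, hBzzh, ← hs2]; ring
  have hDz'z' : D z' z' = p * p := by rw [hDapp, hpdef]
  have h1 : B z' z' ≤ B z z + σ * (1/16) ^ k := hzmax z' hz'norm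
  have h2 : B' z z ≤ B' z' z' + σ * (1/16) ^ (k+1) := hzmax' z hznorm
  have hkey : B z z - p * p ≤ 17 * σ * (1/4) ^ k := by
    have e1 := hB'app0 z z
    have e2 := hB'app0 z' z'
    rw [hDzz] at e1
    rw [hDz'z'] at e2
    have h4 : t * (B z z - p * p) ≤ σ * (1/16) ^ k + σ * (1/16) ^ (k+1) := by
      linarith
    have h5 : σ * (1/16) ^ k + σ * (1/16) ^ (k+1) = t * (17 * σ * (1/4) ^ k) := by
      rw [ht, pow_succ, pow16_eq k]
      ring
    rw [h5] at h4
    exact le_of_mul_le_mul_left h4 ht0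
  have hDz'le : B z' z' - p * p ≤ 18 * σ * (1/4) ^ k := by
    have h6 : (1/16 : ℝ) ^ k ≤ (1/4 : ℝ) ^ k :=
      pow_le_pow_left₀ (by norm_num) (by norm_num) k
    nlinarith [hσ]
  set w : X := z' - p • zh with hwdef
  have hBww : B w w = B z' z' - p * p := by
    rw [hwdef]
    simp only [map_sub, map_smul, LinearMap.sub_apply, LinearMap.smul_apply, smul_eq_mul]
    rw [hsymm zh z', hzhzh, ← hpdef]
    ring
  have hw2 : ‖w‖ ^ 2 ≤ 18 * σ * (1/4) ^ k := by
    calc ‖w‖ ^ 2 ≤ B w w := hlow w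
      _ = B z' z' - p * p := hBww
      _ ≤ 18 * σ * (1/4) ^ k := hDz'le
  have hwnorm : ‖w‖ ≤ Real.sqrt (18 * σ) * (1/2) ^ k := by
    have hrhs : (Real.sqrt (18 * σ) * (1/2 : ℝ) ^ k) ^ 2 = 18 * σ * (1/4) ^ k := by
      rw [mul_pow, Real.sq_sqrt (by positivity), pow4_eq]
      ring
    have h6 : ‖w‖ ^ 2 ≤ (Real.sqrt (18 * σ) * (1/2 : ℝ) ^ k) ^ 2 := by rw [hrhs]; exact hw2
    have h7 := Real.sqrt_le_sqrt h6
    rwa [Real.sqrt_sq (norm_nonneg w), Real.sqrt_sq (by positivity)] at h7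
  set c₁ : ℝ := p * s⁻¹ with hc₁def
  have hc₁0 : 0 ≤ c₁ := by
    rw [hc₁def]
    exact mul_nonneg hp0 (by positivity)
  have hzeq : c₁ • z = p • zh := by
    rw [hc₁def, hzh, smul_smul]
  have hwz : z' - c₁ • z = w := by rw [hzeq, hwdef]
  have habs1 : |1 - c₁| ≤ ‖w‖ := by
    have h12 := abs_norm_sub_norm_le z' (c₁ • z)
    rw [hwz] at h12
    rwa [hz'norm, norm_smul, Real.norm_eq_abs, abs_of_nonneg hc₁0, hznorm, mul_one] at h12
  have e : z' - z = (c₁ - 1) • z + w := by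
    rw [← hwz, sub_smul, one_smul]
    abel
  calc ‖z' - z‖ = ‖(c₁ - 1) • z + w‖ := by rw [e]
    _ ≤ ‖(c₁ - 1) • z‖ + ‖w‖ := norm_add_le _ _
    _ = |c₁ - 1| + ‖w‖ := by rw [norm_smul, Real.norm_eq_abs, hznorm, mul_one]
    _ ≤ ‖w‖ + ‖w‖ := by rw [abs_sub_comm]; linarith [habs1]
    _ ≤ 2 * (Real.sqrt (18 * σ) * (1/2) ^ k) := by linarith [hwnorm]
    _ ≤ 10 * Real.sqrt σ * (1/2) ^ k := by
        have h8 : Real.sqrt (18 * σ) = Real.sqrt 18 * Real.sqrt σ := Real.sqrt_mul (by norm_num) σ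
        have h9 := sqrt18_le
        have h10 : (0:ℝ) ≤ (1/2 : ℝ) ^ k := by positivity
        have h11 : (0:ℝ) ≤ Real.sqrt σ := Real.sqrt_nonneg σ
        have h13 : (0:ℝ) ≤ Real.sqrt 18 := Real.sqrt_nonneg 18
        rw [h8]
        nlinarith [mul_le_mul_of_nonneg_right (mul_le_mul_of_nonneg_right h9 h11) h10]

noncomputable def outerSeq [Nontrivial X] (B₀ : X →ₗ[ℝ] X →ₗ[ℝ] ℝ) (M σ : ℝ)
    (hσ : 0 < σ) (hM : 0 < M)
    (hlow₀ : ∀ z : X, ‖z‖ ^ 2 ≤ B₀ z z) (hup₀ : ∀ z : X, B₀ z z ≤ M * ‖z‖ ^ 2)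
    (z₀ : X) (h₀ : POut B₀ B₀ z₀ σ 0) :
    ∀ k : ℕ, {q : (X →ₗ[ℝ] X →ₗ[ℝ] ℝ) × X // POut B₀ q.1 q.2 σ k}
  | 0 => ⟨(B₀, z₀), h₀⟩
  | (k+1) =>
    ⟨(outer_step B₀ M σ hσ hM hlow₀ hup₀ k _ _
        (outerSeq B₀ M σ hσ hM hlow₀ hup₀ z₀ h₀ k).2).choose,
      (outer_step B₀ M σ hσ hM hlow₀ hup₀ k _ _
        (outerSeq B₀ M σ hσ hM hlow₀ hup₀ z₀ h₀ k).2).choose_spec.1⟩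

theorem outerSeq_rel [Nontrivial X] (B₀ : X →ₗ[ℝ] X →ₗ[ℝ] ℝ) (M σ : ℝ)
    (hσ : 0 < σ) (hM : 0 < M)
    (hlow₀ : ∀ z : X, ‖z‖ ^ 2 ≤ B₀ z z) (hup₀ : ∀ z : X, B₀ z z ≤ M * ‖z‖ ^ 2)
    (z₀ : X) (h₀ : POut B₀ B₀ z₀ σ 0) (k : ℕ) :
    RIn M σ k (outerSeq B₀ M σ hσ hM hlow₀ hup₀ z₀ h₀ k).1.1
      (outerSeq B₀ M σ hσ hM hlow₀ hup₀ z₀ h₀ (k+1)).1.1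
      (outerSeq B₀ M σ hσ hM hlow₀ hup₀ z₀ h₀ k).1.2
      (outerSeq B₀ M σ hσ hM hlow₀ hup₀ z₀ h₀ (k+1)).1.2 := by
  have h := (outer_step B₀ M σ hσ hM hlow₀ hup₀ k _ _
      (outerSeq B₀ M σ hσ hM hlow₀ hup₀ z₀ h₀ k).2).choose_spec.2
  exact h

set_option maxHeartbeats 8000000 in
theorem outer_engine [Nontrivial X] [CompleteSpace X] (B₀ : X →ₗ[ℝ] X →ₗ[ℝ] ℝ) (M : ℝ)
    (hM : 0 < M)
    (hsymm₀ : ∀ u v, B₀ u v = B₀ v u)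
    (hlow₀ : ∀ z : X, ‖z‖ ^ 2 ≤ B₀ z z) (hup₀ : ∀ z : X, B₀ z z ≤ M * ‖z‖ ^ 2) :
    ∃ y : X, ‖y‖ = 1 ∧ OuterEllipsoidAt y := by
  have hB₀pos : ∀ w : X, 0 ≤ B₀ w w := fun w => le_trans (by positivity) (hlow₀ w)
  set σ : ℝ := 1 with hσdef
  have hσ : 0 < σ := one_pos
  -- choose an approximate maximizer of B₀ to start
  obtain ⟨z₀, hz₀, hmax₀⟩ : ∃ z₀ : X, ‖z₀‖ = 1 ∧ ∀ w, ‖w‖ = 1 → B₀ w w ≤ B₀ z₀ z₀ + σ := by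
    set SS : Set ℝ := {r : ℝ | ∃ w : X, ‖w‖ = 1 ∧ B₀ w w = r} with hSS
    have hSSne : SS.Nonempty := by
      obtain ⟨w, hw⟩ := exists_norm_one X
      exact ⟨B₀ w w, w, hw, rfl⟩
    have hSSbdd : BddAbove SS := by
      refine ⟨M, ?_⟩
      rintro r ⟨w, hw, rfl⟩
      have h2 := hup₀ w
      rw [hw] at h2
      norm_num at h2
      exact h2
    obtain ⟨r, ⟨z₀, hz₀norm, hz₀eq⟩, hr⟩ := Real.add_neg_lt_sSup hSSne
      (neg_lt_zero.mpr hσ)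
    refine ⟨z₀, hz₀norm, fun w hw => ?_⟩
    have hle : B₀ w w ≤ sSup SS := le_csSup hSSbdd ⟨w, hw, rfl⟩
    rw [← hz₀eq] at hr
    linarith
  have h₀ : POut B₀ B₀ z₀ σ 0 := by
    refine ⟨hsymm₀, hlow₀, ?_, hz₀, ?_⟩
    · intro w
      have := hB₀pos w
      norm_num
      nlinarith
    · intro w hw
      have := hmax₀ w hw
      norm_num
      linarith
  set Q := outerSeq B₀ M σ hσ hM hlow₀ hup₀ z₀ h₀ with hQ
  set Bs : ℕ → (X →ₗ[ℝ] X →ₗ[ℝ] ℝ) := fun k => (Q k).1.1 with hBs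
  set Z : ℕ → X := fun k => (Q k).1.2 with hZ
  have hP : ∀ k, POut B₀ (Bs k) (Z k) σ k := fun k => (Q k).2
  have hR : ∀ k, RIn M σ k (Bs k) (Bs (k+1)) (Z k) (Z (k+1)) :=
    fun k => outerSeq_rel B₀ M σ hσ hM hlow₀ hup₀ z₀ h₀ k
  have hBsymm : ∀ k u v, Bs k u v = Bs k v u := fun k => (hP k).1
  have hBlow : ∀ k w, ‖w‖ ^ 2 ≤ Bs k w w := fun k => (hP k).2.1
  have hZnorm : ∀ k, ‖Z k‖ = 1 := fun k => (hP k).2.2.2.1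
  have hZmax : ∀ k w, ‖w‖ = 1 → Bs k w w ≤ Bs k (Z k) (Z k) + σ * (1/16) ^ k :=
    fun k => (hP k).2.2.2.2
  have hmono : ∀ k w, Bs k w w ≤ Bs (k+1) w w := fun k => (hR k).1
  have hstep : ∀ k w, Bs (k+1) w w ≤ Bs k w w + (1/16) * (1/4) ^ k * (2 * M * ‖w‖ ^ 2) :=
    fun k => (hR k).2.1
  have hnear : ∀ k u v, |Bs (k+1) u v - Bs k u v| ≤ (1/16) * (1/4) ^ k * (4 * M * ‖u‖ * ‖v‖) :=
    fun k => (hR k).2.2.1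
  have hdist : ∀ k, ‖Z (k+1) - Z k‖ ≤ 10 * Real.sqrt σ * (1/2) ^ k := fun k => (hR k).2.2.2
  have hBs0 : Bs 0 = B₀ := rfl
  clear_value Z Bs Q
  -- the limit point y
  have hZcauchy : CauchySeq Z := by
    apply cauchySeq_of_le_geometric (1/2) (10 * Real.sqrt σ) (by norm_num)
    intro n
    rw [dist_eq_norm, norm_sub_rev]
    exact hdist n
  obtain ⟨y, hy⟩ := cauchySeq_tendsto_of_complete hZcauchy
  have hynorm : ‖y‖ = 1 := by
    have h1 : Filter.Tendsto (fun k => ‖Z k‖) Filter.atTop (nhds ‖y‖) := hy.norm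
    have h2 : Filter.Tendsto (fun k => ‖Z k‖) Filter.atTop (nhds 1) := by
      refine Filter.Tendsto.congr (fun k => (hZnorm k).symm) tendsto_const_nhds
    exact (tendsto_nhds_unique h1 h2)
  -- the limit bilinear form
  have hBcauchy : ∀ u v : X, ∃ l : ℝ,
      Filter.Tendsto (fun k => Bs k u v) Filter.atTop (nhds l) := by
    intro u v
    apply cauchySeq_tendsto_of_complete
    apply cauchySeq_of_le_geometric (1/4) (M * ‖u‖ * ‖v‖ / 4) (by norm_num)
    intro n
    rw [Real.dist_eq, abs_sub_comm]
    calc |Bs (n+1) u v - Bs n u v| ≤ (1/16) * (1/4) ^ n * (4 * M * ‖u‖ * ‖v‖) := hnear n u v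
      _ = M * ‖u‖ * ‖v‖ / 4 * (1/4) ^ n := by ring
  choose L hL using hBcauchy
  obtain ⟨Binf, hBinfapp⟩ : ∃ Binf : X →ₗ[ℝ] X →ₗ[ℝ] ℝ, ∀ u v, Binf u v = L u v := by
    refine ⟨LinearMap.mk₂ ℝ L ?_ ?_ ?_ ?_, fun u v => rfl⟩
    · intro u₁ u₂ v
      refine tendsto_nhds_unique (hL (u₁ + u₂) v) ?_
      refine Filter.Tendsto.congr (fun k => ?_) ((hL u₁ v).add (hL u₂ v))
      simp [map_add, LinearMap.add_apply]
    · intro c u v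
      refine tendsto_nhds_unique (hL (c • u) v) ?_
      refine Filter.Tendsto.congr (fun k => ?_) ((hL u v).const_mul c)
      simp [map_smul, LinearMap.smul_apply, smul_eq_mul]
    · intro u v₁ v₂
      refine tendsto_nhds_unique (hL u (v₁ + v₂)) ?_
      refine Filter.Tendsto.congr (fun k => ?_) ((hL u v₁).add (hL u v₂))
      simp [map_add]
    · intro c u v
      refine tendsto_nhds_unique (hL u (c • v)) ?_
      refine Filter.Tendsto.congr (fun k => ?_) ((hL u v).const_mul c)
      simp [map_smul, smul_eq_mul]
  have hLtendsto : ∀ u v, Filter.Tendsto (fun k => Bs k u v) Filter.atTop (nhds (Binf u v)) := by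
    intro u v
    rw [hBinfapp]
    exact hL u v
  have hBinfsymm : ∀ u v, Binf u v = Binf v u := by
    intro u v
    refine tendsto_nhds_unique (hLtendsto u v) ?_
    exact Filter.Tendsto.congr (fun k => hBsymm k v u) (hLtendsto v u)
  have hBinfge : ∀ k w, Bs k w w ≤ Binf w w := by
    intro k w
    have hmono' : Monotone (fun m => Bs m w w) := monotone_nat_of_le_succ (fun m => hmono m w)
    exact ge_of_tendsto (hLtendsto w w) (Filter.eventually_atTop.mpr ⟨k, fun m hm => hmono' hm⟩)
  have hBinflow : ∀ w : X, ‖w‖ ^ 2 ≤ Binf w w := fun w => le_trans (hBlow 0 w) (hBinfge 0 w)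
  have hBinfpos : ∀ w : X, 0 ≤ Binf w w := fun w => le_trans (by positivity) (hBinflow w)
  have htail : ∀ k (w : X), Binf w w ≤ Bs k w w + (1/12) * (1/4) ^ k * (2 * M * ‖w‖ ^ 2) := by
    intro k w
    have claim : ∀ m, Bs (k + m) w w ≤
        Bs k w w + ((1/12) * (1/4) ^ k - (1/12) * (1/4) ^ (k + m)) * (2 * M * ‖w‖ ^ 2) := by
      intro m
      induction m with
      | zero => simp
      | succ m ih =>
        have h1 := hstep (k + m) w
        have e : k + (m + 1) = (k + m) + 1 := by ring
        rw [e]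
        have hpow : (1/4 : ℝ) ^ ((k + m) + 1) = (1/4) * (1/4) ^ (k + m) := by ring
        have hE : (0:ℝ) ≤ 2 * M * ‖w‖ ^ 2 := by positivity
        have e2 : ((1/12) * (1/4 : ℝ) ^ k - (1/12) * (1/4) ^ ((k+m)+1)) =
            ((1/12) * (1/4) ^ k - (1/12) * (1/4) ^ (k+m)) + (1/16) * (1/4) ^ (k+m) := by
          rw [hpow]; ring
        rw [e2]
        nlinarith
    refine le_of_tendsto (hLtendsto w w) (Filter.eventually_atTop.mpr ⟨k, fun m hm => ?_⟩)
    obtain ⟨m', rfl⟩ := Nat.exists_eq_add_of_le hm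
    calc Bs (k + m') w w
        ≤ Bs k w w + ((1/12) * (1/4) ^ k - (1/12) * (1/4) ^ (k + m')) * (2 * M * ‖w‖ ^ 2) :=
          claim m'
      _ ≤ Bs k w w + (1/12) * (1/4) ^ k * (2 * M * ‖w‖ ^ 2) := by
          have h1 : (0:ℝ) < (1/4 : ℝ) ^ (k + m') := by positivity
          have hE : (0:ℝ) ≤ 2 * M * ‖w‖ ^ 2 := by positivity
          nlinarith
  have hBinfup : ∀ w : X, Binf w w ≤ 2 * M * ‖w‖ ^ 2 := by
    intro w
    have h1 := htail 0 w
    have h2 := hup₀ w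
    rw [hBs0] at h1
    have h3 : (0:ℝ) ≤ M * ‖w‖ ^ 2 := by positivity
    norm_num at h1
    nlinarith
  have hBinfcross : ∀ u v : X, |Binf u v| ≤ 2 * M * ‖u‖ * ‖v‖ := by
    intro u v
    have h := bil_cs_abs Binf hBinfsymm hBinfpos u v
    have hsu : Real.sqrt (Binf u u) ≤ Real.sqrt (2 * M) * ‖u‖ := by
      have h2 : Binf u u ≤ (Real.sqrt (2 * M) * ‖u‖) ^ 2 := by
        rw [mul_pow, Real.sq_sqrt (by positivity)]
        exact hBinfup u
      have := Real.sqrt_le_sqrt h2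
      rwa [Real.sqrt_sq (by positivity)] at this
    have hsv : Real.sqrt (Binf v v) ≤ Real.sqrt (2 * M) * ‖v‖ := by
      have h2 : Binf v v ≤ (Real.sqrt (2 * M) * ‖v‖) ^ 2 := by
        rw [mul_pow, Real.sq_sqrt (by positivity)]
        exact hBinfup v
      have := Real.sqrt_le_sqrt h2
      rwa [Real.sqrt_sq (by positivity)] at this
    calc |Binf u v| ≤ Real.sqrt (Binf u u) * Real.sqrt (Binf v v) := h
      _ ≤ (Real.sqrt (2*M) * ‖u‖) * (Real.sqrt (2*M) * ‖v‖) :=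
          mul_le_mul hsu hsv (Real.sqrt_nonneg _) (by positivity)
      _ = (Real.sqrt (2*M) * Real.sqrt (2*M)) * (‖u‖ * ‖v‖) := by ring
      _ = 2 * M * ‖u‖ * ‖v‖ := by
          rw [Real.mul_self_sqrt (by positivity : (0:ℝ) ≤ 2*M)]
          ring
  have hdiag : Filter.Tendsto (fun k => Binf (Z k) (Z k)) Filter.atTop (nhds (Binf y y)) := by
    rw [tendsto_iff_dist_tendsto_zero]
    apply squeeze_zero (fun k => dist_nonneg) (g := fun k => 4 * M * dist (Z k) y)
    · intro k
      have e : Binf (Z k) (Z k) - Binf y y = Binf (Z k - y) (Z k) + Binf y (Z k - y) := by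
        simp only [map_sub, LinearMap.sub_apply]
        ring
      rw [Real.dist_eq, e]
      have h1 := hBinfcross (Z k - y) (Z k)
      have h2 := hBinfcross y (Z k - y)
      rw [hZnorm k] at h1
      rw [hynorm] at h2
      have h3 := abs_add_le (Binf (Z k - y) (Z k)) (Binf y (Z k - y))
      rw [dist_eq_norm]
      nlinarith [norm_nonneg (Z k - y), abs_nonneg (Binf (Z k - y) (Z k)),
        abs_nonneg (Binf y (Z k - y))]
    · have h0 := (tendsto_iff_dist_tendsto_zero.mp hy).const_mul (4 * M)
      simpa using h0
  -- the maximum property at y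
  have hmaxy : ∀ w : X, ‖w‖ = 1 → Binf w w ≤ Binf y y := by
    intro w hw
    set err : ℕ → ℝ := fun k => σ * (1/16) ^ k + (1/12) * (1/4) ^ k * (2 * M) with herr
    have hbound : ∀ k, Binf w w ≤ Binf (Z k) (Z k) + err k := by
      intro k
      have h1 := hZmax k w hw
      have h2 := htail k w
      have h3 := hBinfge k (Z k)
      rw [hw] at h2
      norm_num at h2
      rw [herr]
      linarith
    have herr0 : Filter.Tendsto err Filter.atTop (nhds 0) := by
      rw [herr]
      have h1 : Filter.Tendsto (fun k => σ * (1/16 : ℝ) ^ k) Filter.atTop (nhds 0) := by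
        have := (tendsto_pow_atTop_nhds_zero_of_lt_one (by norm_num : (0:ℝ) ≤ 1/16)
          (by norm_num : (1/16 : ℝ) < 1)).const_mul σ
        simpa using this
      have h2 : Filter.Tendsto (fun k => (1/12) * (1/4 : ℝ) ^ k * (2 * M)) Filter.atTop
          (nhds 0) := by
        have := (tendsto_pow_atTop_nhds_zero_of_lt_one (by norm_num : (0:ℝ) ≤ 1/4)
          (by norm_num : (1/4 : ℝ) < 1)).const_mul (1/12 : ℝ)
        have h3 := this.mul_const (2 * M)
        simpa using h3
      have := h1.add h2
      simpa using this
    have hrhs : Filter.Tendsto (fun k => Binf (Z k) (Z k) + err k) Filter.atTop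
        (nhds (Binf y y)) := by
      have h4 := hdiag.add herr0
      rw [add_zero] at h4
      exact h4
    exact le_of_tendsto_of_tendsto' tendsto_const_nhds hrhs hbound
  -- conclude
  set lam : ℝ := Binf y y with hlam
  have hlam1 : 1 ≤ lam := by
    have := hBinflow y
    rw [hynorm] at this
    simpa using this
  have hlampos : 0 < lam := by linarith
  have hscaled : ∀ z : X, Binf z z ≤ lam * ‖z‖ ^ 2 := by
    intro z
    rcases eq_or_ne z 0 with rfl | hz
    · simp
    · have hz0 : 0 < ‖z‖ := norm_pos_iff.mpr hz
      set w : X := ‖z‖⁻¹ • z with hw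
      have hwnorm : ‖w‖ = 1 := by
        rw [hw, norm_smul, Real.norm_eq_abs, abs_of_nonneg (by positivity)]
        field_simp
      have h1 := hmaxy w hwnorm
      have h2 : Binf w w = ‖z‖⁻¹ * (‖z‖⁻¹ * Binf z z) := by
        rw [hw]
        simp [map_smul, LinearMap.smul_apply, smul_eq_mul]
      rw [h2] at h1
      have h3 : ‖z‖⁻¹ * (‖z‖⁻¹ * Binf z z) * ‖z‖ ^ 2 ≤ lam * ‖z‖ ^ 2 := by
        nlinarith
      calc Binf z z = (‖z‖⁻¹ * ‖z‖) * (‖z‖⁻¹ * ‖z‖) * Binf z z := by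
            rw [inv_mul_cancel₀ (ne_of_gt hz0)]; ring
        _ = ‖z‖⁻¹ * (‖z‖⁻¹ * Binf z z) * ‖z‖ ^ 2 := by ring
        _ ≤ lam * ‖z‖ ^ 2 := h3
  refine ⟨y, hynorm, ?_⟩
  obtain ⟨Bfin, happ⟩ : ∃ Bfin : X →ₗ[ℝ] X →ₗ[ℝ] ℝ, ∀ u v : X, Bfin u v = lam⁻¹ * Binf u v :=
    ⟨lam⁻¹ • Binf, fun u v => by simp [LinearMap.smul_apply, smul_eq_mul]⟩
  have hsymm' : ∀ u v, Bfin u v = Bfin v u := by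
    intro u v
    rw [happ, happ, hBinfsymm]
  have hlow' : ∀ z : X, lam⁻¹ * ‖z‖ ^ 2 ≤ Bfin z z := by
    intro z
    rw [happ]
    exact mul_le_mul_of_nonneg_left (hBinflow z) (by positivity)
  have hup' : ∀ z : X, Bfin z z ≤ ‖z‖ ^ 2 := by
    intro z
    rw [happ]
    have h1 := hscaled z
    have h2 : lam⁻¹ * Binf z z ≤ lam⁻¹ * (lam * ‖z‖ ^ 2) :=
      mul_le_mul_of_nonneg_left h1 (by positivity)
    calc lam⁻¹ * Binf z z ≤ lam⁻¹ * (lam * ‖z‖ ^ 2) := h2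
      _ = ‖z‖ ^ 2 := by
          rw [← mul_assoc, inv_mul_cancel₀ (ne_of_gt hlampos), one_mul]
  have hisE := isEuclideanNorm_sqrt Bfin hsymm' lam⁻¹ (by positivity) hlow'
  refine ⟨fun z => Real.sqrt (Bfin z z), hisE,
    ⟨Real.sqrt lam⁻¹, by positivity, ?_⟩, ?_, ?_⟩
  · intro z
    have h1 := hlow' z
    have h2 := Real.sqrt_le_sqrt h1
    rw [Real.sqrt_mul (by positivity), Real.sqrt_sq (norm_nonneg z)] at h2
    exact h2
  · intro z
    have h1 := hup' z
    have h2 := Real.sqrt_le_sqrt h1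
    rwa [Real.sqrt_sq (norm_nonneg z)] at h2
  · show Real.sqrt (Bfin y y) = 1
    rw [happ, ← hlam, inv_mul_cancel₀ (ne_of_gt hlampos), Real.sqrt_one]

end Engine

set_option maxHeartbeats 2000000 in
/-- in a renorming of a Hilbert space, points of the unit sphere admitting
inner ellipsoids are dense in the sphere, and some point of the sphere admits an outer
ellipsoid. -/
theorem renorming_dense_inner_ellipsoids
    {X : Type*} [NormedAddCommGroup X] [NormedSpace ℝ X] [CompleteSpace X] [Nontrivial X]
    (hren : IsHilbertRenorming X) :
    (∀ x : X, ‖x‖ = 1 → ∀ ε > (0 : ℝ), ∃ y : X, ‖y‖ = 1 ∧ ‖x - y‖ < ε ∧ InnerEllipsoidAt y) ∧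
    (∃ x : X, ‖x‖ = 1 ∧ OuterEllipsoidAt x) := by
  obtain ⟨n, hn, a, ha, b, hb, hab⟩ := hren
  obtain ⟨Bn, hBnsymm, hBndiag⟩ := exists_bilin_of_euclidean n hn
  have hnpos : ∀ z : X, 0 ≤ n z := hn.1
  have hna : ∀ z : X, a ^ 2 * ‖z‖ ^ 2 ≤ Bn z z := by
    intro z
    rw [hBndiag]
    nlinarith [(hab z).1, norm_nonneg z, mul_nonneg (le_of_lt ha) (norm_nonneg z)]
  have hnb : ∀ z : X, Bn z z ≤ b ^ 2 * ‖z‖ ^ 2 := by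
    intro z
    rw [hBndiag]
    nlinarith [(hab z).2, hnpos z]
  have hBnpos : ∀ z : X, 0 ≤ Bn z z := fun z => le_trans (by positivity) (hna z)
  have hcs := bil_cs Bn hBnsymm hBnpos
  constructor
  · -- inner ellipsoids, dense
    intro x hx ε hε
    have hnx_lb : a ≤ n x := by have := (hab x).1; rw [hx] at this; linarith
    have hnx_ub : n x ≤ b := by have := (hab x).2; rw [hx] at this; linarith
    set nx : ℝ := n x with hnx
    have hnxpos : 0 < nx := lt_of_lt_of_le ha hnx_lb
    have hBnxx : Bn x x = nx ^ 2 := hBndiag x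
    set xh : X := nx⁻¹ • x with hxh
    have hBnxxh : Bn x xh = nx := by
      rw [hxh]
      simp only [map_smul, smul_eq_mul]
      rw [hBnxx]
      field_simp
    have hBnxhxh : Bn xh xh = 1 := by
      rw [hxh]
      simp only [map_smul, LinearMap.smul_apply, smul_eq_mul]
      rw [hBnxx]
      field_simp
    set T : ℝ := 64 * (b ^ 2 + a ^ 2) / (a ^ 2 * ε ^ 2) with hT
    have hTpos : 0 < T := by
      rw [hT]; positivity
    set σ : ℝ := min 1 (ε ^ 2 / 6400) with hσdef
    have hσ : 0 < σ := by
      rw [hσdef]; positivity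
    have hσ1 : σ ≤ 1 := min_le_left _ _
    have hsqσ : 20 * Real.sqrt σ ≤ ε / 4 := by
      have h1 : σ ≤ ε ^ 2 / 6400 := min_le_right _ _
      have h2 := Real.sqrt_le_sqrt h1
      have h3 : Real.sqrt (ε ^ 2 / 6400) = ε / 80 := by
        rw [show ε ^ 2 / 6400 = (ε / 80) ^ 2 by ring, Real.sqrt_sq (by positivity)]
      rw [h3] at h2
      linarith
    -- the pinched starting form
    obtain ⟨D, hDapp⟩ : ∃ D : X →ₗ[ℝ] X →ₗ[ℝ] ℝ,
        ∀ u v, D u v = Bn u v - Bn u xh * Bn v xh := by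
      refine ⟨LinearMap.mk₂ ℝ (fun u v => Bn u v - Bn u xh * Bn v xh)
        (fun u₁ u₂ v => by simp only [map_add, LinearMap.add_apply]; ring)
        (fun c u v => by simp only [map_smul, LinearMap.smul_apply, smul_eq_mul]; ring)
        (fun u v₁ v₂ => by simp only [map_add, LinearMap.add_apply]; ring)
        (fun c u v => by simp only [map_smul, LinearMap.smul_apply, smul_eq_mul]; ring),
        fun u v => ?_⟩
      simp only [LinearMap.mk₂_apply]
    have hD0 : ∀ w, 0 ≤ D w w := by
      intro w
      rw [hDapp]
      have := hcs w xh
      rw [hBnxhxh] at this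
      nlinarith
    have hDle : ∀ w, D w w ≤ Bn w w := by
      intro w
      rw [hDapp]
      nlinarith [sq_nonneg (Bn w xh)]
    obtain ⟨B₀, happ⟩ : ∃ B₀ : X →ₗ[ℝ] X →ₗ[ℝ] ℝ,
        ∀ u v, B₀ u v = (a ^ 2)⁻¹ * (Bn u v + T * D u v) :=
      ⟨(a ^ 2)⁻¹ • (Bn + T • D), fun u v => by
        simp [LinearMap.add_apply, LinearMap.smul_apply, smul_eq_mul]
        ring⟩
    have hsymm₀ : ∀ u v, B₀ u v = B₀ v u := by
      intro u v
      rw [happ, happ, hBnsymm u v, hDapp, hDapp, hBnsymm u v]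
      ring
    have hlow₀ : ∀ z : X, ‖z‖ ^ 2 ≤ B₀ z z := by
      intro z
      rw [happ]
      have h1 := hna z
      have h2 := hD0 z
      have ha2 : (0:ℝ) < a ^ 2 := by positivity
      have h4 : 0 ≤ (a^2)⁻¹ * ((Bn z z - a^2*‖z‖^2) + T * D z z) := by
        apply mul_nonneg (by positivity)
        nlinarith
      have h5 : (a^2)⁻¹ * (Bn z z + T * D z z) =
          (a^2)⁻¹ * ((Bn z z - a^2*‖z‖^2) + T * D z z) + (a^2)⁻¹ * (a^2 * ‖z‖^2) := by
        ring
      have h6 : (a^2)⁻¹ * (a^2 * ‖z‖^2) = ‖z‖^2 := by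
        rw [← mul_assoc, inv_mul_cancel₀ (ne_of_gt ha2), one_mul]
      rw [h5, h6]
      linarith
    set M : ℝ := (1 + T) * (b ^ 2 / a ^ 2) with hM
    have hMpos : 0 < M := by rw [hM]; positivity
    have hup₀ : ∀ z : X, B₀ z z ≤ M * ‖z‖ ^ 2 := by
      intro z
      rw [happ, hM]
      have h1 := hnb z
      have h2 := hDle z
      have h3 := hD0 z
      have h4 := hBnpos z
      have ha2 : (0:ℝ) < a ^ 2 := by positivity
      have h5 : Bn z z + T * D z z ≤ (1 + T) * (b ^ 2 * ‖z‖ ^ 2) := by nlinarith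
      calc (a^2)⁻¹ * (Bn z z + T * D z z) ≤ (a^2)⁻¹ * ((1 + T) * (b ^ 2 * ‖z‖ ^ 2)) :=
            mul_le_mul_of_nonneg_left h5 (by positivity)
        _ = (1 + T) * (b ^ 2 / a ^ 2) * ‖z‖ ^ 2 := by
            field_simp
    -- choose a near-minimizer of B₀ on the sphere
    set SS : Set ℝ := {r : ℝ | ∃ w : X, ‖w‖ = 1 ∧ B₀ w w = r} with hSS
    have hSSne : SS.Nonempty := ⟨B₀ x x, x, hx, rfl⟩
    have hSSbdd : BddBelow SS := by
      refine ⟨1, ?_⟩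
      rintro r ⟨w, hw, rfl⟩
      have := hlow₀ w
      rw [hw] at this; simpa using this
    obtain ⟨r, ⟨z'', hz''norm, hz''eq⟩, hr⟩ := Real.lt_sInf_add_pos hSSne hσ
    have hmin'' : ∀ w, ‖w‖ = 1 → B₀ z'' z'' ≤ B₀ w w + σ := by
      intro w hw
      have hle : sInf SS ≤ B₀ w w := csInf_le hSSbdd ⟨w, hw, rfl⟩
      rw [hz''eq]
      linarith
    -- z'' is close to x or to -x
    have hB₀xx : B₀ x x = (a ^ 2)⁻¹ * nx ^ 2 := by
      rw [happ, hDapp, hBnxxh, hBnxx]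
      ring
    have hz''lt : B₀ z'' z'' < (a ^ 2)⁻¹ * nx ^ 2 + σ := by
      have hle : sInf SS ≤ B₀ x x := csInf_le hSSbdd ⟨x, hx, rfl⟩
      rw [hz''eq, ← hB₀xx]
      linarith
    have hDz'' : D z'' z'' ≤ a ^ 2 * ε ^ 2 / 64 := by
      have h1 : (a ^ 2)⁻¹ * (Bn z'' z'' + T * D z'' z'') < (a ^ 2)⁻¹ * nx ^ 2 + σ := by
        rw [← happ]; exact hz''lt
      have ha2 : (0:ℝ) < a ^ 2 := by positivity
      have h2 : Bn z'' z'' + T * D z'' z'' < nx ^ 2 + a ^ 2 * σ := by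
        have h7 := mul_lt_mul_of_pos_left h1 ha2
        have e1 : a^2 * ((a^2)⁻¹ * (Bn z'' z'' + T * D z'' z'')) =
            Bn z'' z'' + T * D z'' z'' := by
          rw [← mul_assoc, mul_inv_cancel₀ (ne_of_gt ha2), one_mul]
        have e2 : a^2 * ((a^2)⁻¹ * nx^2 + σ) = nx^2 + a^2*σ := by
          rw [mul_add, ← mul_assoc, mul_inv_cancel₀ (ne_of_gt ha2), one_mul]
        rw [e1, e2] at h7
        exact h7
      have h3 : T * D z'' z'' ≤ b ^ 2 + a ^ 2 := by
        have h4 := hBnpos z''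
        nlinarith
      have h5 : T * (a ^ 2 * ε ^ 2 / 64) = b ^ 2 + a ^ 2 := by
        rw [hT]
        field_simp
      rw [← h5] at h3
      exact le_of_mul_le_mul_left h3 hTpos
    set p : ℝ := Bn z'' xh with hpdef
    set w : X := z'' - p • xh with hwdef
    have hBnww : Bn w w = D z'' z'' := by
      rw [hwdef]
      simp only [map_sub, map_smul, LinearMap.sub_apply, LinearMap.smul_apply, smul_eq_mul]
      rw [hBnsymm xh z'', hBnxhxh, ← hpdef, hDapp, ← hpdef]
      ring
    have hw8 : ‖w‖ ≤ ε / 8 := by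
      have h1 : a ^ 2 * ‖w‖ ^ 2 ≤ a ^ 2 * ε ^ 2 / 64 := by
        calc a ^ 2 * ‖w‖ ^ 2 ≤ Bn w w := hna w
          _ = D z'' z'' := hBnww
          _ ≤ a ^ 2 * ε ^ 2 / 64 := hDz''
      have ha2 : (0:ℝ) < a ^ 2 := by positivity
      have h2 : ‖w‖ ^ 2 ≤ (ε / 8) ^ 2 := by nlinarith
      have h3 := Real.sqrt_le_sqrt h2
      rwa [Real.sqrt_sq (norm_nonneg w), Real.sqrt_sq (by positivity)] at h3
    set c₁ : ℝ := p * nx⁻¹ with hc₁def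
    have hzeq : c₁ • x = p • xh := by
      rw [hc₁def, hxh, smul_smul]
    have hwz : z'' - c₁ • x = w := by rw [hzeq, hwdef]
    have habs1 : abs (1 - abs c₁) ≤ ‖w‖ := by
      have h12 := abs_norm_sub_norm_le z'' (c₁ • x)
      rw [hwz] at h12
      rwa [hz''norm, norm_smul, Real.norm_eq_abs, hx, mul_one] at h12
    -- pick the sign
    obtain ⟨z₀, hz₀norm, hz₀min, hz₀close⟩ :
        ∃ z₀ : X, ‖z₀‖ = 1 ∧ (∀ w', ‖w'‖ = 1 → B₀ z₀ z₀ ≤ B₀ w' w' + σ) ∧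
          ‖x - z₀‖ ≤ ε / 4 := by
      rcases le_or_gt 0 c₁ with hc | hc
      · refine ⟨z'', hz''norm, hmin'', ?_⟩
        have e : x - z'' = -((c₁ - 1) • x + w) := by
          rw [← hwz, sub_smul, one_smul]
          abel
        rw [e, norm_neg]
        have h1 : |c₁ - 1| ≤ ‖w‖ := by
          have h2 : |c₁| = c₁ := abs_of_nonneg hc
          calc |c₁ - 1| = abs (1 - abs c₁) := by rw [h2, abs_sub_comm]
            _ ≤ ‖w‖ := habs1
        calc ‖(c₁ - 1) • x + w‖ ≤ ‖(c₁ - 1) • x‖ + ‖w‖ := norm_add_le _ _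
          _ = |c₁ - 1| + ‖w‖ := by rw [norm_smul, Real.norm_eq_abs, hx, mul_one]
          _ ≤ ‖w‖ + ‖w‖ := by linarith
          _ ≤ ε / 4 := by linarith [hw8]
      · refine ⟨-z'', by simpa using hz''norm, ?_, ?_⟩
        · intro w' hw'
          have e : B₀ (-z'') (-z'') = B₀ z'' z'' := by simp
          rw [e]
          exact hmin'' w' hw'
        · have e : x - -z'' = (c₁ + 1) • x + w := by
            rw [← hwz, add_smul, one_smul]
            abel
          rw [e]
          have h1 : |c₁ + 1| ≤ ‖w‖ := by
            have h2 : |c₁| = -c₁ := abs_of_neg hc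
            have h3 : abs (1 - abs c₁) = |c₁ + 1| := by
              rw [h2]
              congr 1
              ring
            rw [← h3]
            exact habs1
          calc ‖(c₁ + 1) • x + w‖ ≤ ‖(c₁ + 1) • x‖ + ‖w‖ := norm_add_le _ _
            _ = |c₁ + 1| + ‖w‖ := by rw [norm_smul, Real.norm_eq_abs, hx, mul_one]
            _ ≤ ‖w‖ + ‖w‖ := by linarith
            _ ≤ ε / 4 := by linarith [hw8]
    obtain ⟨y, hy1, hy2, hy3⟩ := inner_engine B₀ M σ hσ hMpos hsymm₀ hlow₀ hup₀
      z₀ hz₀norm hz₀min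
    refine ⟨y, hy1, ?_, hy3⟩
    calc ‖x - y‖ = ‖(x - z₀) + (z₀ - y)‖ := by rw [sub_add_sub_cancel]
      _ ≤ ‖x - z₀‖ + ‖z₀ - y‖ := norm_add_le _ _
      _ = ‖x - z₀‖ + ‖y - z₀‖ := by rw [norm_sub_rev (z₀)]
      _ ≤ ε / 4 + ε / 4 := add_le_add hz₀close (le_trans hy2 hsqσ)
      _ < ε := by linarith
  · -- outer ellipsoid
    obtain ⟨B₀, happ⟩ : ∃ B₀ : X →ₗ[ℝ] X →ₗ[ℝ] ℝ, ∀ u v, B₀ u v = (a ^ 2)⁻¹ * Bn u v :=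
      ⟨(a ^ 2)⁻¹ • Bn, fun u v => by simp [LinearMap.smul_apply, smul_eq_mul]⟩
    have hsymm₀ : ∀ u v, B₀ u v = B₀ v u := by
      intro u v
      rw [happ, happ, hBnsymm u v]
    have hlow₀ : ∀ z : X, ‖z‖ ^ 2 ≤ B₀ z z := by
      intro z
      rw [happ]
      have h1 := hna z
      have ha2 : (0:ℝ) < a ^ 2 := by positivity
      have h2 : (a ^ 2)⁻¹ * (a ^ 2 * ‖z‖ ^ 2) ≤ (a ^ 2)⁻¹ * Bn z z :=
        mul_le_mul_of_nonneg_left h1 (by positivity)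
      calc ‖z‖ ^ 2 = (a ^ 2)⁻¹ * (a ^ 2 * ‖z‖ ^ 2) := by
            rw [← mul_assoc, inv_mul_cancel₀ (ne_of_gt ha2), one_mul]
        _ ≤ (a ^ 2)⁻¹ * Bn z z := h2
    have hup₀ : ∀ z : X, B₀ z z ≤ (b ^ 2 / a ^ 2) * ‖z‖ ^ 2 := by
      intro z
      rw [happ]
      have h1 := hnb z
      have ha2 : (0:ℝ) < a ^ 2 := by positivity
      calc (a ^ 2)⁻¹ * Bn z z ≤ (a ^ 2)⁻¹ * (b ^ 2 * ‖z‖ ^ 2) :=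
            mul_le_mul_of_nonneg_left h1 (by positivity)
        _ = (b ^ 2 / a ^ 2) * ‖z‖ ^ 2 := by ring
    obtain ⟨y, hy1, hy2⟩ := outer_engine B₀ (b ^ 2 / a ^ 2) (by positivity) hsymm₀ hlow₀ hup₀
    exact ⟨y, hy1, hy2⟩
end

section
/- Let X be a Banach space whose norm ‖·‖ is equivalent to a norm induced by an inner product (a renorming of a Hilbert space), let φ(z) = ½‖z‖², and let x be a point of the unit sphere S. If φ is twice Fréchet differentiable at x, then x admits an inner ellipsoid. If moreover the second Fréchet differential d²_xφ is positive-definite, i.e., there is c > 0 with d²_xφ(h, h) ≥ c‖h‖² for all h ∈ X, then x admits an outer ellipsoid. -/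
open Real

/-- Second-order Taylor bound from pointwise second differentiability. -/
lemma taylor2 {X : Type*} [NormedAddCommGroup X] [NormedSpace ℝ X]
    {φ : X → ℝ} {φ' : X → X →L[ℝ] ℝ} {φ'' : X →L[ℝ] X →L[ℝ] ℝ} {x : X}
    (hφ' : ∀ᶠ z in nhds x, HasFDerivAt φ (φ' z) z)
    (hφ'' : HasFDerivAt φ' φ'' x) {ε : ℝ} (hε : 0 < ε) :
    ∃ δ > (0:ℝ), ∀ h : X, ‖h‖ ≤ δ →
      |φ (x + h) - φ x - φ' x h - φ'' h h / 2| ≤ ε * ‖h‖ ^ 2 := by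
  have h1 : ∀ᶠ y in nhds x, ‖φ' y - φ' x - φ'' (y - x)‖ ≤ ε * ‖y - x‖ := by
    have := hφ''.isLittleO.bound hε
    simpa using this
  obtain ⟨δ₁, hδ₁, hball₁⟩ := Metric.eventually_nhds_iff_ball.1 h1
  obtain ⟨δ₂, hδ₂, hball₂⟩ := Metric.eventually_nhds_iff_ball.1 hφ'
  refine ⟨min δ₁ δ₂ / 2, by positivity, fun h hh => ?_⟩
  have hlt : ‖h‖ < min δ₁ δ₂ := lt_of_le_of_lt hh (half_lt_self (lt_min hδ₁ hδ₂))
  have hmem : ∀ t : ℝ, t ∈ Set.Icc (0:ℝ) 1 → ‖t • h‖ < min δ₁ δ₂ := by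
    intro t ht
    refine lt_of_le_of_lt ?_ hlt
    rw [norm_smul]
    calc ‖t‖ * ‖h‖ ≤ 1 * ‖h‖ := by
          apply mul_le_mul_of_nonneg_right _ (norm_nonneg _)
          rw [Real.norm_eq_abs, abs_le]; exact ⟨by linarith [ht.1], ht.2⟩
      _ = ‖h‖ := one_mul _
  -- the auxiliary function
  set g : ℝ → ℝ := fun t => φ (x + t • h) - t * (φ' x h) - t ^ 2 / 2 * (φ'' h h) with hg
  have hderiv : ∀ t ∈ Set.Icc (0:ℝ) 1,
      HasDerivWithinAt g ((φ' (x + t • h)) h - φ' x h - t * φ'' h h) (Set.Icc 0 1) t := by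
    intro t ht
    have hmem2 : x + t • h ∈ Metric.ball x δ₂ := by
      simp only [Metric.mem_ball, dist_eq_norm, add_sub_cancel_left]
      exact lt_of_lt_of_le (hmem t ht) (min_le_right _ _)
    have hd1 : HasDerivAt (fun t : ℝ => x + t • h) h t := by
      simpa using ((hasDerivAt_id t).smul_const h).const_add x
    have hcomp : HasDerivAt (fun t : ℝ => φ (x + t • h)) ((φ' (x + t • h)) h) t := by
      have := (hball₂ _ hmem2).comp_hasDerivAt t hd1
      exact this
    have h2 : HasDerivAt (fun t : ℝ => t * (φ' x h)) (φ' x h) t := by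
      simpa using (hasDerivAt_id t).mul_const (φ' x h)
    have h3 : HasDerivAt (fun t : ℝ => t ^ 2 / 2 * (φ'' h h)) (t * φ'' h h) t := by
      have := ((hasDerivAt_pow 2 t).div_const 2).mul_const (φ'' h h)
      refine this.congr_deriv ?_
      ring
    exact ((hcomp.sub h2).sub h3).hasDerivWithinAt
  have hbound : ∀ t ∈ Set.Icc (0:ℝ) 1,
      ‖(φ' (x + t • h)) h - φ' x h - t * φ'' h h‖ ≤ ε * ‖h‖ ^ 2 := by
    intro t ht
    have hmem1 : x + t • h ∈ Metric.ball x δ₁ := by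
      simp only [Metric.mem_ball, dist_eq_norm, add_sub_cancel_left]
      exact lt_of_lt_of_le (hmem t ht) (min_le_left _ _)
    have := hball₁ _ hmem1
    simp only [add_sub_cancel_left] at this
    have key : (φ' (x + t • h)) h - φ' x h - t * φ'' h h
        = (φ' (x + t • h) - φ' x - φ'' (t • h)) h := by
      simp [ContinuousLinearMap.sub_apply, map_smul]
      try ring
    rw [key]
    calc ‖(φ' (x + t • h) - φ' x - φ'' (t • h)) h‖
        ≤ ‖φ' (x + t • h) - φ' x - φ'' (t • h)‖ * ‖h‖ :=
          (φ' (x + t • h) - φ' x - φ'' (t • h)).le_opNorm h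
      _ ≤ (ε * ‖t • h‖) * ‖h‖ := by
          apply mul_le_mul_of_nonneg_right this (norm_nonneg _)
      _ ≤ (ε * ‖h‖) * ‖h‖ := by
          apply mul_le_mul_of_nonneg_right _ (norm_nonneg _)
          apply mul_le_mul_of_nonneg_left _ (le_of_lt hε)
          rw [norm_smul, Real.norm_eq_abs]
          calc |t| * ‖h‖ ≤ 1 * ‖h‖ := by
                apply mul_le_mul_of_nonneg_right _ (norm_nonneg _)
                rw [abs_le]; exact ⟨by linarith [ht.1], ht.2⟩
            _ = ‖h‖ := one_mul _
      _ = ε * ‖h‖ ^ 2 := by ring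
  have h0 : g 0 = φ x := by simp [hg]
  have h1' : g 1 = φ (x + h) - φ' x h - φ'' h h / 2 := by
    simp [hg]
    ring
  have key := Convex.norm_image_sub_le_of_norm_hasDerivWithin_le hderiv hbound
    (convex_Icc 0 1) (Set.left_mem_Icc.2 zero_le_one) (Set.right_mem_Icc.2 zero_le_one)
  rw [h1', h0, Real.norm_eq_abs] at key
  have hone : ‖(1:ℝ) - 0‖ = 1 := by norm_num
  rw [hone, mul_one] at key
  calc |φ (x + h) - φ x - φ' x h - φ'' h h / 2|
      = |φ (x + h) - φ' x h - φ'' h h / 2 - φ x| := by ring_nf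
    _ ≤ ε * ‖h‖ ^ 2 := key

lemma minkowski3 (a₁ b₁ c₁ a₂ b₂ c₂ : ℝ) (h1 : 0 ≤ a₁) (h2 : 0 ≤ b₁) (h3 : 0 ≤ c₁)
    (h4 : 0 ≤ a₂) (h5 : 0 ≤ b₂) (h6 : 0 ≤ c₂) :
    Real.sqrt ((a₁+a₂)^2 + ((b₁+b₂)^2 + (c₁+c₂)^2)) ≤
      Real.sqrt (a₁^2 + (b₁^2 + c₁^2)) + Real.sqrt (a₂^2 + (b₂^2 + c₂^2)) := by
  set S₁ := a₁^2 + (b₁^2 + c₁^2) with hS₁def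
  set S₂ := a₂^2 + (b₂^2 + c₂^2) with hS₂def
  have hS₁ : 0 ≤ S₁ := by positivity
  have hS₂ : 0 ≤ S₂ := by positivity
  have hcs : a₁*a₂ + b₁*b₂ + c₁*c₂ ≤ Real.sqrt S₁ * Real.sqrt S₂ := by
    have h7 : (a₁*a₂ + b₁*b₂ + c₁*c₂)^2 ≤ S₁ * S₂ := by
      rw [hS₁def, hS₂def]
      nlinarith [sq_nonneg (a₁*b₂ - a₂*b₁), sq_nonneg (a₁*c₂ - a₂*c₁), sq_nonneg (b₁*c₂ - b₂*c₁)]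
    calc a₁*a₂ + b₁*b₂ + c₁*c₂ ≤ Real.sqrt ((a₁*a₂ + b₁*b₂ + c₁*c₂)^2) := by
          rw [Real.sqrt_sq_eq_abs]; exact le_abs_self _
      _ ≤ Real.sqrt (S₁ * S₂) := Real.sqrt_le_sqrt h7
      _ = Real.sqrt S₁ * Real.sqrt S₂ := Real.sqrt_mul hS₁ _
  have hmain : (a₁+a₂)^2 + ((b₁+b₂)^2 + (c₁+c₂)^2) ≤ (Real.sqrt S₁ + Real.sqrt S₂)^2 := by
    have e1 : Real.sqrt S₁ ^ 2 = S₁ := Real.sq_sqrt hS₁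
    have e2 : Real.sqrt S₂ ^ 2 = S₂ := Real.sq_sqrt hS₂
    have : S₁ + S₂ + 2*(a₁*a₂ + b₁*b₂ + c₁*c₂) ≤ S₁ + S₂ + 2*(Real.sqrt S₁ * Real.sqrt S₂) := by
      linarith
    calc (a₁+a₂)^2 + ((b₁+b₂)^2 + (c₁+c₂)^2)
        = S₁ + S₂ + 2*(a₁*a₂ + b₁*b₂ + c₁*c₂) := by rw [hS₁def, hS₂def]; ring
      _ ≤ S₁ + S₂ + 2*(Real.sqrt S₁ * Real.sqrt S₂) := this
      _ = (Real.sqrt S₁ + Real.sqrt S₂)^2 := by linear_combination -e1 - e2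
  calc Real.sqrt ((a₁+a₂)^2 + ((b₁+b₂)^2 + (c₁+c₂)^2))
      ≤ Real.sqrt ((Real.sqrt S₁ + Real.sqrt S₂)^2) := Real.sqrt_le_sqrt hmain
    _ = Real.sqrt S₁ + Real.sqrt S₂ := Real.sqrt_sq (by positivity)

lemma bilinCS {X : Type*} [NormedAddCommGroup X] [NormedSpace ℝ X]
    (B : X →L[ℝ] X →L[ℝ] ℝ) (hsymm : ∀ u v, B u v = B v u) (hpos : ∀ h, 0 ≤ B h h)
    (u v : X) : B u v ≤ Real.sqrt (B u u) * Real.sqrt (B v v) := by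
  have hquad : ∀ t : ℝ, 0 ≤ (B v v) * (t * t) + (2 * B u v) * t + B u u := by
    intro t
    have := hpos (u + t • v)
    have e : B (u + t • v) (u + t • v) = (B v v) * (t * t) + (2 * B u v) * t + B u u := by
      simp only [map_add, map_smul, ContinuousLinearMap.add_apply, ContinuousLinearMap.smul_apply,
        ContinuousLinearMap.map_smul, ContinuousLinearMap.map_add, smul_eq_mul]
      rw [hsymm v u]
      ring
    linarith [e ▸ this]
  have hdisc := discrim_le_zero hquad
  rw [discrim] at hdisc
  have h2 : (B u v)^2 ≤ (B u u) * (B v v) := by nlinarith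
  calc B u v ≤ |B u v| := le_abs_self _
    _ = Real.sqrt ((B u v)^2) := (Real.sqrt_sq_eq_abs _).symm
    _ ≤ Real.sqrt ((B u u) * (B v v)) := Real.sqrt_le_sqrt h2
    _ = _ := Real.sqrt_mul (hpos u) _

/-- Construction of a euclidean norm from `f, B, P, n₀` data. -/
lemma buildNorm {X : Type*} [NormedAddCommGroup X] [NormedSpace ℝ X]
    (f : X →L[ℝ] ℝ) (B : X →L[ℝ] X →L[ℝ] ℝ) (P : X →L[ℝ] X) (n₀ : X → ℝ)
    (hsymm : ∀ u v, B u v = B v u) (hpos : ∀ h, 0 ≤ B h h)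
    (hn₀pos : ∀ z, 0 ≤ n₀ z)
    (hn₀tri : ∀ u v, n₀ (u + v) ≤ n₀ u + n₀ v)
    (hn₀sm : ∀ (c : ℝ) (z : X), n₀ (c • z) = |c| * n₀ z)
    (hn₀par : ∀ u v, n₀ (u + v)^2 + n₀ (u - v)^2 = 2 * n₀ u ^ 2 + 2 * n₀ v ^ 2)
    (β γ : ℝ) (hβ : 0 ≤ β) (hγ : 0 ≤ γ)
    (m : ℝ) (hm : 0 < m)
    (hlow : ∀ z, m * ‖z‖^2 ≤ (f z)^2 + β * B (P z) (P z) + γ * (n₀ (P z))^2) :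
    IsEuclideanNorm (fun z => Real.sqrt ((f z)^2 + β * B (P z) (P z) + γ * (n₀ (P z))^2)) := by
  set q : X → ℝ := fun z => (f z)^2 + β * B (P z) (P z) + γ * (n₀ (P z))^2 with hq
  have hn₀0 : n₀ 0 = 0 := by
    have := hn₀sm 0 0; simpa using this
  have hqpos : ∀ z, 0 ≤ q z := by
    intro z
    have := hpos (P z)
    have h2 : 0 ≤ (n₀ (P z))^2 := sq_nonneg _
    have := sq_nonneg (f z)
    positivity
  refine ⟨fun z => Real.sqrt_nonneg _, ?_, ?_, ?_, ?_⟩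
  · -- definiteness
    intro z
    constructor
    · intro h
      have h1 : q z ≤ 0 := Real.sqrt_eq_zero'.1 h
      have h2 := hlow z
      have h3 : m * ‖z‖^2 ≤ 0 := le_trans h2 h1
      have h4 : ‖z‖^2 ≤ 0 := by
        by_contra hcon
        push_neg at hcon
        nlinarith
      have : ‖z‖ = 0 := by nlinarith [sq_nonneg ‖z‖, norm_nonneg z]
      exact norm_eq_zero.1 this
    · rintro rfl
      simp [hq, hn₀0, map_zero]
  · -- homogeneity
    intro c z
    have h1 : q (c • z) = c^2 * q z := by
      have hB : B (P (c • z)) (P (c • z)) = c^2 * B (P z) (P z) := by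
        rw [map_smul]
        simp only [ContinuousLinearMap.map_smul, ContinuousLinearMap.smul_apply, smul_eq_mul]
        ring
      have hf2 : f (c • z) = c * f z := by rw [map_smul]; rfl
      have hn : n₀ (P (c • z)) = |c| * n₀ (P z) := by rw [map_smul, hn₀sm]
      simp only [hq]
      rw [hB, hf2, hn]
      simp only [mul_pow, sq_abs]
      ring
    show Real.sqrt (q (c • z)) = |c| * Real.sqrt (q z)
    rw [h1, show c^2 = |c|^2 from (sq_abs c).symm, Real.sqrt_mul (sq_nonneg |c|),
      Real.sqrt_sq (abs_nonneg c)]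
  · -- triangle
    intro u v
    set a₁ := |f u| with ha₁
    set b₁ := Real.sqrt β * Real.sqrt (B (P u) (P u)) with hb₁
    set c₁ := Real.sqrt γ * n₀ (P u) with hc₁
    set a₂ := |f v| with ha₂
    set b₂ := Real.sqrt β * Real.sqrt (B (P v) (P v)) with hb₂
    set c₂ := Real.sqrt γ * n₀ (P v) with hc₂
    have hqu : q u = a₁^2 + (b₁^2 + c₁^2) := by
      simp only [hq, ha₁, hb₁, hc₁, mul_pow, sq_abs, Real.sq_sqrt hβ, Real.sq_sqrt hγ,
        Real.sq_sqrt (hpos (P u))]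
      ring
    have hqv : q v = a₂^2 + (b₂^2 + c₂^2) := by
      simp only [hq, ha₂, hb₂, hc₂, mul_pow, sq_abs, Real.sq_sqrt hβ, Real.sq_sqrt hγ,
        Real.sq_sqrt (hpos (P v))]
      ring
    have hstep : q (u + v) ≤ (a₁ + a₂)^2 + ((b₁ + b₂)^2 + (c₁ + c₂)^2) := by
      have t1 : (f (u + v))^2 ≤ (a₁ + a₂)^2 := by
        rw [← sq_abs]
        refine pow_le_pow_left₀ (abs_nonneg _) ?_ 2
        rw [map_add]
        exact abs_add_le _ _
      have t2 : β * B (P (u + v)) (P (u + v)) ≤ (b₁ + b₂)^2 := by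
        have hBsub : Real.sqrt (B (P u + P v) (P u + P v)) ≤
            Real.sqrt (B (P u) (P u)) + Real.sqrt (B (P v) (P v)) := by
          have hexp : B (P u + P v) (P u + P v) ≤
              (Real.sqrt (B (P u) (P u)) + Real.sqrt (B (P v) (P v)))^2 := by
            have hCS := bilinCS B hsymm hpos (P u) (P v)
            have e : B (P u + P v) (P u + P v)
                = B (P u) (P u) + 2 * B (P u) (P v) + B (P v) (P v) := by
              simp only [map_add, ContinuousLinearMap.add_apply]
              rw [hsymm (P v) (P u)]
              ring
            have e1 : Real.sqrt (B (P u) (P u)) ^ 2 = B (P u) (P u) := Real.sq_sqrt (hpos _)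
            have e2 : Real.sqrt (B (P v) (P v)) ^ 2 = B (P v) (P v) := Real.sq_sqrt (hpos _)
            nlinarith
          calc Real.sqrt (B (P u + P v) (P u + P v))
              ≤ Real.sqrt ((Real.sqrt (B (P u) (P u)) + Real.sqrt (B (P v) (P v)))^2) :=
                Real.sqrt_le_sqrt hexp
            _ = _ := Real.sqrt_sq (by positivity)
        have hPadd : P (u + v) = P u + P v := map_add P u v
        rw [hPadd]
        have h1 : Real.sqrt (β * B (P u + P v) (P u + P v)) ≤ b₁ + b₂ := by
          rw [Real.sqrt_mul hβ]
          calc Real.sqrt β * Real.sqrt (B (P u + P v) (P u + P v))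
              ≤ Real.sqrt β * (Real.sqrt (B (P u) (P u)) + Real.sqrt (B (P v) (P v))) :=
                mul_le_mul_of_nonneg_left hBsub (Real.sqrt_nonneg _)
            _ = b₁ + b₂ := by rw [hb₁, hb₂]; ring
        have h2 : 0 ≤ β * B (P u + P v) (P u + P v) := mul_nonneg hβ (hpos _)
        calc β * B (P u + P v) (P u + P v)
            = Real.sqrt (β * B (P u + P v) (P u + P v))^2 := (Real.sq_sqrt h2).symm
          _ ≤ (b₁ + b₂)^2 := pow_le_pow_left₀ (Real.sqrt_nonneg _) h1 2
      have t3 : γ * (n₀ (P (u + v)))^2 ≤ (c₁ + c₂)^2 := by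
        have hPadd : P (u + v) = P u + P v := map_add P u v
        rw [hPadd]
        have h1 : Real.sqrt γ * n₀ (P u + P v) ≤ c₁ + c₂ := by
          calc Real.sqrt γ * n₀ (P u + P v) ≤ Real.sqrt γ * (n₀ (P u) + n₀ (P v)) :=
              mul_le_mul_of_nonneg_left (hn₀tri _ _) (Real.sqrt_nonneg _)
            _ = c₁ + c₂ := by rw [hc₁, hc₂]; ring
        have h2 : γ * (n₀ (P u + P v))^2 = (Real.sqrt γ * n₀ (P u + P v))^2 := by
          rw [mul_pow, Real.sq_sqrt hγ]
        rw [h2]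
        exact pow_le_pow_left₀ (mul_nonneg (Real.sqrt_nonneg _) (hn₀pos _)) h1 2
      simp only [hq]
      linarith
    calc Real.sqrt (q (u + v)) ≤ Real.sqrt ((a₁ + a₂)^2 + ((b₁ + b₂)^2 + (c₁ + c₂)^2)) :=
          Real.sqrt_le_sqrt hstep
      _ ≤ Real.sqrt (a₁^2 + (b₁^2 + c₁^2)) + Real.sqrt (a₂^2 + (b₂^2 + c₂^2)) :=
          minkowski3 _ _ _ _ _ _ (abs_nonneg _)
            (by rw [hb₁]; positivity) (by rw [hc₁]; exact mul_nonneg (Real.sqrt_nonneg _) (hn₀pos _))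
            (abs_nonneg _)
            (by rw [hb₂]; positivity) (by rw [hc₂]; exact mul_nonneg (Real.sqrt_nonneg _) (hn₀pos _))
      _ = Real.sqrt (q u) + Real.sqrt (q v) := by rw [hqu, hqv]
  · -- parallelogram
    intro u v
    have e : ∀ z, Real.sqrt (q z) ^ 2 = q z := fun z => Real.sq_sqrt (hqpos z)
    show Real.sqrt (q (u + v)) ^ 2 + Real.sqrt (q (u - v)) ^ 2 = 2 * Real.sqrt (q u) ^ 2 + 2 * Real.sqrt (q v) ^ 2
    simp only [e]
    have epar := hn₀par (P u) (P v)
    simp only [hq, map_add, map_sub, ContinuousLinearMap.add_apply, ContinuousLinearMap.sub_apply]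
    linear_combination γ * epar


lemma normConvexHalfSq {X : Type*} [NormedAddCommGroup X] [NormedSpace ℝ X]
    (p q : X) (l : ℝ) (h0 : 0 ≤ l) (h1 : l ≤ 1) :
    ‖(1 - l) • p + l • q‖ ^ 2 / 2 ≤ (1 - l) * (‖p‖ ^ 2 / 2) + l * (‖q‖ ^ 2 / 2) := by
  have hn : ‖(1 - l) • p + l • q‖ ≤ (1 - l) * ‖p‖ + l * ‖q‖ := by
    calc ‖(1 - l) • p + l • q‖ ≤ ‖(1 - l) • p‖ + ‖l • q‖ := norm_add_le _ _
      _ = (1 - l) * ‖p‖ + l * ‖q‖ := by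
          rw [norm_smul, norm_smul, Real.norm_eq_abs, Real.norm_eq_abs,
            abs_of_nonneg (by linarith), abs_of_nonneg h0]
  nlinarith [hn, norm_nonneg ((1 - l) • p + l • q), norm_nonneg p, norm_nonneg q,
    mul_nonneg (mul_nonneg h0 (sub_nonneg.2 h1)) (sq_nonneg (‖p‖ - ‖q‖))]

set_option maxHeartbeats 1600000000 in
/-- in a renorming of a Hilbert space, twice Fréchet differentiability of
`φ = ½‖·‖²` at a sphere point yields an inner ellipsoid there, and positive-definiteness
of the second differential yields an outer ellipsoid. -/
theorem second_differential_gives_ellipsoids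
    {X : Type*} [NormedAddCommGroup X] [NormedSpace ℝ X] [CompleteSpace X]
    (hren : IsHilbertRenorming X)
    (x : X) (hx : ‖x‖ = 1)
    (φ' : X → (X →L[ℝ] ℝ)) (φ'' : X →L[ℝ] X →L[ℝ] ℝ)
    (hφ' : ∀ᶠ z in nhds x, HasFDerivAt (fun w : X => ‖w‖ ^ 2 / 2) (φ' z) z)
    (hφ'' : HasFDerivAt φ' φ'' x) :
    InnerEllipsoidAt x ∧
      ((∃ c > (0 : ℝ), ∀ h : X, c * ‖h‖ ^ 2 ≤ φ'' h h) → OuterEllipsoidAt x) := by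
  classical
  obtain ⟨n₀, hn₀, a, ha, b, hb, hab⟩ := hren
  obtain ⟨hn₀pos, hn₀eq, hn₀sm, hn₀tri, hn₀par⟩ := hn₀
  have hn₀0 : n₀ 0 = 0 := (hn₀eq 0).2 rfl
  set φf : X → ℝ := fun w : X => ‖w‖ ^ 2 / 2 with hφf
  have hx0 : HasFDerivAt φf (φ' x) x := hφ'.self_of_nhds
  have hsymm : ∀ u v : X, φ'' u v = φ'' v u := fun u v =>
    second_derivative_symmetric_of_eventually hφ' hφ'' u v
  set f : X →L[ℝ] ℝ := φ' x with hfdef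
  -- scaling of the derivative of φf
  have hscale : ∀ c : ℝ, c ≠ 0 → ∀ (y : X) (L : X →L[ℝ] ℝ), HasFDerivAt φf L y →
      HasFDerivAt φf (c • L) (c • y) := by
    intro c hc y L hL
    have hlin : HasFDerivAt (fun w : X => c⁻¹ • w)
        (c⁻¹ • ContinuousLinearMap.id ℝ X) (c • y) := by
      exact (c⁻¹ • ContinuousLinearMap.id ℝ X).hasFDerivAt
    have hinv : c⁻¹ • (c • y) = y := by rw [smul_smul, inv_mul_cancel₀ hc, one_smul]
    have hLy : HasFDerivAt φf L ((fun w : X => c⁻¹ • w) (c • y)) := by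
      simpa [hinv] using hL
    have hcomp := hLy.comp (c • y) hlin
    have hmul := hcomp.const_mul (c ^ 2)
    have hfun : (fun w : X => c ^ 2 * (φf ∘ fun w : X => c⁻¹ • w) w) = φf := by
      funext w
      simp only [Function.comp, hφf, norm_smul, Real.norm_eq_abs, mul_pow, sq_abs]
      field_simp
    have hCLM : (c ^ 2) • (L.comp (c⁻¹ • ContinuousLinearMap.id ℝ X)) = c • L := by
      ext w
      simp only [ContinuousLinearMap.smul_apply, ContinuousLinearMap.coe_comp',
        Function.comp_apply, ContinuousLinearMap.coe_smul', Pi.smul_apply,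
        ContinuousLinearMap.coe_id', id_eq, map_smul, smul_eq_mul]
      field_simp
    rw [← hfun, ← hCLM]
    exact hmul
  -- f x = 1
  have hfx : f x = 1 := by
    have hline : HasDerivAt (fun t : ℝ => t • x) x 1 := by
      simpa using (hasDerivAt_id (1 : ℝ)).smul_const x
    have hx1 : HasFDerivAt φf f ((fun t : ℝ => t • x) 1) := by
      simpa [one_smul] using hx0
    have hc1 : HasDerivAt (fun t : ℝ => φf (t • x)) (f x) 1 := by
      exact hx1.comp_hasDerivAt 1 hline
    have hc2 : HasDerivAt (fun t : ℝ => φf (t • x)) 1 1 := by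
      have hfun : (fun t : ℝ => φf (t • x)) = fun t : ℝ => t ^ 2 / 2 := by
        funext t
        simp [hφf, norm_smul, hx, Real.norm_eq_abs, mul_pow, sq_abs]
      rw [hfun]
      have := (hasDerivAt_pow 2 (1 : ℝ)).div_const 2
      simpa using this
    exact hc1.unique hc2
  -- φ'' x = f
  obtain ⟨δ₀, hδ₀, hball₀⟩ := Metric.eventually_nhds_iff_ball.1 hφ'
  have hom : ∀ s : ℝ, |s| < min δ₀ 1 → φ' ((1 + s) • x) = (1 + s) • f := by
    intro s hs
    have hs1 : (1 : ℝ) + s ≠ 0 := by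
      have h1 : |s| < 1 := lt_of_lt_of_le hs (min_le_right _ _)
      rw [abs_lt] at h1
      intro hcon
      linarith [h1.1, h1.2]
    have hmem : (1 + s) • x ∈ Metric.ball x δ₀ := by
      have e : (1 + s) • x - x = s • x := by rw [add_smul, one_smul]; abel
      rw [Metric.mem_ball, dist_eq_norm, e, norm_smul, hx, Real.norm_eq_abs, mul_one]
      exact lt_of_lt_of_le hs (min_le_left _ _)
    exact (hball₀ _ hmem).unique (hscale (1 + s) hs1 x f hx0)
  have hφ''x : φ'' x = f := by
    have hline0 : HasDerivAt (fun s : ℝ => x + s • x) x 0 := by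
      simpa using ((hasDerivAt_id (0 : ℝ)).smul_const x).const_add x
    have hF : HasDerivAt (fun s : ℝ => φ' (x + s • x)) (φ'' x) 0 := by
      have h0 : HasFDerivAt φ' φ'' ((fun s : ℝ => x + s • x) 0) := by
        simpa using hφ''
      exact h0.comp_hasDerivAt 0 hline0
    have hG : HasDerivAt (fun s : ℝ => (1 + s) • f) f 0 := by
      have h1 : HasDerivAt (fun s : ℝ => 1 + s) 1 0 := by
        simpa using (hasDerivAt_id (0 : ℝ)).const_add 1
      simpa using h1.smul_const f
    have heq : (fun s : ℝ => φ' (x + s • x)) =ᶠ[nhds (0 : ℝ)] fun s : ℝ => (1 + s) • f := by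
      have hev : ∀ᶠ s : ℝ in nhds 0, |s| < min δ₀ 1 := by
        have := Metric.ball_mem_nhds (0 : ℝ) (lt_min hδ₀ one_pos)
        filter_upwards [this] with s hs
        simpa [Real.dist_eq] using hs
      filter_upwards [hev] with s hs
      have e : x + s • x = (1 + s) • x := by rw [add_smul, one_smul]
      rw [e, hom s hs]
    have hF' : HasDerivAt (fun s : ℝ => φ' (x + s • x)) f 0 := hG.congr_of_eventuallyEq heq
    exact hF.unique hF'
  -- the projection P
  obtain ⟨P, hPdef2⟩ : ∃ P : X →L[ℝ] X, P = ContinuousLinearMap.id ℝ X - f.smulRight x :=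
    ⟨_, rfl⟩
  have hPz : ∀ z : X, P z = z - f z • x := by
    intro z
    simp [hPdef2, ContinuousLinearMap.sub_apply, ContinuousLinearMap.smulRight_apply]
  have hfP : ∀ z : X, f (P z) = 0 := by
    intro z
    rw [hPz, map_sub, map_smul]
    simp [hfx]
  have hPx : P x = 0 := by rw [hPz, hfx, one_smul, sub_self]
  have hzdecomp : ∀ z : X, f z • x + P z = z := by
    intro z; rw [hPz]; abel
  -- Taylor expansion
  have htaylor : ∀ ε : ℝ, 0 < ε → ∃ δ > (0 : ℝ), ∀ h : X, ‖h‖ ≤ δ →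
      |φf (x + h) - φf x - f h - φ'' h h / 2| ≤ ε * ‖h‖ ^ 2 := fun ε hε =>
    taylor2 hφ' hφ'' hε
  have hφfx : φf x = 1 / 2 := by simp [hφf, hx]
  have hpar : ∀ u v : X, ‖u + v‖ ^ 2 ≤ 2 * ‖u‖ ^ 2 + 2 * ‖v‖ ^ 2 := by
    intro u v
    nlinarith [norm_add_le u v, norm_nonneg u, norm_nonneg v, sq_nonneg (‖u‖ - ‖v‖),
      norm_nonneg (u + v)]
  -- positivity of the second differential
  have hQpos : ∀ h : X, 0 ≤ φ'' h h := by
    intro h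
    by_contra hneg
    push_neg at hneg
    have hh0 : h ≠ 0 := by
      rintro rfl
      simp at hneg
    have hnorm : 0 < ‖h‖ := norm_pos_iff.2 hh0
    have hε : 0 < -(φ'' h h) / (4 * ‖h‖ ^ 2) := by
      apply div_pos (by linarith) (by positivity)
    obtain ⟨δ, hδ, htb⟩ := htaylor _ hε
    obtain ⟨ε, hεdef⟩ : ∃ ε : ℝ, ε = -(φ'' h h) / (4 * ‖h‖ ^ 2) := ⟨_, rfl⟩
    rw [← hεdef] at htb
    have hεe : ε * ‖h‖ ^ 2 = -(φ'' h h) / 4 := by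
      rw [hεdef]; field_simp
    obtain ⟨t, htdef⟩ : ∃ t : ℝ, t = δ / ‖h‖ := ⟨_, rfl⟩
    have ht : 0 < t := by rw [htdef]; positivity
    have hth : ‖t • h‖ ≤ δ := by
      rw [norm_smul, Real.norm_eq_abs, abs_of_pos ht, htdef]
      rw [div_mul_cancel₀ _ (ne_of_gt hnorm)]
    have h1 := htb (t • h) hth
    have h2 := htb (-(t • h)) (by rwa [norm_neg])
    have hQt : φ'' (t • h) (t • h) = t ^ 2 * φ'' h h := by
      simp only [map_smul, ContinuousLinearMap.smul_apply, smul_eq_mul]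
      ring
    have hQt' : φ'' (-(t • h)) (-(t • h)) = t ^ 2 * φ'' h h := by
      simp only [map_neg, ContinuousLinearMap.neg_apply, neg_neg]
      exact hQt
    have hft : f (t • h) = t * f h := by rw [map_smul]; rfl
    have hft' : f (-(t • h)) = -(t * f h) := by rw [map_neg, hft]
    have hnth : ‖t • h‖ = t * ‖h‖ := by
      rw [norm_smul, Real.norm_eq_abs, abs_of_pos ht]
    have hnth' : ‖-(t • h)‖ = t * ‖h‖ := by rw [norm_neg, hnth]
    rw [hQt, hft, hnth, hφfx] at h1
    rw [hQt', hft', hnth', hφfx] at h2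
    have hsub : x + -(t • h) = x - t • h := by abel
    rw [hsub] at h2
    -- midpoint convexity
    have hmid : 4 ≤ 2 * ‖x + t • h‖ ^ 2 + 2 * ‖x - t • h‖ ^ 2 := by
      have he : (x + t • h) + (x - t • h) = x + x := by abel
      have := hpar (x + t • h) (x - t • h)
      rw [he] at this
      have hxx : ‖x + x‖ = 2 := by
        have : x + x = (2 : ℝ) • x := by rw [two_smul]
        rw [this, norm_smul, hx, Real.norm_eq_abs, mul_one]
        norm_num
      rw [hxx] at this
      nlinarith
    have e1 : φf (x + t • h) = ‖x + t • h‖ ^ 2 / 2 := rfl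
    have e2 : φf (x - t • h) = ‖x - t • h‖ ^ 2 / 2 := rfl
    have ha1 := (abs_le.1 h1).2
    have ha2 := (abs_le.1 h2).2
    have htsq : 0 < t ^ 2 := by positivity
    -- derive contradiction
    have hεq : ε * (t * ‖h‖) ^ 2 = t ^ 2 * (-(φ'' h h) / 4) := by
      rw [← hεe]; ring
    rw [hεq] at ha1 ha2
    rw [e1] at ha1
    rw [e2] at ha2
    nlinarith [hmid, ha1, ha2, htsq, mul_pos htsq (neg_pos.2 hneg)]
  -- convexity of φf
  have hconv : ∀ (p q : X) (l : ℝ), 0 ≤ l → l ≤ 1 →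
      φf ((1 - l) • p + l • q) ≤ (1 - l) * φf p + l * φf q :=
    fun p q l h0 h1 => normConvexHalfSq p q l h0 h1
  -- bound on Q
  have hQb : ∀ w : X, φ'' w w ≤ ‖φ''‖ * ‖w‖ ^ 2 := by
    intro w
    calc φ'' w w ≤ |φ'' w w| := le_abs_self _
      _ = ‖φ'' w w‖ := (Real.norm_eq_abs _).symm
      _ ≤ ‖φ'' w‖ * ‖w‖ := (φ'' w).le_opNorm w
      _ ≤ ‖φ''‖ * ‖w‖ * ‖w‖ :=
          mul_le_mul_of_nonneg_right (φ''.le_opNorm w) (norm_nonneg w)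
      _ = ‖φ''‖ * ‖w‖ ^ 2 := by ring
  have hn₀sq : ∀ w : X, a ^ 2 * ‖w‖ ^ 2 ≤ (n₀ w) ^ 2 := by
    intro w
    have h1 := (hab w).1
    nlinarith [norm_nonneg w, ha, mul_nonneg ha.le (norm_nonneg w)]
  have hφfval : ∀ u : X, φf u = ‖u‖ ^ 2 / 2 := fun u => rfl
  clear hφ'' hx0 hscale hom hball₀ hφ' hφ''x hδ₀
  clear_value φf f
  constructor
  · -- INNER ELLIPSOID
    obtain ⟨δ, hδ, htb⟩ := htaylor 1 one_pos
    obtain ⟨K, hKdef⟩ : ∃ K : ℝ, K = (2 + (1 + 1 / δ) ^ 2) / a ^ 2 := ⟨_, rfl⟩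
    have hKa : K * a ^ 2 = 2 + (1 + 1 / δ) ^ 2 := by
      rw [hKdef]; exact div_mul_cancel₀ _ (pow_ne_zero 2 (ne_of_gt ha))
    have hK2 : 2 ≤ K * a ^ 2 := by rw [hKa]; nlinarith [sq_nonneg (1 + 1 / δ)]
    have hK1 : 1 ≤ K * a ^ 2 := by linarith
    have hKδ : (1 + 1 / δ) ^ 2 ≤ K * a ^ 2 := by rw [hKa]; linarith
    have hKpos : 0 < K := by
      rw [hKdef]
      apply div_pos (by nlinarith [sq_nonneg (1 + 1 / δ)]) (by positivity)
    -- the core inequality on the hyperplane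
    have core : ∀ w : X, f w = 0 → ‖x + w‖ ^ 2 ≤ 1 + φ'' w w + K * (n₀ w) ^ 2 := by
      intro w hw
      rcases le_or_gt ‖w‖ δ with hcase | hcase
      · have h1 := (abs_le.1 (htb w hcase)).2
        rw [hφfx, hw] at h1
        have h3 : φf (x + w) = ‖x + w‖ ^ 2 / 2 := hφfval _
        rw [h3] at h1
        have h4 : 2 * ‖w‖ ^ 2 ≤ K * (n₀ w) ^ 2 := by
          nlinarith [mul_le_mul_of_nonneg_left (hn₀sq w) hKpos.le,
            mul_le_mul_of_nonneg_right hK2 (sq_nonneg ‖w‖)]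
        nlinarith
      · have h1 : ‖x + w‖ ≤ (1 + 1 / δ) * ‖w‖ := by
          have h0 : (1 : ℝ) ≤ (1 / δ) * ‖w‖ := by
            rw [one_div]
            rw [show δ⁻¹ * ‖w‖ = ‖w‖ / δ from by ring]
            rw [le_div_iff₀ hδ, one_mul]
            exact hcase.le
          calc ‖x + w‖ ≤ ‖x‖ + ‖w‖ := norm_add_le _ _
            _ = 1 + ‖w‖ := by rw [hx]
            _ ≤ (1 / δ) * ‖w‖ + ‖w‖ := by linarith
            _ = (1 + 1 / δ) * ‖w‖ := by ring
        have h2 : ‖x + w‖ ^ 2 ≤ (1 + 1 / δ) ^ 2 * ‖w‖ ^ 2 := by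
          nlinarith [norm_nonneg (x + w), norm_nonneg w, h1]
        have h3 : (1 + 1 / δ) ^ 2 * ‖w‖ ^ 2 ≤ K * (n₀ w) ^ 2 := by
          nlinarith [mul_le_mul_of_nonneg_left (hn₀sq w) hKpos.le,
            mul_le_mul_of_nonneg_right hKδ (sq_nonneg ‖w‖)]
        have := hQpos w
        linarith
    -- the global lower bound
    have hq_ge : ∀ z : X, ‖z‖ ^ 2 ≤ (f z) ^ 2 + 1 * φ'' (P z) (P z) + K * (n₀ (P z)) ^ 2 := by
      intro z
      by_cases hz : f z = 0
      · have hPzz : P z = z := by rw [hPz, hz, zero_smul, sub_zero]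
        rw [hPzz, hz]
        nlinarith [hQpos z, mul_le_mul_of_nonneg_left (hn₀sq z) hKpos.le,
          mul_le_mul_of_nonneg_right hK1 (sq_nonneg ‖z‖)]
      · obtain ⟨t, htdef⟩ : ∃ t : ℝ, t = f z := ⟨_, rfl⟩
        obtain ⟨w, hwdef⟩ : ∃ w : X, w = t⁻¹ • P z := ⟨_, rfl⟩
        rw [← htdef] at hz
        have hfw : f w = 0 := by
          rw [hwdef, map_smul, hfP z, smul_zero]
        have hxw : x + w = t⁻¹ • z := by
          rw [hwdef, hPz, ← htdef, smul_sub, smul_smul, inv_mul_cancel₀ hz, one_smul]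
          abel
        have hcore := core w hfw
        have hxwnorm : ‖x + w‖ ^ 2 = t⁻¹ ^ 2 * ‖z‖ ^ 2 := by
          rw [hxw, norm_smul, Real.norm_eq_abs, mul_pow, sq_abs]
        have hPzw : P z = t • w := by
          rw [hwdef, smul_smul, mul_inv_cancel₀ hz, one_smul]
        have hBw : φ'' (P z) (P z) = t ^ 2 * φ'' w w := by
          rw [hPzw]
          simp only [map_smul, ContinuousLinearMap.smul_apply, smul_eq_mul]
          ring
        have hn₀w : (n₀ (P z)) ^ 2 = t ^ 2 * (n₀ w) ^ 2 := by
          rw [hPzw, hn₀sm, mul_pow, sq_abs]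
        rw [hBw, hn₀w]
        have ht2 : (0 : ℝ) < t ^ 2 := by positivity
        have hz2 : ‖z‖ ^ 2 = t ^ 2 * ‖x + w‖ ^ 2 := by
          rw [hxwnorm]
          field_simp
        rw [hz2]
        calc t ^ 2 * ‖x + w‖ ^ 2 ≤ t ^ 2 * (1 + φ'' w w + K * (n₀ w) ^ 2) :=
              mul_le_mul_of_nonneg_left hcore ht2.le
          _ = t ^ 2 + 1 * (t ^ 2 * φ'' w w) + K * (t ^ 2 * (n₀ w) ^ 2) := by ring
          _ = (f z) ^ 2 + 1 * (t ^ 2 * φ'' w w) + K * (t ^ 2 * (n₀ w) ^ 2) := by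
              rw [← htdef]
    -- upper bound
    have hM0 : (0 : ℝ) ≤ ‖f‖ ^ 2 + ‖φ''‖ * ‖P‖ ^ 2 + K * (b * ‖P‖) ^ 2 := by
      have h1 := sq_nonneg ‖f‖
      have h2 : (0:ℝ) ≤ ‖φ''‖ * ‖P‖ ^ 2 :=
        mul_nonneg (ContinuousLinearMap.opNorm_nonneg φ'') (sq_nonneg _)
      have h3 : (0:ℝ) ≤ K * (b * ‖P‖) ^ 2 := mul_nonneg hKpos.le (sq_nonneg _)
      linarith
    have hqub : ∀ z : X, (f z) ^ 2 + 1 * φ'' (P z) (P z) + K * (n₀ (P z)) ^ 2 ≤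
        (‖f‖ ^ 2 + ‖φ''‖ * ‖P‖ ^ 2 + K * (b * ‖P‖) ^ 2) * ‖z‖ ^ 2 := by
      intro z
      have h0 : |f z| ≤ ‖f‖ * ‖z‖ := by
        rw [← Real.norm_eq_abs]; exact f.le_opNorm z
      have h1 : (f z) ^ 2 ≤ ‖f‖ ^ 2 * ‖z‖ ^ 2 := by
        have hsq := pow_le_pow_left₀ (abs_nonneg (f z)) h0 2
        calc (f z) ^ 2 = |f z| ^ 2 := (sq_abs _).symm
          _ ≤ (‖f‖ * ‖z‖) ^ 2 := hsq
          _ = ‖f‖ ^ 2 * ‖z‖ ^ 2 := by ring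
      have hPn : ‖P z‖ ≤ ‖P‖ * ‖z‖ := P.le_opNorm z
      have h2 : φ'' (P z) (P z) ≤ ‖φ''‖ * (‖P‖ ^ 2 * ‖z‖ ^ 2) := by
        have ha1 := hQb (P z)
        have ha2 : ‖P z‖ ^ 2 ≤ ‖P‖ ^ 2 * ‖z‖ ^ 2 := by
          have hsq := pow_le_pow_left₀ (norm_nonneg (P z)) hPn 2
          calc ‖P z‖ ^ 2 ≤ (‖P‖ * ‖z‖) ^ 2 := hsq
            _ = ‖P‖ ^ 2 * ‖z‖ ^ 2 := by ring
        have ha3 := mul_le_mul_of_nonneg_left ha2 (ContinuousLinearMap.opNorm_nonneg φ'')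
        linarith
      have h3 : (n₀ (P z)) ^ 2 ≤ (b * ‖P‖) ^ 2 * ‖z‖ ^ 2 := by
        have hup := (hab (P z)).2
        have hb2 : n₀ (P z) ≤ b * (‖P‖ * ‖z‖) := by
          have := mul_le_mul_of_nonneg_left hPn hb.le
          linarith
        have hsq := pow_le_pow_left₀ (hn₀pos (P z)) hb2 2
        calc (n₀ (P z)) ^ 2 ≤ (b * (‖P‖ * ‖z‖)) ^ 2 := hsq
          _ = (b * ‖P‖) ^ 2 * ‖z‖ ^ 2 := by ring
      nlinarith [h1, h2, mul_le_mul_of_nonneg_left h3 hKpos.le]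
    refine ⟨fun z => Real.sqrt ((f z) ^ 2 + 1 * φ'' (P z) (P z) + K * (n₀ (P z)) ^ 2),
      buildNorm f φ'' P n₀ hsymm hQpos hn₀pos hn₀tri hn₀sm hn₀par 1 K zero_le_one hKpos.le
        1 one_pos (fun z => by rw [one_mul]; exact hq_ge z),
      ⟨Real.sqrt (‖f‖ ^ 2 + ‖φ''‖ * ‖P‖ ^ 2 + K * (b * ‖P‖) ^ 2) + 1,
        by positivity, fun z => ?_⟩, fun z => ?_, ?_⟩
    · have h1 := Real.sqrt_le_sqrt (hqub z)
      have h2 : Real.sqrt ((‖f‖ ^ 2 + ‖φ''‖ * ‖P‖ ^ 2 + K * (b * ‖P‖) ^ 2) * ‖z‖ ^ 2)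
          = Real.sqrt (‖f‖ ^ 2 + ‖φ''‖ * ‖P‖ ^ 2 + K * (b * ‖P‖) ^ 2) * ‖z‖ := by
        rw [Real.sqrt_mul hM0, Real.sqrt_sq (norm_nonneg z)]
      rw [h2] at h1
      have hsq := Real.sqrt_nonneg (‖f‖ ^ 2 + ‖φ''‖ * ‖P‖ ^ 2 + K * (b * ‖P‖) ^ 2)
      nlinarith [h1, hsq, norm_nonneg z]
    · have h1 := Real.sqrt_le_sqrt (hq_ge z)
      rwa [Real.sqrt_sq (norm_nonneg z)] at h1
    · show Real.sqrt ((f x) ^ 2 + 1 * φ'' (P x) (P x) + K * (n₀ (P x)) ^ 2) = 1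
      rw [hPx, hfx]
      simp only [map_zero, ContinuousLinearMap.zero_apply, hn₀0]
      norm_num
  · -- OUTER ELLIPSOID
    rintro ⟨c, hc, hcQ⟩
    obtain ⟨δ, hδ, htb⟩ := htaylor (c / 4) (by positivity)
    have key : ∀ w : X, f w = 0 → ‖w‖ ≤ δ → 1 + c / 2 * ‖w‖ ^ 2 ≤ ‖x + w‖ ^ 2 := by
      intro w hw hwδ
      have h1 := (abs_le.1 (htb w hwδ)).1
      rw [hφfx, hw] at h1
      have h2 := hcQ w
      have h3 : φf (x + w) = ‖x + w‖ ^ 2 / 2 := hφfval _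
      rw [h3] at h1
      nlinarith
    obtain ⟨c₁, hc₁def⟩ : ∃ c₁ : ℝ, c₁ = min (c / 2) (min (1 / 4) (c * δ / 8)) := ⟨_, rfl⟩
    have hc₁ : 0 < c₁ := by
      rw [hc₁def]
      exact lt_min (by positivity) (lt_min (by norm_num) (by positivity))
    have core2 : ∀ w : X, f w = 0 → 1 + c₁ * ‖w‖ ^ 2 ≤ ‖x + w‖ ^ 2 := by
      intro w hw
      rcases le_or_gt ‖w‖ δ with hcs | hcs
      · have h1 := key w hw hcs
        have h2 : c₁ ≤ c / 2 := by rw [hc₁def]; exact min_le_left _ _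
        nlinarith [sq_nonneg ‖w‖]
      rcases le_or_gt ‖w‖ 4 with h4 | h4
      · -- middle range, use convexity
        have hwpos : 0 < ‖w‖ := lt_trans hδ hcs
        obtain ⟨l, hldef⟩ : ∃ l : ℝ, l = δ / ‖w‖ := ⟨_, rfl⟩
        have hl0 : 0 < l := by rw [hldef]; positivity
        have hl1 : l < 1 := by rw [hldef, div_lt_one hwpos]; exact hcs
        have hw' : f (l • w) = 0 := by rw [map_smul, hw, smul_zero]
        have hwn : ‖l • w‖ = δ := by
          rw [norm_smul, Real.norm_eq_abs, abs_of_pos hl0, hldef,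
            div_mul_cancel₀ _ (ne_of_gt hwpos)]
        have hkey := key (l • w) hw' (le_of_eq hwn)
        rw [hwn] at hkey
        have hcomb : (1 - l) • x + l • (x + w) = x + l • w := by
          rw [smul_add, sub_smul, one_smul]; abel
        have hcv := hconv x (x + w) l hl0.le hl1.le
        rw [hcomb, hφfx] at hcv
        have e1 : φf (x + l • w) = ‖x + l • w‖ ^ 2 / 2 := hφfval _
        have e2 : φf (x + w) = ‖x + w‖ ^ 2 / 2 := hφfval _
        rw [e1, e2] at hcv
        have hlw : l * ‖w‖ = δ := by
          rw [hldef, div_mul_cancel₀ _ (ne_of_gt hwpos)]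
        have hc₁le : c₁ ≤ c * δ / 8 := by
          rw [hc₁def]; exact le_trans (min_le_right _ _) (min_le_right _ _)
        -- from hkey and hcv : l * ‖x+w‖^2 ≥ l + (c/2) δ² with δ = l‖w‖
        have s1 : l + c / 2 * δ * (l * ‖w‖) ≤ l * ‖x + w‖ ^ 2 := by
          nlinarith [hkey, hcv, hlw]
        have s2 : 1 + c / 2 * δ * ‖w‖ ≤ ‖x + w‖ ^ 2 := by
          have h5 : l * (1 + c / 2 * δ * ‖w‖) ≤ l * ‖x + w‖ ^ 2 := by
            nlinarith [s1]
          exact le_of_mul_le_mul_left (by linarith [h5]) hl0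
        nlinarith [mul_le_mul_of_nonneg_right hc₁le (sq_nonneg ‖w‖),
          mul_nonneg (mul_nonneg hc.le hδ.le)
            (mul_nonneg (norm_nonneg w) (by linarith : (0:ℝ) ≤ 4 - ‖w‖))]
      · -- far range
        have h5 : ‖w‖ - 1 ≤ ‖x + w‖ := by
          have he : ‖w‖ = ‖(x + w) - x‖ := by rw [add_sub_cancel_left]
          have := norm_sub_le (x + w) x
          rw [← he] at this
          rw [hx] at this
          linarith
        have h6 : (‖w‖ - 1) ^ 2 ≤ ‖x + w‖ ^ 2 := by
          nlinarith [norm_nonneg (x + w)]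
        have hc₁4 : c₁ ≤ 1 / 4 := by
          rw [hc₁def]; exact le_trans (min_le_right _ _) (min_le_left _ _)
        nlinarith [mul_le_mul_of_nonneg_right hc₁4 (sq_nonneg ‖w‖)]
    obtain ⟨M', hM'def⟩ : ∃ M' : ℝ, M' = ‖φ''‖ + 1 := ⟨_, rfl⟩
    have hM' : 0 < M' := by rw [hM'def]; positivity
    have hQb' : ∀ w : X, φ'' w w ≤ M' * ‖w‖ ^ 2 := by
      intro w
      have := hQb w
      rw [hM'def]
      nlinarith [sq_nonneg ‖w‖]
    obtain ⟨c₂, hc₂def⟩ : ∃ c₂ : ℝ, c₂ = min (1 / M') (c₁ / M') := ⟨_, rfl⟩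
    have hc₂ : 0 < c₂ := by
      rw [hc₂def]; exact lt_min (by positivity) (by positivity)
    have hc₂M1 : c₂ * M' ≤ 1 := by
      have h1 : c₂ ≤ 1 / M' := by rw [hc₂def]; exact min_le_left _ _
      rw [le_div_iff₀ hM'] at h1
      linarith
    have hc₂Mc₁ : c₂ * M' ≤ c₁ := by
      have h1 : c₂ ≤ c₁ / M' := by rw [hc₂def]; exact min_le_right _ _
      rw [le_div_iff₀ hM'] at h1
      linarith
    -- the global upper bound
    have hq_le : ∀ z : X,
        (f z) ^ 2 + c₂ * φ'' (P z) (P z) + 0 * (n₀ (P z)) ^ 2 ≤ ‖z‖ ^ 2 := by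
      intro z
      by_cases hz : f z = 0
      · have hPzz : P z = z := by rw [hPz, hz, zero_smul, sub_zero]
        rw [hPzz, hz]
        nlinarith [mul_le_mul_of_nonneg_left (hQb' z) hc₂.le,
          mul_le_mul_of_nonneg_right hc₂M1 (sq_nonneg ‖z‖)]
      · obtain ⟨t, htdef⟩ : ∃ t : ℝ, t = f z := ⟨_, rfl⟩
        obtain ⟨w, hwdef⟩ : ∃ w : X, w = t⁻¹ • P z := ⟨_, rfl⟩
        rw [← htdef] at hz
        have hfw : f w = 0 := by rw [hwdef, map_smul, hfP z, smul_zero]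
        have hxw : x + w = t⁻¹ • z := by
          rw [hwdef, hPz, ← htdef, smul_sub, smul_smul, inv_mul_cancel₀ hz, one_smul]
          abel
        have hxwnorm : ‖x + w‖ ^ 2 = t⁻¹ ^ 2 * ‖z‖ ^ 2 := by
          rw [hxw, norm_smul, Real.norm_eq_abs, mul_pow, sq_abs]
        have hPzw : P z = t • w := by
          rw [hwdef, smul_smul, mul_inv_cancel₀ hz, one_smul]
        have hBw : φ'' (P z) (P z) = t ^ 2 * φ'' w w := by
          rw [hPzw]
          simp only [map_smul, ContinuousLinearMap.smul_apply, smul_eq_mul]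
          ring
        have hwcore : 1 + c₂ * φ'' w w ≤ ‖x + w‖ ^ 2 := by
          have h1 := core2 w hfw
          have h2 : c₂ * φ'' w w ≤ c₁ * ‖w‖ ^ 2 := by
            nlinarith [mul_le_mul_of_nonneg_left (hQb' w) hc₂.le,
              mul_le_mul_of_nonneg_right hc₂Mc₁ (sq_nonneg ‖w‖)]
          linarith
        have ht2 : (0 : ℝ) < t ^ 2 := by positivity
        have hz2 : ‖z‖ ^ 2 = t ^ 2 * ‖x + w‖ ^ 2 := by
          rw [hxwnorm]; field_simp
        rw [hBw, hz2]
        calc (f z) ^ 2 + c₂ * (t ^ 2 * φ'' w w) + 0 * (n₀ (P z)) ^ 2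
            = t ^ 2 * (1 + c₂ * φ'' w w) := by rw [← htdef]; ring
          _ ≤ t ^ 2 * ‖x + w‖ ^ 2 := mul_le_mul_of_nonneg_left hwcore ht2.le
    -- the global lower bound
    have hq_low : ∀ z : X, min 1 (c₂ * c) / 2 * ‖z‖ ^ 2 ≤
        (f z) ^ 2 + c₂ * φ'' (P z) (P z) + 0 * (n₀ (P z)) ^ 2 := by
      intro z
      have h1 : c * ‖P z‖ ^ 2 ≤ φ'' (P z) (P z) := hcQ (P z)
      have h2 : ‖z‖ ≤ |f z| + ‖P z‖ := by
        calc ‖z‖ = ‖f z • x + P z‖ := by rw [hzdecomp z]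
          _ ≤ ‖f z • x‖ + ‖P z‖ := norm_add_le _ _
          _ = |f z| + ‖P z‖ := by rw [norm_smul, Real.norm_eq_abs, hx, mul_one]
      have h3 : ‖z‖ ^ 2 ≤ 2 * (f z) ^ 2 + 2 * ‖P z‖ ^ 2 := by
        nlinarith [abs_nonneg (f z), norm_nonneg (P z), norm_nonneg z, sq_abs (f z),
          sq_nonneg (|f z| - ‖P z‖)]
      have hm1 : min 1 (c₂ * c) ≤ 1 := min_le_left _ _
      have hm2 : min 1 (c₂ * c) ≤ c₂ * c := min_le_right _ _
      have hm0 : 0 < min 1 (c₂ * c) := lt_min one_pos (mul_pos hc₂ hc)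
      nlinarith [mul_le_mul_of_nonneg_left h1 hc₂.le, sq_nonneg (f z), sq_nonneg ‖P z‖,
        mul_le_mul_of_nonneg_right hm1 (sq_nonneg (f z)),
        mul_le_mul_of_nonneg_right hm2 (sq_nonneg ‖P z‖),
        mul_le_mul_of_nonneg_left h3 hm0.le]
    have hm0 : 0 < min 1 (c₂ * c) := lt_min one_pos (mul_pos hc₂ hc)
    have hmhalf : 0 < min 1 (c₂ * c) / 2 := by positivity
    refine ⟨fun z => Real.sqrt ((f z) ^ 2 + c₂ * φ'' (P z) (P z) + 0 * (n₀ (P z)) ^ 2),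
      buildNorm f φ'' P n₀ hsymm hQpos hn₀pos hn₀tri hn₀sm hn₀par c₂ 0 hc₂.le le_rfl
        (min 1 (c₂ * c) / 2) hmhalf hq_low,
      ⟨Real.sqrt (min 1 (c₂ * c) / 2), Real.sqrt_pos.2 hmhalf, fun z => ?_⟩,
      fun z => ?_, ?_⟩
    · have h1 : Real.sqrt (min 1 (c₂ * c) / 2 * ‖z‖ ^ 2) ≤
          Real.sqrt ((f z) ^ 2 + c₂ * φ'' (P z) (P z) + 0 * (n₀ (P z)) ^ 2) :=
        Real.sqrt_le_sqrt (hq_low z)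
      rwa [Real.sqrt_mul hmhalf.le, Real.sqrt_sq (norm_nonneg z)] at h1
    · have h1 := Real.sqrt_le_sqrt (hq_le z)
      rwa [Real.sqrt_sq (norm_nonneg z)] at h1
    · show Real.sqrt ((f x) ^ 2 + c₂ * φ'' (P x) (P x) + 0 * (n₀ (P x)) ^ 2) = 1
      rw [hPx, hfx]
      simp only [map_zero, ContinuousLinearMap.zero_apply, hn₀0]
      norm_num
end
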